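/- arXiv:2205.15682 — 10 statements merged into one kernel-verified Lean document; each statement's English description precedes it below -/
import Mathlib

section
/- Let H be a subfield of ℂ, let g be a monic polynomial of degree k that is irreducible over H, let d be a positive integer, and set q = g^d, a monic polynomial of degree n = dk. Then the companion matrix C_q ∈ H^{n×n} is similar over H to the companion-Jordan block C(g,d): there exists an invertible matrix T ∈ H^{n×n} with T^{-1} C_q T = C(g,d). -/
open Polynomial Matrix Kronecker

noncomputable section

/-- Companion matrix of a monic polynomial of degree `k`: ones on the superdiagonal,
last row the negatives of the coefficients. -/
def companion (k : ℕ) (g : Polynomial ℂ) : Matrix (Fin k) (Fin k) ℂ :=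
  fun i j => if (i : ℕ) + 1 = (j : ℕ) then 1
    else if (i : ℕ) = k - 1 then -g.coeff (j : ℕ) else 0

/-- The `d × d` nilpotent matrix with ones on the superdiagonal. -/
def superdiag (d : ℕ) : Matrix (Fin d) (Fin d) ℂ :=
  fun i j => if (i : ℕ) + 1 = (j : ℕ) then 1 else 0

/-- The companion-Jordan block `C(g,d) = I_d ⊗ C_g + N_d ⊗ I_k`. -/
def CJ (k : ℕ) (g : Polynomial ℂ) (d : ℕ) : Matrix (Fin d × Fin k) (Fin d × Fin k) ℂ :=
  (1 : Matrix (Fin d) (Fin d) ℂ) ⊗ₖ companion k g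
    + superdiag d ⊗ₖ (1 : Matrix (Fin k) (Fin k) ℂ)

section AuxRing

variable {K : Type*} [CommSemiring K] {R : Type*} [Ring R] [Algebra K R]

lemma commute_aeval_right {x y : R} (h : Commute x y) (p : K[X]) :
    Commute x (aeval y p) := by
  induction p using Polynomial.induction_on' with
  | add p q hp hq => simpa [map_add] using hp.add_right hq
  | monomial n a =>
    rw [aeval_monomial]
    exact (Algebra.commute_algebraMap_right a x).mul_right (h.pow_right n)

lemma add_pow_expand {x y : R} (h : Commute x y) (m : ℕ) :
    ∃ F, (x + y) ^ m = x ^ m + y * F := by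
  induction m with
  | zero => exact ⟨0, by simp⟩
  | succ m ih =>
    obtain ⟨F, hF⟩ := ih
    refine ⟨x ^ m + F * x + F * y, ?_⟩
    rw [pow_succ, hF, add_mul, mul_add, mul_add, (h.pow_left m).eq]
    noncomm_ring

lemma pow_expand2 {A B : R} (h : Commute A B) (m : ℕ) :
    ∃ E, (A + B) ^ m = A ^ m + B * (m • A ^ (m - 1)) + B * B * E
      ∧ Commute A E ∧ Commute B E := by
  induction m with
  | zero => exact ⟨0, by simp, Commute.zero_right _, Commute.zero_right _⟩
  | succ m ih =>
    obtain ⟨E, hE, hAE, hBE⟩ := ih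
    refine ⟨m • A ^ (m - 1) + E * A + E * B, ?_, ?_, ?_⟩
    · have hsm : (m • A ^ (m - 1)) * A = m • A ^ m := by
        cases m with
        | zero => simp
        | succ m => rw [smul_mul_assoc, Nat.add_sub_cancel, ← pow_succ]
      have hc1 : Commute (m • A ^ (m - 1)) B := (h.pow_left (m - 1)).smul_left m
      calc (A + B) ^ (m + 1) = (A ^ m + B * (m • A ^ (m - 1)) + B * B * E) * (A + B) := by
            rw [pow_succ, hE]
        _ = A ^ m * A + A ^ m * B + B * ((m • A ^ (m - 1)) * A) + B * ((m • A ^ (m - 1)) * B)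
            + B * B * (E * A) + B * B * (E * B) := by noncomm_ring
        _ = A ^ (m + 1) + B * A ^ m + B * (m • A ^ m) + B * B * (m • A ^ (m - 1))
            + B * B * (E * A) + B * B * (E * B) := by
            rw [← pow_succ, (h.pow_left m).eq, hsm, hc1.eq]
            noncomm_ring
        _ = A ^ (m + 1) + B * ((m + 1) • A ^ (m + 1 - 1)) + B * B
            * (m • A ^ (m - 1) + E * A + E * B) := by
            rw [Nat.add_sub_cancel, succ_nsmul, mul_add]
            noncomm_ring
    · exact ((((Commute.refl A).pow_right (m-1)).smul_right m).add_right
        (hAE.mul_right (Commute.refl A))).add_right (hAE.mul_right h)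
    · exact (((h.symm.pow_right (m-1)).smul_right m).add_right
        (hBE.mul_right h.symm)).add_right (hBE.mul_right (Commute.refl B))

lemma aeval_add_expand {A B : R} (h : Commute A B) (p : K[X]) :
    ∃ E, aeval (A + B) p = aeval A p + B * aeval A (derivative p) + B * B * E
      ∧ Commute A E ∧ Commute B E := by
  induction p using Polynomial.induction_on' with
  | add p q hp hq =>
    obtain ⟨E, hE, h1, h2⟩ := hp
    obtain ⟨F, hF, h3, h4⟩ := hq
    refine ⟨E + F, ?_, h1.add_right h3, h2.add_right h4⟩
    rw [map_add, map_add, hE, hF, map_add, map_add, mul_add, mul_add]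
    abel
  | monomial n a =>
    obtain ⟨E, hE, h1, h2⟩ := pow_expand2 h n
    refine ⟨algebraMap K R a * E, ?_, (Algebra.commute_algebraMap_right a A).mul_right h1,
      (Algebra.commute_algebraMap_right a B).mul_right h2⟩
    rw [aeval_monomial, aeval_monomial, derivative_monomial, aeval_monomial, hE]
    have hn' : algebraMap K R (a * (n:K)) * A ^ (n-1) = algebraMap K R a * (n • A ^ (n-1)) := by
      rw [_root_.map_mul, mul_assoc, map_natCast, nsmul_eq_mul]
    have hBa : B * (algebraMap K R a * (n • A ^ (n-1))) = algebraMap K R a * (B * (n • A ^ (n-1))) := by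
      rw [← mul_assoc, ← Algebra.commutes a B, mul_assoc]
    have hBBa : B * B * (algebraMap K R a * E) = algebraMap K R a * (B * B * E) := by
      rw [← mul_assoc, ← Algebra.commutes a (B*B), mul_assoc]
    rw [hn', hBa, hBBa, mul_add, mul_add]

end AuxRing

section Comp

variable {K : Type*} [Field K]

/-- generic companion matrix over a commutative ring -/
def compR (R : Type*) [CommRing R] (k : ℕ) (g : R[X]) : Matrix (Fin k) (Fin k) R :=
  fun i j => if (i : ℕ) + 1 = (j : ℕ) then 1
    else if (i : ℕ) = k - 1 then -g.coeff (j : ℕ) else 0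

/-- generic superdiagonal nilpotent matrix -/
def NR (R : Type*) [CommRing R] (d : ℕ) : Matrix (Fin d) (Fin d) R :=
  fun i j => if (i : ℕ) + 1 = (j : ℕ) then 1 else 0

lemma my_vecMul_sum {n' m' : Type*} [Fintype n'] {ι : Type*} (s : Finset ι) (v : n' → K)
    (f : ι → Matrix n' m' K) :
    v ᵥ* (∑ i ∈ s, f i) = ∑ i ∈ s, v ᵥ* (f i) := by
  ext j
  simp only [Matrix.vecMul, dotProduct, Finset.sum_apply, Matrix.sum_apply,
    Finset.mul_sum]
  exact Finset.sum_comm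

lemma my_vecMul_smulM {n' m' : Type*} [Fintype n'] (a : K) (v : n' → K) (M : Matrix n' m' K) :
    v ᵥ* (a • M) = a • (v ᵥ* M) := by
  ext j
  simp only [Matrix.vecMul, dotProduct, Pi.smul_apply, Matrix.smul_apply,
    smul_eq_mul, Finset.mul_sum]
  exact Finset.sum_congr rfl fun i _ => by ring

lemma e0_vecMul_compR_pow (k : ℕ) (hk : 0 < k) (g : K[X]) {m : ℕ} (hm : m < k) :
    Pi.single (⟨0, hk⟩ : Fin k) (1 : K) ᵥ* (compR K k g) ^ m = Pi.single ⟨m, hm⟩ 1 := by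
  induction m with
  | zero => rw [pow_zero, Matrix.vecMul_one]
  | succ m ih =>
    rw [pow_succ, ← Matrix.vecMul_vecMul, ih (lt_trans (Nat.lt_succ_self m) hm),
      Matrix.single_one_vecMul]
    funext l
    rcases eq_or_ne (l : ℕ) (m + 1) with hl | hl
    · have hle : l = ⟨m + 1, hm⟩ := Fin.ext hl
      rw [hle]
      simp [compR]
    · have h2 : l ≠ ⟨m + 1, hm⟩ := fun h => hl (by rw [h])
      have h3 : m ≠ k - 1 := by omega
      simp only [Matrix.row_apply, compR, Pi.single_apply]
      rw [if_neg (fun h => hl h.symm), if_neg h3, if_neg h2]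

lemma e0_vecMul_compR_pow_k (k : ℕ) (hk : 0 < k) (g : K[X]) :
    Pi.single (⟨0, hk⟩ : Fin k) (1 : K) ᵥ* (compR K k g) ^ k
      = fun l : Fin k => -g.coeff (l : ℕ) := by
  have hk1 : k - 1 < k := by omega
  have hksub : k - 1 + 1 = k := by omega
  have hsplit : (compR K k g) ^ k = (compR K k g) ^ (k - 1) * compR K k g := by
    rw [← pow_succ, hksub]
  rw [hsplit, ← Matrix.vecMul_vecMul, e0_vecMul_compR_pow k hk g hk1,
    Matrix.single_one_vecMul]
  funext l
  have h1 : ¬ ((k - 1 : ℕ) + 1 = (l : ℕ)) := by omega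
  simp [compR, h1]

lemma aeval_compR (k : ℕ) (hk : 0 < k) (g : K[X]) (hmon : g.Monic) (hdeg : g.natDegree = k) :
    aeval (compR K k g) g = 0 := by
  set C := compR K k g with hC
  have hcoeffk : g.coeff k = 1 := by rw [← hdeg]; exact hmon.coeff_natDegree
  have h0 : Pi.single (⟨0, hk⟩ : Fin k) (1 : K) ᵥ* aeval C g = 0 := by
    rw [aeval_eq_sum_range, hdeg, my_vecMul_sum]
    funext l
    rw [Finset.sum_apply, Finset.sum_range_succ]
    have h1 : ∀ m, m < k → (Pi.single (⟨0, hk⟩ : Fin k) (1:K) ᵥ* (g.coeff m • C ^ m)) l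
        = if (l : ℕ) = m then g.coeff m else 0 := by
      intro m hm
      rw [my_vecMul_smulM, e0_vecMul_compR_pow k hk g hm]
      simp [Pi.single_apply, Fin.ext_iff]
    have h2 : (Pi.single (⟨0, hk⟩ : Fin k) (1:K) ᵥ* (g.coeff k • C ^ k)) l = -g.coeff l := by
      rw [my_vecMul_smulM, e0_vecMul_compR_pow_k k hk g, hcoeffk]
      simp
    rw [Finset.sum_congr rfl (fun m hm => h1 m (Finset.mem_range.mp hm)), h2]
    simp [Finset.sum_ite_eq, l.isLt]
  have hcomm : ∀ m : ℕ, C ^ m * aeval C g = aeval C g * C ^ m := fun m =>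
    ((commute_aeval_right (Commute.refl C) g).pow_left m).eq
  ext i j
  have hrow : (Pi.single (i : Fin k) (1:K)) ᵥ* aeval C g = 0 := by
    have he := e0_vecMul_compR_pow k hk g i.isLt
    have hi : (⟨(i : ℕ), i.isLt⟩ : Fin k) = i := rfl
    rw [← hi, ← he, Matrix.vecMul_vecMul, hcomm, ← Matrix.vecMul_vecMul, h0,
      Matrix.zero_vecMul]
  rw [Matrix.single_one_vecMul] at hrow
  simpa using congrFun hrow j

end Comp

section NRsec

variable {K : Type*} [Field K]

lemma NR_pow_apply (d m : ℕ) (i j : Fin d) :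
    ((NR K d) ^ m) i j = if (i : ℕ) + m = (j : ℕ) then 1 else 0 := by
  induction m generalizing j with
  | zero =>
    rw [pow_zero]
    simp [Matrix.one_apply, Fin.ext_iff, eq_comm]
  | succ m ih =>
    rw [pow_succ, Matrix.mul_apply]
    rcases lt_or_ge ((i : ℕ) + m) d with hm | hm
    · rw [Finset.sum_eq_single (⟨(i : ℕ) + m, hm⟩ : Fin d)]
      · rw [ih]
        simp only [NR]
        simp [add_assoc]
      · intro b _ hb
        rw [ih, if_neg (fun h => hb (Fin.ext h.symm)), zero_mul]
      · intro h
        exact absurd (Finset.mem_univ _) h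
    · have h1 : ∀ b : Fin d, ((NR K d) ^ m) i b = 0 := by
        intro b
        rw [ih, if_neg]
        omega
      simp only [h1, zero_mul, Finset.sum_const_zero]
      rw [if_neg]
      omega

lemma NR_pow_d (d : ℕ) : (NR K d) ^ d = 0 := by
  ext i j
  rw [NR_pow_apply]
  rw [if_neg (by omega)]
  rfl

/-- `Q ↦ 1 ⊗ₖ Q` as an algebra hom. -/
def kronRight (K : Type*) [CommRing K] (d k : ℕ) :
    Matrix (Fin k) (Fin k) K →ₐ[K] Matrix (Fin d × Fin k) (Fin d × Fin k) K where
  toFun Q := (1 : Matrix (Fin d) (Fin d) K) ⊗ₖ Q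
  map_one' := Matrix.one_kronecker_one
  map_mul' Q Q' := by
    show (1 : Matrix (Fin d) (Fin d) K) ⊗ₖ (Q * Q')
      = (1 : Matrix (Fin d) (Fin d) K) ⊗ₖ Q * (1 : Matrix (Fin d) (Fin d) K) ⊗ₖ Q'
    rw [← Matrix.mul_kronecker_mul, one_mul]
  map_zero' := Matrix.kronecker_zero _
  map_add' Q Q' := Matrix.kronecker_add _ _ _
  commutes' r := by
    show (1 : Matrix (Fin d) (Fin d) K) ⊗ₖ (algebraMap K (Matrix (Fin k) (Fin k) K) r) = _
    rw [Algebra.algebraMap_eq_smul_one, Algebra.algebraMap_eq_smul_one,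
      Matrix.kronecker_smul, Matrix.one_kronecker_one]

lemma kron_pow {K : Type*} [CommRing K] (d k : ℕ) (N : Matrix (Fin d) (Fin d) K) (m : ℕ) :
    (N ⊗ₖ (1 : Matrix (Fin k) (Fin k) K)) ^ m = (N ^ m) ⊗ₖ (1 : Matrix (Fin k) (Fin k) K) := by
  induction m with
  | zero => rw [pow_zero, pow_zero, Matrix.one_kronecker_one]
  | succ m ih => rw [pow_succ, pow_succ, ih, ← Matrix.mul_kronecker_mul, one_mul]

end NRsec

section MainK

variable {K : Type*} [Field K] [CharZero K]

lemma main_K (k d : ℕ) (hd : 0 < d) (g : K[X]) (hmon : g.Monic) (hirr : Irreducible g)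
    (hdeg : g.natDegree = k) :
    ∃ S : Matrix (Fin (d * k)) (Fin (d * k)) K, S.det ≠ 0 ∧
      compR K (d * k) (g ^ d) * S
        = S * (Matrix.reindex finProdFinEquiv finProdFinEquiv
            ((1 : Matrix (Fin d) (Fin d) K) ⊗ₖ compR K k g
              + NR K d ⊗ₖ (1 : Matrix (Fin k) (Fin k) K))) := by
  have hk : 0 < k := by
    rw [← hdeg]
    by_contra hh
    push_neg at hh
    exact hirr.not_isUnit
      (hmon.natDegree_eq_zero.mp (Nat.le_zero.mp hh) ▸ isUnit_one)
  set C := compR K k g with hCdef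
  set A := (1 : Matrix (Fin d) (Fin d) K) ⊗ₖ C with hA
  set B := NR K d ⊗ₖ (1 : Matrix (Fin k) (Fin k) K) with hB
  have hAB : Commute A B := by
    show A * B = B * A
    rw [hA, hB, ← Matrix.mul_kronecker_mul, ← Matrix.mul_kronecker_mul, one_mul, mul_one,
      one_mul, mul_one]
  have hA_hom : A = kronRight K d k C := rfl
  have hgC : aeval C g = 0 := aeval_compR k hk g hmon hdeg
  have hgA : aeval A g = 0 := by
    rw [hA_hom, Polynomial.aeval_algHom_apply, hgC, map_zero]
  have hBpow : ∀ m, B ^ m = ((NR K d) ^ m) ⊗ₖ (1 : Matrix (Fin k) (Fin k) K) :=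
    kron_pow d k (NR K d)
  have hBd : B ^ d = 0 := by rw [hBpow, NR_pow_d]; exact Matrix.zero_kronecker _
  obtain ⟨E, hexp, hAE, hBE⟩ := aeval_add_expand hAB g
  set W := aeval A (derivative g) + B * E with hW
  have hgM : aeval (A + B) g = B * W := by
    rw [hexp, hgA, zero_add, hW, mul_add, ← mul_assoc]
  have hBW : Commute B W :=
    (commute_aeval_right hAB.symm (derivative g)).add_right ((Commute.refl B).mul_right hBE)
  have hMq : aeval (A + B) (g ^ d) = 0 := by
    rw [map_pow, hgM, hBW.mul_pow, hBd, zero_mul]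
  -- the derivative of g evaluated at the companion matrix is invertible
  obtain ⟨a, b, hab⟩ := hirr.separable
  have hb : aeval C b * aeval C (derivative g) = 1 := by
    have h := congrArg (aeval C) hab
    rw [map_add, _root_.map_mul, _root_.map_mul, hgC, mul_zero, zero_add, _root_.map_one] at h
    exact h
  have hb' : aeval C (derivative g) * aeval C b = 1 := by
    rw [← _root_.map_mul, mul_comm, _root_.map_mul, hb]
  have hunit : IsUnit (aeval C (derivative g)) := ⟨⟨_, _, hb', hb⟩, rfl⟩
  -- (aeval (A+B) g)^(d-1) = B^(d-1) * g'(A)^(d-1)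
  have hcom1 : Commute (aeval A (derivative g)) (B * E) :=
    ((commute_aeval_right hAB.symm (derivative g)).symm).mul_right
      ((commute_aeval_right hAE.symm (derivative g)).symm)
  have hgM1 : aeval (A + B) g ^ (d - 1)
      = B ^ (d - 1) * (aeval A (derivative g)) ^ (d - 1) := by
    obtain ⟨F, hF⟩ := add_pow_expand hcom1 (d - 1)
    rw [hgM, hBW.mul_pow, hW, hF, mul_add]
    have hz : B ^ (d - 1) * (B * E * F) = 0 := by
      rw [show B ^ (d - 1) * (B * E * F) = (B ^ (d - 1) * B) * (E * F) by noncomm_ring,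
        ← pow_succ, Nat.sub_add_cancel hd, hBd, zero_mul]
    rw [hz, add_zero]
  haveI : Nonempty (Fin k) := ⟨⟨0, hk⟩⟩
  have hgMd1_ne : aeval (A + B) g ^ (d - 1) ≠ 0 := by
    rw [hgM1]
    have hAd : (aeval A (derivative g)) ^ (d - 1)
        = (1 : Matrix (Fin d) (Fin d) K) ⊗ₖ (aeval C (derivative g) ^ (d - 1)) := by
      rw [hA_hom, Polynomial.aeval_algHom_apply, ← map_pow]
      rfl
    rw [hBpow, hAd, ← Matrix.mul_kronecker_mul, mul_one, one_mul]
    intro hzero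
    obtain ⟨j0, j1, hj⟩ : ∃ j0 j1, (aeval C (derivative g) ^ (d - 1)) j0 j1 ≠ 0 := by
      by_contra hall
      push_neg at hall
      exact (hunit.pow (d - 1)).ne_zero
        (Matrix.ext fun i j => (hall i j).trans (Matrix.zero_apply i j).symm)
    have hentry := congrFun (congrFun hzero (⟨0, hd⟩, j0)) (⟨d - 1, by omega⟩, j1)
    rw [Matrix.kroneckerMap_apply, NR_pow_apply] at hentry
    simp only [Matrix.zero_apply] at hentry
    rw [if_pos (by simp), one_mul] at hentry
    exact hj hentry
  -- transfer along reindex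
  set n := d * k with hn
  have hn0 : 0 < n := Nat.mul_pos hd hk
  set φ := (Matrix.reindexAlgEquiv K K
    (finProdFinEquiv : Fin d × Fin k ≃ Fin (d * k))).toAlgHom with hφ
  set M' := Matrix.reindex finProdFinEquiv finProdFinEquiv (A + B) with hM'
  have hψ : M' = φ (A + B) := rfl
  have hM'q : aeval M' (g ^ d) = 0 := by
    rw [hψ, Polynomial.aeval_algHom_apply, hMq, map_zero]
  have hM'g_ne : aeval M' g ^ (d - 1) ≠ 0 := by
    intro hzz
    apply hgMd1_ne
    have h2 : φ (aeval (A + B) g ^ (d - 1)) = aeval M' g ^ (d - 1) := by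
      rw [map_pow, ← Polynomial.aeval_algHom_apply, hψ]
    have h3 : φ (aeval (A + B) g ^ (d - 1)) = φ 0 := by rw [h2, hzz, map_zero]
    exact (Matrix.reindexAlgEquiv K K finProdFinEquiv).injective h3
  obtain ⟨i0, j0, hij⟩ : ∃ i j, (aeval M' g ^ (d - 1)) i j ≠ 0 := by
    by_contra hall
    push_neg at hall
    exact hM'g_ne (Matrix.ext fun i j => (hall i j).trans (Matrix.zero_apply i j).symm)
  set v : Fin n → K := Pi.single i0 1 with hv
  set S : Matrix (Fin n) (Fin n) K :=
    Matrix.of (fun p q : Fin n => (v ᵥ* M' ^ (p : ℕ)) q) with hS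
  have hSrow : ∀ p : Fin n, S p = v ᵥ* M' ^ (p : ℕ) := fun p => rfl
  have hq_deg : (g ^ d).natDegree = n := by rw [natDegree_pow, hdeg]
  have hq_coeff_n : (g ^ d).coeff n = 1 := by
    rw [← hq_deg]; exact (hmon.pow d).coeff_natDegree
  have hMn : M' ^ n = -∑ m ∈ Finset.range n, (g ^ d).coeff m • M' ^ m := by
    have h0 := hM'q
    rw [aeval_eq_sum_range, hq_deg, Finset.sum_range_succ, hq_coeff_n, one_smul] at h0
    rw [add_comm] at h0
    exact eq_neg_of_add_eq_zero_left h0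
  have hrel : compR K n (g ^ d) * S = S * M' := by
    ext p j
    have hRHS : (S * M') p j = (v ᵥ* M' ^ ((p : ℕ) + 1)) j := by
      rw [pow_succ, ← Matrix.vecMul_vecMul, Matrix.mul_apply]
      rfl
    rw [hRHS, Matrix.mul_apply]
    rcases lt_or_ge ((p : ℕ) + 1) n with hp | hp
    · rw [Finset.sum_eq_single (⟨(p : ℕ) + 1, hp⟩ : Fin n)]
      · have h1 : compR K n (g ^ d) p ⟨(p : ℕ) + 1, hp⟩ = 1 := by
          simp [compR]
        rw [h1, one_mul]
        rfl
      · intro r _ hr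
        rw [show compR K n (g ^ d) p r = 0 by
          simp only [compR]
          rw [if_neg (fun hh => hr (Fin.ext hh.symm)), if_neg (by omega)], zero_mul]
      · intro hmem
        exact absurd (Finset.mem_univ _) hmem
    · -- p = n - 1
      have hpn : (p : ℕ) = n - 1 := by have := p.isLt; omega
      have hp1 : (p : ℕ) + 1 = n := by have := p.isLt; omega
      have hLcoef : ∀ r : Fin n, compR K n (g ^ d) p r = -(g ^ d).coeff (r : ℕ) := by
        intro r
        simp only [compR]
        rw [if_neg (by have := r.isLt; omega), if_pos hpn]
      have hR : (v ᵥ* M' ^ ((p : ℕ) + 1)) j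
          = -∑ m ∈ Finset.range n, (g ^ d).coeff m * (v ᵥ* M' ^ m) j := by
        rw [hp1, hMn, Matrix.vecMul_neg, my_vecMul_sum, Pi.neg_apply, Finset.sum_apply]
        congr 1
        refine Finset.sum_congr rfl fun m _ => ?_
        rw [my_vecMul_smulM, Pi.smul_apply, smul_eq_mul]
      rw [hR, ← Fin.sum_univ_eq_sum_range (fun m => (g ^ d).coeff m * (v ᵥ* M' ^ m) j) n,
        ← Finset.sum_neg_distrib]
      refine Finset.sum_congr rfl fun r _ => ?_
      rw [hLcoef r, neg_mul]
      rfl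
  have hdet : S.det ≠ 0 := by
    intro hdet0
    obtain ⟨c, hc0, hcS⟩ := Matrix.exists_vecMul_eq_zero_iff.mpr hdet0
    let I : Ideal K[X] :=
      { carrier := {P | v ᵥ* aeval M' P = 0}
        add_mem' := fun {P Q} hP hQ => by
          simp only [Set.mem_setOf_eq] at *
          rw [map_add, Matrix.vecMul_add, hP, hQ, add_zero]
        zero_mem' := by simp only [Set.mem_setOf_eq, map_zero, Matrix.vecMul_zero]
        smul_mem' := fun r P hP => by
          simp only [Set.mem_setOf_eq, smul_eq_mul] at *
          rw [mul_comm r P, _root_.map_mul, ← Matrix.vecMul_vecMul, hP, Matrix.zero_vecMul] }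
    have hmemI : ∀ P : K[X], P ∈ I ↔ v ᵥ* aeval M' P = 0 := fun P => Iff.rfl
    have hqI : g ^ d ∈ I := by
      show v ᵥ* aeval M' (g ^ d) = 0
      rw [hM'q, Matrix.vecMul_zero]
    have hgd1I : g ^ (d - 1) ∉ I := by
      intro hmem
      have hzz : v ᵥ* aeval M' (g ^ (d - 1)) = 0 := hmem
      rw [map_pow, hv, Matrix.single_one_vecMul] at hzz
      exact hij (congrFun hzz j0)
    let P : K[X] := ∑ p : Fin n, Polynomial.monomial (p : ℕ) (c p)
    have hPcoeff : ∀ p : Fin n, P.coeff (p : ℕ) = c p := by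
      intro p
      rw [finset_sum_coeff, Finset.sum_eq_single p]
      · rw [coeff_monomial, if_pos rfl]
      · intro r _ hr
        rw [coeff_monomial, if_neg (fun hh => hr (Fin.ext hh))]
      · intro hmem
        exact absurd (Finset.mem_univ _) hmem
    have hP0 : P ≠ 0 := by
      obtain ⟨p, hp⟩ := Function.ne_iff.mp hc0
      intro hz
      exact hp (by rw [← hPcoeff p, hz, coeff_zero]; rfl)
    have hPdeg : P.natDegree < n := by
      rw [natDegree_lt_iff_degree_lt hP0, degree_lt_iff_coeff_zero]
      intro m hm
      have hm' : n ≤ m := by exact_mod_cast hm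
      rw [finset_sum_coeff]
      apply Finset.sum_eq_zero
      intro p _
      rw [coeff_monomial, if_neg (by have := p.isLt; omega)]
    have hPI : P ∈ I := by
      show v ᵥ* aeval M' P = 0
      have hav : aeval M' P = ∑ p : Fin n, c p • M' ^ (p : ℕ) := by
        rw [map_sum]
        refine Finset.sum_congr rfl fun p _ => ?_
        rw [aeval_monomial, Algebra.algebraMap_eq_smul_one, smul_mul_assoc, one_mul]
      rw [hav, my_vecMul_sum]
      funext jj
      rw [Finset.sum_apply]
      have hc := congrFun hcS jj
      have : (c ᵥ* S) jj = ∑ p : Fin n, (c p • (v ᵥ* (M' ^ (p : ℕ)) : Fin n → K)) jj := by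
        simp only [Matrix.vecMul, dotProduct, Pi.smul_apply, smul_eq_mul]
        rfl
      rw [← Finset.sum_congr rfl fun p _ => by rw [my_vecMul_smulM]]
      rw [← this, hc]
    obtain ⟨hgen, hI⟩ := IsPrincipalIdealRing.principal I
    have hmem_iff : ∀ x : K[X], x ∈ I ↔ hgen ∣ x := by
      intro x
      rw [hI, Ideal.submodule_span_eq, Ideal.mem_span_singleton]
    have hdvd : hgen ∣ g ^ d := (hmem_iff _).mp hqI
    obtain ⟨e, he, hassoc⟩ := (dvd_prime_pow hirr.prime d).mp hdvd
    rcases eq_or_lt_of_le he with heq | hlt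
    · subst heq
      have hgdP : g ^ e ∣ P := hassoc.symm.dvd.trans ((hmem_iff _).mp hPI)
      have hle := Polynomial.natDegree_le_of_dvd hgdP hP0
      rw [hq_deg] at hle
      omega
    · have hdvd2 : hgen ∣ g ^ (d - 1) :=
        (hassoc.dvd).trans (pow_dvd_pow g (by omega))
      exact hgd1I ((hmem_iff _).mpr hdvd2)
  exact ⟨S, hdet, hrel⟩

end MainK


section Assemble

variable (H : Subfield ℂ)

lemma compR_map (m : ℕ) (q : Polynomial ↥H) :
    (compR (↥H) m q).map (H.subtype : ↥H →+* ℂ) = companion m (q.map H.subtype) := by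
  ext i j
  simp only [Matrix.map_apply, compR, companion, coeff_map]
  rw [apply_ite (H.subtype), apply_ite (H.subtype)]
  simp

lemma NR_map (d : ℕ) : (NR (↥H) d).map (H.subtype : ↥H →+* ℂ) = superdiag d := by
  ext i j
  simp only [Matrix.map_apply, NR, superdiag]
  rw [apply_ite (H.subtype)]
  simp

lemma one_map (k : ℕ) :
    ((1 : Matrix (Fin k) (Fin k) ↥H)).map (H.subtype : ↥H →+* ℂ) = 1 :=
  Matrix.map_one _ (map_zero _) (map_one _)

lemma kron_map {d k : ℕ} (P : Matrix (Fin d) (Fin d) ↥H) (Q : Matrix (Fin k) (Fin k) ↥H) :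
    ((P ⊗ₖ Q).map (H.subtype : ↥H →+* ℂ))
      = (P.map (H.subtype : ↥H →+* ℂ)) ⊗ₖ (Q.map (H.subtype : ↥H →+* ℂ)) := by
  ext ⟨i, j⟩ ⟨i', j'⟩
  simp [Matrix.kroneckerMap_apply, Matrix.map_apply]

lemma reindex_map {m n : Type*} [Fintype m] [Fintype n] [DecidableEq m] [DecidableEq n]
    (e : m ≃ n) (M : Matrix m m ↥H) :
    ((Matrix.reindex e e M).map (H.subtype : ↥H →+* ℂ))
      = Matrix.reindex e e (M.map (H.subtype : ↥H →+* ℂ)) := by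
  ext i j
  simp [Matrix.reindex_apply, Matrix.submatrix_apply, Matrix.map_apply]


/-- For `g` monic of degree `k` irreducible over a subfield `H` of `ℂ`
and `d ≥ 1`, the companion matrix of `q = g^d` (of size `n = d·k`, with entries in `H`)
is similar over `H` to the companion-Jordan block `C(g,d)`. -/
theorem stmt_2 (H : Subfield ℂ) (k d : ℕ) (hd : 0 < d) (g : Polynomial ↥H)
    (hmon : g.Monic) (hirr : Irreducible g) (hdeg : g.natDegree = k) :
    ∃ (eqv : (Fin d × Fin k) ≃ Fin (d * k)) (T : Matrix (Fin (d * k)) (Fin (d * k)) ℂ),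
      (∀ i j, T i j ∈ H) ∧ IsUnit T.det ∧
      T⁻¹ * companion (d * k) ((g ^ d).map H.subtype) * T
        = Matrix.reindex eqv eqv (CJ k (g.map H.subtype) d) := by
  haveI : CharZero ↥H := H.subtype.charZero
  obtain ⟨S, hdet, hrel⟩ := main_K k d hd g hmon hirr hdeg
  set σ := (H.subtype : ↥H →+* ℂ) with hσ
  set T := S.map σ with hT
  have hTmem : ∀ i j, T i j ∈ H := by
    intro i j
    exact SetLike.coe_mem (S i j)
  have hdetT : IsUnit T.det := by
    rw [hT, show S.map ⇑σ = σ.mapMatrix S from rfl, ← RingHom.map_det]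
    refine isUnit_iff_ne_zero.mpr fun h => hdet ?_
    exact Subtype.coe_injective h
  refine ⟨finProdFinEquiv, T, hTmem, hdetT, ?_⟩
  have hmap := congrArg (fun X : Matrix (Fin (d * k)) (Fin (d * k)) ↥H => X.map σ) hrel
  simp only [Matrix.map_mul] at hmap
  have h1 : (compR (↥H) (d * k) (g ^ d)).map σ = companion (d * k) ((g ^ d).map H.subtype) :=
    compR_map H (d * k) (g ^ d)
  have h2 : ((Matrix.reindex finProdFinEquiv finProdFinEquiv
        ((1 : Matrix (Fin d) (Fin d) ↥H) ⊗ₖ compR (↥H) k g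
          + NR (↥H) d ⊗ₖ (1 : Matrix (Fin k) (Fin k) ↥H))).map σ)
      = Matrix.reindex finProdFinEquiv finProdFinEquiv (CJ k (g.map H.subtype) d) := by
    have hin : (((1 : Matrix (Fin d) (Fin d) ↥H) ⊗ₖ compR (↥H) k g
        + NR (↥H) d ⊗ₖ (1 : Matrix (Fin k) (Fin k) ↥H)).map σ)
        = CJ k (g.map H.subtype) d := by
      rw [Matrix.map_add ⇑σ (fun a b => map_add σ a b), kron_map, kron_map, one_map, one_map, compR_map, NR_map]
      rfl
    rw [reindex_map, hin]
  rw [h1, h2] at hmap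
  rw [mul_assoc, hmap, ← mul_assoc, Matrix.nonsing_inv_mul T hdetT, one_mul]

end Assemble
end
end

section
/- Let g be a monic complex polynomial of degree k, let d ≥ 1, set q = g^d and n = dk, and let C_q be the companion matrix of q. Let λ_0 ∈ ℂ be a root of g. Then C_q v_n(λ_0) = λ_0 v_n(λ_0), and for every j = 1, …, d−1 one has C_q S_j v_n(λ_0) = λ_0 S_j v_n(λ_0) + S_{j−1} v_n(λ_0) (with S_0 = I_n). In other words, v_n(λ_0), S_1 v_n(λ_0), …, S_{d−1} v_n(λ_0) is a Jordan chain of length d of C_q at the eigenvalue λ_0. -/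
open Polynomial Matrix Kronecker

noncomputable section

/-- The column vector `(1, λ, λ², …, λ^{n−1})ᵀ`. -/
def vvec (n : ℕ) (lam : ℂ) : Fin n → ℂ := fun i => lam ^ (i : ℕ)

/-- The matrix `S_j` whose `(r, r−j)` entry is the binomial coefficient `C(r, j)`
(0-indexed), all other entries zero; `S_0 = I`. -/
def Smat (n j : ℕ) : Matrix (Fin n) (Fin n) ℂ :=
  fun r c => if (r : ℕ) = (c : ℕ) + j then ((r : ℕ).choose j : ℂ) else 0

/-!
`S_j v_n(λ)` is the vector of values at `λ` of the `j`-th Hasse derivatives of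
`1, X, …, X^{n-1}`. Applying `C_q` shifts such a vector up by one entry and puts
`-∑_{c<n} q_c (D^{(j)} X^c)(λ) = (D^{(j)} X^n)(λ) - (D^{(j)} q)(λ)` in the last entry.
Pascal's rule `D^{(j)}(X^{c+1}) = X D^{(j)} X^c + D^{(j-1)} X^c` gives the Jordan-chain
relation in every entry, the last one included because `(D^{(j)} q)(λ) = 0` for
`j < d ≤` the multiplicity of `λ` as a root of `q = g^d`.
-/

open Finset

section HasseDeriv

variable {R : Type*} [CommRing R]

/-- `binomPowSeq j a c = (D^{(j)} X^c)(a)`, where `D^{(j)}` is the `j`-th Hasse derivative. -/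
def binomPowSeq (j : ℕ) (a : R) (c : ℕ) : R := (c.choose j : R) * a ^ (c - j)

theorem binomPowSeq_succ_succ (j : ℕ) (a : R) (c : ℕ) :
    binomPowSeq (j + 1) a (c + 1) = a * binomPowSeq (j + 1) a c + binomPowSeq j a c := by
  unfold binomPowSeq
  rcases lt_trichotomy c j with h | rfl | h
  · simp [Nat.choose_eq_zero_of_lt h, Nat.choose_eq_zero_of_lt (Nat.succ_lt_succ h),
      Nat.choose_eq_zero_of_lt (h.trans (Nat.lt_succ_self j))]
  · simp
  · obtain ⟨m, rfl⟩ := Nat.exists_eq_add_of_lt h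
    rw [Nat.choose_succ_succ, Nat.cast_add, show j + m + 1 + 1 - (j + 1) = m + 1 by omega,
      show j + m + 1 - (j + 1) = m by omega, show j + m + 1 - j = m + 1 by omega]
    ring

theorem Polynomial.eval_hasseDeriv_eq_sum (p : R[X]) (j : ℕ) (a : R) :
    (hasseDeriv j p).eval a
      = ∑ c ∈ range (p.natDegree + 1), p.coeff c * binomPowSeq j a c := by
  conv_lhs => rw [p.as_sum_range' (p.natDegree + 1) (lt_add_one _)]
  simp only [map_sum, hasseDeriv_monomial, eval_finsetSum, eval_monomial, binomPowSeq]
  exact sum_congr rfl fun c _ => by ring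

theorem Polynomial.eval_hasseDeriv_eq_zero_of_pow_dvd [IsDomain R] [CharZero R] {p : R[X]}
    {a : R} {d j : ℕ} (hdvd : (X - C a) ^ d ∣ p) (hj : j < d) :
    (hasseDeriv j p).eval a = 0 := by
  have hroot : (derivative^[j] p).IsRoot a :=
    dvd_iff_isRoot.mp ((dvd_pow_self _ (Nat.sub_ne_zero_of_lt hj)).trans
      (pow_sub_dvd_iterate_derivative_of_pow_dvd j hdvd))
  rw [← factorial_smul_hasseDeriv, LinearMap.smul_apply, IsRoot, eval_smul] at hroot
  exact (smul_eq_zero.mp hroot).resolve_left j.factorial_ne_zero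

end HasseDeriv

theorem Smat_mulVec_vvec (n j : ℕ) (a : ℂ) :
    Smat n j *ᵥ vvec n a = fun r : Fin n => binomPowSeq j a r := by
  ext r
  simp only [mulVec, dotProduct, Smat, vvec, ite_mul, zero_mul]
  by_cases h : j ≤ (r : ℕ)
  · rw [sum_eq_single_of_mem (⟨r - j, by omega⟩ : Fin n) (mem_univ _)]
    · simp [binomPowSeq, Nat.sub_add_cancel h]
    · intro c _ hc
      rw [if_neg fun hrc => hc (Fin.ext (by simp only; omega))]
  · rw [sum_eq_zero fun c _ => if_neg (by omega)]
    simp [binomPowSeq, Nat.choose_eq_zero_of_lt (not_le.mp h)]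

theorem companion_mulVec_apply_of_lt (n : ℕ) (q : ℂ[X]) (x : Fin n → ℂ) (i : Fin n)
    (hi : (i : ℕ) + 1 < n) : (companion n q *ᵥ x) i = x ⟨i + 1, hi⟩ := by
  simp only [mulVec, dotProduct, companion]
  rw [sum_eq_single_of_mem (⟨i + 1, hi⟩ : Fin n) (mem_univ _)]
  · simp
  · intro c _ hc
    rw [if_neg fun h => hc (Fin.ext h.symm), if_neg (by omega), zero_mul]

theorem companion_mulVec_apply_last (n : ℕ) (q : ℂ[X]) (x : Fin n → ℂ) (i : Fin n)
    (hi : (i : ℕ) = n - 1) : (companion n q *ᵥ x) i = -∑ c : Fin n, q.coeff c * x c := by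
  simp only [mulVec, dotProduct, companion, ← sum_neg_distrib]
  refine sum_congr rfl fun c _ => ?_
  rw [if_neg (by omega), if_pos hi, neg_mul]

theorem companion_mulVec_eq_of_recurrence {q : ℂ[X]} (hq : q.Monic) {n : ℕ}
    (hn : q.natDegree = n) {a : ℂ} {w u : ℕ → ℂ}
    (hrec : ∀ i < n, w (i + 1) = a * w i + u i)
    (hqw : ∑ c ∈ range (n + 1), q.coeff c * w c = 0) :
    companion n q *ᵥ (fun i : Fin n => w i)
      = a • (fun i : Fin n => w i) + fun i : Fin n => u i := by
  ext i
  simp only [Pi.add_apply, Pi.smul_apply, smul_eq_mul]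
  by_cases hi : (i : ℕ) + 1 < n
  · rw [companion_mulVec_apply_of_lt n q _ i hi, hrec i i.isLt]
  · have hlast : (i : ℕ) = n - 1 := by omega
    have hwn : -∑ c ∈ range n, q.coeff c * w c = w n := by
      rw [sum_range_succ, ← hn, hq.coeff_natDegree, one_mul, hn] at hqw
      linear_combination -hqw
    rw [companion_mulVec_apply_last n q _ i hlast,
      Fin.sum_univ_eq_sum_range (fun c => q.coeff c * w c), hwn, ← hrec i i.isLt,
      show (i : ℕ) + 1 = n by omega]

theorem companion_mulVec_vvec {q : ℂ[X]} (hq : q.Monic) {n : ℕ} (hn : q.natDegree = n) {a : ℂ}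
    (hroot : q.IsRoot a) : companion n q *ᵥ vvec n a = a • vvec n a := by
  have h := companion_mulVec_eq_of_recurrence (w := (a ^ ·)) (u := 0) hq hn
    (fun i _ => by rw [pow_succ', Pi.zero_apply, add_zero])
    (by rw [← hn, ← eval_eq_sum_range]; exact hroot)
  exact h.trans (add_zero _)

theorem companion_mulVec_Smat_vvec {q : ℂ[X]} (hq : q.Monic) {n j : ℕ} (hn : q.natDegree = n)
    {a : ℂ} (hj : (hasseDeriv (j + 1) q).eval a = 0) :
    companion n q *ᵥ (Smat n (j + 1) *ᵥ vvec n a)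
      = a • (Smat n (j + 1) *ᵥ vvec n a) + Smat n j *ᵥ vvec n a := by
  rw [Smat_mulVec_vvec, Smat_mulVec_vvec]
  exact companion_mulVec_eq_of_recurrence hq hn (fun i _ => binomPowSeq_succ_succ j a i)
    (by rw [← hn, ← eval_hasseDeriv_eq_sum]; exact hj)

/-- Jordan chains of companion matrices.
Let `g` be monic of degree `k` over `ℂ`, `d ≥ 1`, `q = g^d`, `n = d·k`. If `λ₀` is a root
of `g`, then `C_q v_n(λ₀) = λ₀ v_n(λ₀)` and `C_q S_j v_n(λ₀) = λ₀ S_j v_n(λ₀) + S_{j-1} v_n(λ₀)`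
for `j = 1, …, d−1`; i.e. `v_n(λ₀), S_1 v_n(λ₀), …, S_{d−1} v_n(λ₀)` is a Jordan chain of
length `d` of `C_q` at `λ₀`. -/
theorem stmt_3 (k d : ℕ) (hd : 1 ≤ d) (g : Polynomial ℂ)
    (hmon : g.Monic) (hdeg : g.natDegree = k)
    (lam : ℂ) (hroot : g.IsRoot lam) :
    (companion (d * k) (g ^ d)).mulVec (vvec (d * k) lam) = lam • vvec (d * k) lam ∧
    ∀ j : ℕ, 1 ≤ j → j ≤ d - 1 →
      (companion (d * k) (g ^ d)).mulVec ((Smat (d * k) j).mulVec (vvec (d * k) lam))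
        = lam • (Smat (d * k) j).mulVec (vvec (d * k) lam)
          + (Smat (d * k) (j - 1)).mulVec (vvec (d * k) lam) := by
  have hq : (g ^ d).Monic := hmon.pow d
  have hdeg_q : (g ^ d).natDegree = d * k := by rw [hmon.natDegree_pow, hdeg]
  have hdvd : (X - C lam) ^ d ∣ g ^ d := pow_dvd_pow_of_dvd (dvd_iff_isRoot.mpr hroot) d
  refine ⟨companion_mulVec_vvec hq hdeg_q ?_, fun j hj hjd => ?_⟩
  · rw [IsRoot, eval_pow, hroot.eq_zero, zero_pow (by omega)]
  · obtain ⟨i, rfl⟩ : ∃ i, j = i + 1 := ⟨j - 1, by omega⟩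
    exact companion_mulVec_Smat_vvec hq hdeg_q
      (eval_hasseDeriv_eq_zero_of_pow_dvd hdvd (by omega))
end
end

section
/- Let H be a subfield of ℂ, let g be a monic polynomial of degree k irreducible over H, let d ≥ 1, set q = g^d and n = dk, and let C_g and C_q be the companion matrices of g and q. Suppose W ∈ H^{n×k} satisfies v_n(λ) = W v_k(λ) for every complex root λ of g. Then C_q W = W C_g, and for every j = 1, …, d−1 one has C_q S_j W = S_{j−1} W + S_j W C_g (with S_0 = I_n). -/
open Polynomial Matrix Kronecker

noncomputable section

lemma smat_mulVec (n j : ℕ) (lam : ℂ) (i : Fin n) :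
    (Smat n j).mulVec (vvec n lam) i = ((i : ℕ).choose j : ℂ) * lam ^ ((i : ℕ) - j) := by
  unfold Smat vvec Matrix.mulVec dotProduct
  by_cases h : j ≤ (i : ℕ)
  · have hc : (i : ℕ) - j < n := lt_of_le_of_lt (Nat.sub_le _ _) i.isLt
    rw [Finset.sum_eq_single (⟨(i : ℕ) - j, hc⟩ : Fin n)]
    · simp [Nat.sub_add_cancel h]
    · intro b _ hb
      have : (i : ℕ) ≠ (b : ℕ) + j := by
        intro he
        exact hb (Fin.ext (by simp only [Fin.val_mk]; omega))
      simp [this]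
    · simp
  · push_neg at h
    rw [Finset.sum_eq_zero, Nat.choose_eq_zero_of_lt h]
    · simp
    · intro b _
      have : (i : ℕ) ≠ (b : ℕ) + j := by omega
      simp [this]

lemma companion_mulVec_lt {m : ℕ} (p : Polynomial ℂ) (v : Fin m → ℂ) (i : Fin m)
    (h : (i : ℕ) + 1 < m) :
    (companion m p).mulVec v i = v ⟨(i : ℕ) + 1, h⟩ := by
  unfold companion Matrix.mulVec dotProduct
  rw [Finset.sum_eq_single (⟨(i : ℕ) + 1, h⟩ : Fin m)]
  · simp
  · intro b _ hb
    have h1 : (i : ℕ) + 1 ≠ (b : ℕ) := fun he => hb (Fin.ext he.symm)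
    have h2 : (i : ℕ) ≠ m - 1 := by omega
    simp [h1, h2]
  · simp

lemma companion_mulVec_last {m : ℕ} (p : Polynomial ℂ) (v : Fin m → ℂ) (i : Fin m)
    (h : (i : ℕ) = m - 1) :
    (companion m p).mulVec v i = -∑ c : Fin m, p.coeff (c : ℕ) * v c := by
  unfold companion Matrix.mulVec dotProduct
  rw [← Finset.sum_neg_distrib]
  apply Finset.sum_congr rfl
  intro b _
  have hm := i.isLt
  have h1 : (i : ℕ) + 1 ≠ (b : ℕ) := by have := b.isLt; omega
  simp only []
  rw [if_neg h1, if_pos h]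
  ring

lemma sum_coeff_eval {m : ℕ} (p : Polynomial ℂ) (hm : p.natDegree = m) (hp : p.Monic)
    (lam : ℂ) (hroot : p.IsRoot lam) :
    ∑ c : Fin m, p.coeff (c : ℕ) * lam ^ (c : ℕ) = -lam ^ m := by
  have he : (0 : ℂ) = ∑ i ∈ Finset.range (m + 1), p.coeff i * lam ^ i := by
    rw [← hroot, eval_eq_sum_range, hm]
  rw [Finset.sum_range_succ] at he
  have hl : p.coeff m = 1 := by rw [← hm]; exact hp.coeff_natDegree
  rw [hl, one_mul] at he
  rw [Fin.sum_univ_eq_sum_range (fun c => p.coeff c * lam ^ c)]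
  linear_combination -he

lemma companion_mulVec_vvec_s6 {m : ℕ} (p : Polynomial ℂ) (hm : p.natDegree = m) (hp : p.Monic)
    (lam : ℂ) (hroot : p.IsRoot lam) :
    (companion m p).mulVec (vvec m lam) = lam • vvec m lam := by
  funext i
  by_cases h : (i : ℕ) + 1 < m
  · rw [companion_mulVec_lt p _ i h]
    simp only [vvec, Pi.smul_apply, smul_eq_mul]
    rw [pow_succ]
    ring
  · have h' : (i : ℕ) = m - 1 := by have := i.isLt; omega
    rw [companion_mulVec_last p _ i h']
    simp only [vvec, Pi.smul_apply, smul_eq_mul, h']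
    rw [sum_coeff_eval p hm hp lam hroot]
    rw [← pow_succ']
    have : m - 1 + 1 = m := by have := i.isLt; omega
    rw [this]
    ring

lemma hasse_eval_zero {d : ℕ} (e : Polynomial ℂ) (he : e ≠ 0) (lam : ℂ) (hroot : e.IsRoot lam)
    {j : ℕ} (hj : j < d) : ((Polynomial.hasseDeriv j (e ^ d)).eval lam) = 0 := by
  have hdvd : (X - C lam) ^ d ∣ e ^ d := pow_dvd_pow_of_dvd (dvd_iff_isRoot.mpr hroot) d
  have hne : e ^ d ≠ 0 := pow_ne_zero _ he
  have hmult : d ≤ (e ^ d).rootMultiplicity lam := (le_rootMultiplicity_iff hne).mpr hdvd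
  have hit : (derivative^[j] (e ^ d)).IsRoot lam :=
    isRoot_iterate_derivative_of_lt_rootMultiplicity (lt_of_lt_of_le hj hmult)
  have hfs := congrFun (Polynomial.factorial_smul_hasseDeriv (R := ℂ) (k := j)) (e ^ d)
  rw [LinearMap.smul_apply] at hfs
  rw [IsRoot.def, ← hfs, eval_smul, nsmul_eq_mul] at hit
  have hne' : (j.factorial : ℂ) ≠ 0 := Nat.cast_ne_zero.mpr (Nat.factorial_ne_zero j)
  exact (mul_eq_zero.mp hit).resolve_left hne'

lemma hasse_sum {n : ℕ} (Q : Polynomial ℂ) (hQ : Q.natDegree = n) (hmon : Q.Monic)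
    (j : ℕ) (hj : j ≤ n) (lam : ℂ) (h0 : (Polynomial.hasseDeriv j Q).eval lam = 0) :
    ∑ c : Fin n, Q.coeff (c : ℕ) * (((c : ℕ).choose j : ℂ) * lam ^ ((c : ℕ) - j))
      = -((n.choose j : ℂ) * lam ^ (n - j)) := by
  have hdeg : (Polynomial.hasseDeriv j Q).natDegree < n - j + 1 := by
    have := Polynomial.natDegree_hasseDeriv_le Q j
    rw [hQ] at this; omega
  have heval := Polynomial.eval_eq_sum_range' hdeg lam
  rw [h0] at heval
  simp only [Polynomial.hasseDeriv_coeff] at heval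
  -- heval : 0 = ∑ i in range (n - j + 1), ↑((i+j).choose j) * Q.coeff (i+j) * lam ^ i
  set f : ℕ → ℂ := fun c => Q.coeff c * (((c).choose j : ℂ) * lam ^ (c - j)) with hf
  have hsub : ∑ c ∈ Finset.range (n + 1), f c = ∑ c ∈ Finset.Ico j (n + 1), f c := by
    rw [eq_comm]
    apply Finset.sum_subset
    · intro x hx
      simp only [Finset.mem_Ico] at hx
      exact Finset.mem_range.mpr hx.2
    · intro x hx hx'
      simp only [Finset.mem_range] at hx
      have : x < j := by
        by_contra hge
        exact hx' (Finset.mem_Ico.mpr ⟨by omega, by omega⟩)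
      simp [hf, Nat.choose_eq_zero_of_lt this]
  have hico : ∑ c ∈ Finset.Ico j (n + 1), f c = ∑ i ∈ Finset.range (n + 1 - j), f (j + i) := by
    rw [Finset.sum_Ico_eq_sum_range]
  have hmatch : ∑ i ∈ Finset.range (n + 1 - j), f (j + i)
      = ∑ i ∈ Finset.range (n - j + 1), ((i + j).choose j : ℂ) * Q.coeff (i + j) * lam ^ i := by
    have hnn : n + 1 - j = n - j + 1 := by omega
    rw [hnn]
    apply Finset.sum_congr rfl
    intro i _
    simp only [hf]
    rw [Nat.add_comm j i, Nat.add_sub_cancel]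
    ring
  have htot : ∑ c ∈ Finset.range (n + 1), f c = 0 := by
    rw [hsub, hico, hmatch, ← heval]
  rw [Finset.sum_range_succ] at htot
  have hl : Q.coeff n = 1 := by rw [← hQ]; exact hmon.coeff_natDegree
  rw [Fin.sum_univ_eq_sum_range f]
  simp only [hf, hl, one_mul] at htot ⊢
  linear_combination htot

lemma matrix_zero_of_vanish {k : ℕ} (e : Polynomial ℂ) (hk : e.natDegree = k)
    (hsep : e.Separable) (hne : e ≠ 0) {n' : ℕ} (M : Matrix (Fin n') (Fin k) ℂ)
    (hM : ∀ lam : ℂ, e.IsRoot lam → M.mulVec (vvec k lam) = 0) (hk1 : 1 ≤ k) : M = 0 := by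
  classical
  have hnodup := Polynomial.nodup_roots hsep
  set s : Finset ℂ := e.roots.toFinset with hs
  have hcard : k ≤ s.card := by
    rw [hs, Multiset.toFinset_card_of_nodup hnodup, ← hk]
    have hsp : e.Splits := IsAlgClosed.splits e
    rw [hsp.natDegree_eq_card_roots]
  ext r c
  set p : Polynomial ℂ := ∑ c : Fin k, Polynomial.C (M r c) * X ^ (c : ℕ) with hp
  have hdeg : p.natDegree < k := by
    apply lt_of_le_of_lt (Polynomial.natDegree_sum_le_of_forall_le _ _ ?_) (show k - 1 < k by omega)
    intro i _
    exact le_trans (Polynomial.natDegree_C_mul_X_pow_le _ _) (by have := i.isLt; omega)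
  have heval : ∀ x ∈ s, p.eval x = 0 := by
    intro x hx
    have hroot : e.IsRoot x := Polynomial.isRoot_of_mem_roots (Multiset.mem_toFinset.mp hx)
    have := congrFun (hM x hroot) r
    simp only [Matrix.mulVec, dotProduct, vvec, Pi.zero_apply] at this
    simp only [hp, Polynomial.eval_finset_sum, Polynomial.eval_mul, Polynomial.eval_C,
      Polynomial.eval_pow, Polynomial.eval_X]
    exact this
  have hp0 : p = 0 :=
    Polynomial.eq_zero_of_natDegree_lt_card_of_eval_eq_zero' p s heval (lt_of_lt_of_le hdeg hcard)
  have hcoeff : p.coeff (c : ℕ) = M r c := by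
    rw [hp, Polynomial.finset_sum_coeff]
    rw [Finset.sum_eq_single c]
    · simp
    · intro b _ hb
      have : (c : ℕ) ≠ (b : ℕ) := fun he => hb (Fin.ext he.symm)
      simp [Polynomial.coeff_C_mul, Polynomial.coeff_X_pow, this]
    · simp
  rw [hp0] at hcoeff
  simp only [Polynomial.coeff_zero] at hcoeff
  simp [← hcoeff]

lemma companion_smat_mulVec {n : ℕ} (Q : Polynomial ℂ) (hQ : Q.natDegree = n) (hmon : Q.Monic)
    (j : ℕ) (hj1 : 1 ≤ j) (hjn : j ≤ n - 1) (lam : ℂ)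
    (h0 : (Polynomial.hasseDeriv j Q).eval lam = 0) :
    (companion n Q).mulVec ((Smat n j).mulVec (vvec n lam))
      = (Smat n (j - 1)).mulVec (vvec n lam) + lam • (Smat n j).mulVec (vvec n lam) := by
  obtain ⟨j', rfl⟩ : ∃ j', j = j' + 1 := ⟨j - 1, by omega⟩
  funext i
  have hn1 : 1 ≤ n := by have := i.isLt; omega
  simp only [Pi.add_apply, Pi.smul_apply, smul_eq_mul, Nat.add_sub_cancel]
  by_cases h : (i : ℕ) + 1 < n
  · rw [companion_mulVec_lt Q _ i h]
    rw [smat_mulVec, smat_mulVec, smat_mulVec]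
    simp only [Fin.val_mk]
    rw [Nat.succ_sub_succ]
    rcases Nat.lt_or_ge (i : ℕ) (j' + 1) with h2 | h2
    · have hz : (i : ℕ).choose (j' + 1) = 0 := Nat.choose_eq_zero_of_lt h2
      rw [Nat.choose_succ_succ, hz]
      push_cast
      ring
    · have e2 : (i : ℕ) - j' = ((i : ℕ) - (j' + 1)) + 1 := by omega
      rw [Nat.choose_succ_succ, e2, pow_succ]
      push_cast
      ring
  · have h' : (i : ℕ) = n - 1 := by have := i.isLt; omega
    rw [companion_mulVec_last Q _ i h']
    have hsum := hasse_sum Q hQ hmon (j' + 1) (by omega) lam h0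
    calc -∑ c : Fin n, Q.coeff (c : ℕ) * (Smat n (j' + 1)).mulVec (vvec n lam) c
        = -∑ c : Fin n, Q.coeff (c : ℕ) *
            (((c : ℕ).choose (j' + 1) : ℂ) * lam ^ ((c : ℕ) - (j' + 1))) := by
          congr 1; apply Finset.sum_congr rfl; intro c _; rw [smat_mulVec]
      _ = (n.choose (j' + 1) : ℂ) * lam ^ (n - (j' + 1)) := by rw [hsum]; ring
      _ = _ := by
          rw [smat_mulVec, smat_mulVec, h']
          obtain ⟨n', rfl⟩ : ∃ n', n = n' + 1 := ⟨n - 1, by omega⟩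
          simp only [Nat.add_sub_cancel]
          rw [Nat.choose_succ_succ, Nat.succ_sub_succ]
          have e3 : n' - j' = (n' - (j' + 1)) + 1 := by omega
          rw [e3, pow_succ]
          push_cast
          ring

/-- Let `g` be monic of degree `k` irreducible over a subfield `H` of `ℂ`,
`d ≥ 1`, `q = g^d`, `n = d·k`. If `W ∈ H^{n×k}` satisfies `v_n(λ) = W v_k(λ)` for every
complex root `λ` of `g`, then `C_q W = W C_g` and
`C_q S_j W = S_{j−1} W + S_j W C_g` for `j = 1, …, d−1` (with `S_0 = I`). -/
theorem stmt_6 (H : Subfield ℂ) (k d : ℕ) (hd : 1 ≤ d) (g : Polynomial ↥H)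
    (hmon : g.Monic) (hirr : Irreducible g) (hdeg : g.natDegree = k)
    (W : Matrix (Fin (d * k)) (Fin k) ℂ) (hWH : ∀ i j, W i j ∈ H)
    (hWv : ∀ lam : ℂ, (g.map H.subtype).IsRoot lam →
      W.mulVec (vvec k lam) = vvec (d * k) lam) :
    companion (d * k) ((g ^ d).map H.subtype) * W = W * companion k (g.map H.subtype) ∧
    ∀ j : ℕ, 1 ≤ j → j ≤ d - 1 →
      companion (d * k) ((g ^ d).map H.subtype) * (Smat (d * k) j * W)
        = Smat (d * k) (j - 1) * W + Smat (d * k) j * W * companion k (g.map H.subtype) := by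
  set e : Polynomial ℂ := g.map H.subtype with he_def
  have hk1 : 1 ≤ k := by
    rw [← hdeg]
    by_contra hcon
    push_neg at hcon
    have h0 : g.natDegree = 0 := by omega
    have h1 : g = 1 := (Polynomial.Monic.natDegree_eq_zero hmon).mp h0
    exact hirr.not_isUnit (h1 ▸ isUnit_one)
  have he_mon : e.Monic := hmon.map _
  have he_deg : e.natDegree = k := by rw [he_def, hmon.natDegree_map, hdeg]
  have he_sep : e.Separable := hirr.separable.map
  have he_ne : e ≠ 0 := he_mon.ne_zero
  have hQ_eq : (g ^ d).map H.subtype = e ^ d := by rw [he_def, Polynomial.map_pow]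
  have hQmon : ((g ^ d).map H.subtype).Monic := (hmon.pow _).map _
  have hQdeg : ((g ^ d).map H.subtype).natDegree = d * k := by
    rw [hQ_eq, he_mon.natDegree_pow, he_deg]
  have key : ∀ M : Matrix (Fin (d * k)) (Fin k) ℂ,
      (∀ lam : ℂ, e.IsRoot lam → M.mulVec (vvec k lam) = 0) → M = 0 := fun M hM =>
    matrix_zero_of_vanish e he_deg he_sep he_ne M hM hk1
  have hrootQ : ∀ lam : ℂ, e.IsRoot lam → ((g ^ d).map H.subtype).IsRoot lam := by
    intro lam h
    rw [IsRoot.def, hQ_eq, Polynomial.eval_pow]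
    rw [IsRoot.def] at h
    rw [h, zero_pow (by omega : d ≠ 0)]
  constructor
  · rw [← sub_eq_zero]
    apply key
    intro lam hroot
    rw [Matrix.sub_mulVec, ← Matrix.mulVec_mulVec, ← Matrix.mulVec_mulVec,
      hWv lam hroot, companion_mulVec_vvec_s6 _ hQdeg hQmon lam (hrootQ lam hroot),
      companion_mulVec_vvec_s6 e he_deg he_mon lam hroot, Matrix.mulVec_smul,
      hWv lam hroot, sub_self]
  · intro j hj1 hj2
    rw [← sub_eq_zero]
    apply key
    intro lam hroot
    have hdk : d ≤ d * k := Nat.le_mul_of_pos_right d (by omega)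
    have hjn : j ≤ d * k - 1 := by omega
    have h0 : (Polynomial.hasseDeriv j ((g ^ d).map H.subtype)).eval lam = 0 := by
      rw [hQ_eq]; exact hasse_eval_zero e he_ne lam hroot (by omega : j < d)
    rw [Matrix.sub_mulVec, Matrix.add_mulVec]
    simp only [← Matrix.mulVec_mulVec]
    rw [hWv lam hroot, companion_mulVec_vvec_s6 e he_deg he_mon lam hroot,
      Matrix.mulVec_smul, hWv lam hroot, Matrix.mulVec_smul,
      companion_smat_mulVec _ hQdeg hQmon j hj1 hjn lam h0, sub_self]
end
end

section
/- Let H be a subfield of ℂ and let A ∈ H^{n×n} be nonderogatory with characteristic polynomial p_A(λ) = g_1(λ)^{d_1} · g_2(λ)^{d_2} ⋯ g_r(λ)^{d_r}, where the g_j are pairwise distinct (hence pairwise coprime) monic polynomials irreducible over H of degrees k_j. Write A = T^{-1}(C(g_1,d_1) ⊕ ⋯ ⊕ C(g_r,d_r))T with T ∈ H^{n×n} invertible. Let p(λ) ∈ H[λ]. Then every solution X ∈ H^{n×n} of p(X) = A has the form X = T^{-1}(X_1 ⊕ X_2 ⊕ ⋯ ⊕ X_r)T, where each X_j is a d_j k_j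 × d_j k_j matrix commuting with C(g_j,d_j), and each X_j is block upper triangular Toeplitz with k_j×k_j blocks: its (i,i') block is zero for i > i' and depends only on i' − i. -/
open Polynomial Matrix Kronecker

noncomputable section

/-- The `d × d`-block upper triangular Toeplitz matrix with `k × k` blocks
`Xs 0, Xs 1, …, Xs (d-1)`: its `(i,i')` block is `Xs (i'-i)` for `i ≤ i'` and `0` otherwise. -/
def butt {k d : ℕ} (Xs : Fin d → Matrix (Fin k) (Fin k) ℂ) :
    Matrix (Fin d × Fin k) (Fin d × Fin k) ℂ :=
  fun p q => if _h : (p.1 : ℕ) ≤ (q.1 : ℕ)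
    then Xs ⟨(q.1 : ℕ) - (p.1 : ℕ), lt_of_le_of_lt (Nat.sub_le _ _) q.1.isLt⟩ p.2 q.2
    else 0




/-- `M ↦ M *ᵥ v` as a linear map. -/
def mulVecRight {n : ℕ} (v : Fin n → ℂ) :
    Matrix (Fin n) (Fin n) ℂ →ₗ[ℂ] (Fin n → ℂ) where
  toFun M := M *ᵥ v
  map_add' M N := Matrix.add_mulVec M N v
  map_smul' c M := Matrix.smul_mulVec c M v

theorem commutant_of_nonderog {n : ℕ} (A Y : Matrix (Fin n) (Fin n) ℂ)
    (hmin : minpoly ℂ A = A.charpoly) (hcomm : Y * A = A * Y) :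
    ∃ q : ℂ[X], Y = aeval A q := by
  rcases Nat.eq_zero_or_pos n with hn | hn
  · subst hn
    exact ⟨0, by ext i; exact i.elim0⟩
  set m : ℂ[X] := A.charpoly with hm
  have hmono : m.Monic := A.charpoly_monic
  have hmne : m ≠ 0 := hmono.ne_zero
  have hdeg : m.natDegree = n := by
    rw [hm, Matrix.charpoly_natDegree_eq_dim]
    simp
  have hma : aeval A m = 0 := A.aeval_self_charpoly
  have hdvd : ∀ s : ℂ[X], aeval A s = 0 → m ∣ s := by
    intro s hs
    rw [← hmin]
    exact minpoly.dvd ℂ A hs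
  -- the maximal proper divisors' kernels
  set R : Finset ℂ := m.roots.toFinset with hR
  have hker : ∀ lam : ℂ, lam ∈ R →
      LinearMap.ker (Matrix.toLin' (aeval A (m /ₘ (X - C lam)))) ≠ ⊤ := by
    intro lam hlam
    have hroot : m.IsRoot lam := by
      rw [hR] at hlam
      exact isRoot_of_mem_roots (Multiset.mem_toFinset.mp hlam)
    have hXd : (X - C lam) ∣ m := dvd_iff_isRoot.mpr hroot
    have hfac : m = (X - C lam) * (m /ₘ (X - C lam)) :=
      (mul_divByMonic_eq_iff_isRoot.mpr hroot).symm
    have hqne : m /ₘ (X - C lam) ≠ 0 := by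
      intro h0
      rw [h0, mul_zero] at hfac
      exact hmne hfac
    have hqdeg : (m /ₘ (X - C lam)).natDegree < n := by
      have := natDegree_divByMonic m (monic_X_sub_C lam)
      rw [hdeg] at this
      simp only [natDegree_X_sub_C] at this
      omega
    intro hk
    have hz : aeval A (m /ₘ (X - C lam)) = 0 := by
      have : Matrix.toLin' (aeval A (m /ₘ (X - C lam))) = 0 :=
        LinearMap.ker_eq_top.mp hk
      have := Matrix.toLin'.injective (by rw [this, map_zero] :
        Matrix.toLin' (aeval A (m /ₘ (X - C lam))) = Matrix.toLin' 0)
      exact this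
    have := Polynomial.natDegree_le_of_dvd (hdvd _ hz) hqne
    omega
  -- a vector outside all the kernels
  obtain ⟨v, hv⟩ : ∃ v : Fin n → ℂ, ∀ lam : ℂ, lam ∈ R →
      (aeval A (m /ₘ (X - C lam))) *ᵥ v ≠ 0 := by
    by_contra hc
    push_neg at hc
    have hcov : ⋃ lam : R, ((LinearMap.ker
        (Matrix.toLin' (aeval A (m /ₘ (X - C (lam : ℂ)))))) : Set (Fin n → ℂ))
        = Set.univ := by
      ext v
      simp only [Set.mem_iUnion, Set.mem_univ, iff_true, SetLike.mem_coe,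
        LinearMap.mem_ker]
      obtain ⟨lam, hlam, h0⟩ := hc v
      exact ⟨⟨lam, hlam⟩, by simpa [Matrix.toLin'_apply] using h0⟩
    obtain ⟨lam, hlam⟩ := Subspace.exists_eq_top_of_iUnion_eq_univ hcov
    exact hker lam lam.2 hlam
  -- v is a cyclic vector: its annihilator is (m)
  have hann : ∀ s : ℂ[X], (aeval A s) *ᵥ v = 0 → m ∣ s := by
    intro s hs
    by_contra hns
    set t : ℂ[X] := EuclideanDomain.gcd m s with ht
    have htv : (aeval A t) *ᵥ v = 0 := by
      have hab : t = m * EuclideanDomain.gcdA m s + s * EuclideanDomain.gcdB m s :=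
        EuclideanDomain.gcd_eq_gcd_ab m s
      rw [hab]
      rw [map_add, Matrix.add_mulVec]
      rw [_root_.map_mul, hma, zero_mul, Matrix.zero_mulVec]
      rw [mul_comm s, _root_.map_mul, ← Matrix.mulVec_mulVec, hs, Matrix.mulVec_zero]
      simp
    have htm : t ∣ m := EuclideanDomain.gcd_dvd_left m s
    have hts : t ∣ s := EuclideanDomain.gcd_dvd_right m s
    have hmt : ¬ m ∣ t := fun h => hns (h.trans hts)
    obtain ⟨w, hw⟩ := htm
    have hwu : ¬ IsUnit w := by
      intro hu
      obtain ⟨w', hw'⟩ := hu.exists_right_inv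
      exact hmt ⟨w', by rw [hw, mul_assoc, hw', mul_one]⟩
    have hwne : w ≠ 0 := by
      intro h0; rw [h0, mul_zero] at hw; exact hmne hw
    have hwdeg : 0 < w.degree := by
      by_contra hle
      push_neg at hle
      have : w.degree = 0 := le_antisymm hle (zero_le_degree_iff.mpr hwne)
      exact hwu (isUnit_iff_degree_eq_zero.mpr this)
    obtain ⟨lam, hlam⟩ := Complex.exists_root hwdeg
    have hmroot : m.IsRoot lam := by
      rw [hw]; simp [IsRoot, hlam.eq_zero]
    have hlamR : lam ∈ R := Multiset.mem_toFinset.mpr (mem_roots'.mpr ⟨hmne, hmroot⟩)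
    -- t divides m /ₘ (X - C lam)
    obtain ⟨u, hu⟩ := dvd_iff_isRoot.mpr hlam
    have hfac : m = (X - C lam) * (m /ₘ (X - C lam)) :=
      (mul_divByMonic_eq_iff_isRoot.mpr hmroot).symm
    have hqu : m /ₘ (X - C lam) = t * u := by
      have h1 : (X - C lam) * (m /ₘ (X - C lam)) = (X - C lam) * (t * u) := by
        rw [← hfac, hw, hu]; ring
      exact mul_left_cancel₀ (X_sub_C_ne_zero lam) h1
    have : (aeval A (m /ₘ (X - C lam))) *ᵥ v = 0 := by
      rw [hqu, mul_comm t u, _root_.map_mul, ← Matrix.mulVec_mulVec, htv, Matrix.mulVec_zero]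
    exact hv lam hlamR this
  -- the powers A^i v form a basis
  set f : Fin n → (Fin n → ℂ) := fun i => (A ^ (i : ℕ)) *ᵥ v with hf
  have key : ∀ c : Fin n → ℂ, ∑ i, c i • f i = 0 → ∀ i, c i = 0 := by
    intro c hc
    by_contra hcn
    push_neg at hcn
    obtain ⟨i₀, hi₀⟩ := hcn
    set s : ℂ[X] := ∑ i : Fin n, C (c i) * X ^ (i : ℕ) with hsdef
    have hsv : (aeval A s) *ᵥ v = ∑ i, c i • f i := by
      have h1 : aeval A s = ∑ i : Fin n, c i • A ^ (i : ℕ) := by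
        rw [hsdef, map_sum]
        refine Finset.sum_congr rfl fun i _ => ?_
        rw [_root_.map_mul, aeval_C, map_pow, aeval_X, Algebra.smul_def]
      rw [h1]
      calc (∑ i : Fin n, c i • A ^ (i : ℕ)) *ᵥ v
          = mulVecRight v (∑ i : Fin n, c i • A ^ (i : ℕ)) := rfl
        _ = ∑ i : Fin n, mulVecRight v (c i • A ^ (i : ℕ)) := map_sum _ _ _
        _ = ∑ i, c i • f i := by
            refine Finset.sum_congr rfl fun i _ => ?_
            rw [LinearMap.map_smul]; rfl
    have hsv0 : (aeval A s) *ᵥ v = 0 := by rw [hsv, hc]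
    have hsne : s ≠ 0 := by
      intro h0
      have : s.coeff (i₀ : ℕ) = c i₀ := by
        rw [hsdef, finset_sum_coeff]
        rw [Finset.sum_congr rfl (fun i _ => by
          rw [coeff_C_mul, coeff_X_pow])]
        rw [Finset.sum_eq_single i₀]
        · simp
        · intro i _ hne
          rw [if_neg (fun h => hne (Fin.ext h).symm), mul_zero]
        · simp
      rw [h0] at this
      simp at this
      exact hi₀ this.symm
    have hdle : s.natDegree < n := by
      have : s.natDegree ≤ n - 1 := by
        apply Polynomial.natDegree_sum_le_of_forall_le
        intro i _
        have h4 : (C (c i) * X ^ (i : ℕ)).natDegree ≤ (i : ℕ) := by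
          calc (C (c i) * X ^ (i : ℕ)).natDegree ≤ (X ^ (i:ℕ)).natDegree :=
                natDegree_C_mul_le (c i) (X ^ (i : ℕ))
            _ = (i : ℕ) := natDegree_X_pow _
        have := i.isLt
        omega
      omega
    have := Polynomial.natDegree_le_of_dvd (hann s hsv0) hsne
    omega
  have hli : LinearIndependent ℂ f := Fintype.linearIndependent_iff.mpr key
  haveI : Nonempty (Fin n) := ⟨⟨0, hn⟩⟩
  have hcard : Fintype.card (Fin n) = Module.finrank ℂ (Fin n → ℂ) := by
    simp [Module.finrank_fin_fun]
  set b : Module.Basis (Fin n) ℂ (Fin n → ℂ) := basisOfLinearIndependentOfCardEqFinrank hli hcard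
  have hb : ⇑b = f := coe_basisOfLinearIndependentOfCardEqFinrank hli hcard
  -- expand Y v in the basis
  set c' : Fin n → ℂ := fun i => b.repr (Y *ᵥ v) i with hc'
  set q : ℂ[X] := ∑ i : Fin n, C (c' i) * X ^ (i : ℕ) with hq
  have hqv : (aeval A q) *ᵥ v = Y *ᵥ v := by
    have h1 : aeval A q = ∑ i : Fin n, c' i • A ^ (i : ℕ) := by
      rw [hq, map_sum]
      refine Finset.sum_congr rfl fun i _ => ?_
      rw [_root_.map_mul, aeval_C, map_pow, aeval_X, Algebra.smul_def]
    rw [h1]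
    have h3 : ∑ i, c' i • f i = Y *ᵥ v := by
      have h5 := b.sum_repr (Y *ᵥ v)
      rw [hb] at h5
      exact h5
    calc (∑ i : Fin n, c' i • A ^ (i : ℕ)) *ᵥ v
        = mulVecRight v (∑ i : Fin n, c' i • A ^ (i : ℕ)) := rfl
      _ = ∑ i : Fin n, mulVecRight v (c' i • A ^ (i : ℕ)) := map_sum _ _ _
      _ = ∑ i, c' i • f i := by
          refine Finset.sum_congr rfl fun i _ => ?_
          rw [LinearMap.map_smul]; rfl
      _ = Y *ᵥ v := h3
  refine ⟨q, ?_⟩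
  have hcA : Commute Y A := hcomm
  have hmain : ∀ i : Fin n, Y *ᵥ f i = (aeval A q) *ᵥ f i := by
    intro i
    have h1 : Y * A ^ (i : ℕ) = A ^ (i : ℕ) * Y := (hcA.pow_right (i : ℕ)).eq
    have h2 : aeval A q * A ^ (i : ℕ) = A ^ (i : ℕ) * aeval A q := by
      have := (Commute.refl A).pow_right (i : ℕ)
      calc aeval A q * A ^ (i : ℕ) = aeval A (q * X ^ (i : ℕ)) := by
            rw [_root_.map_mul, map_pow, aeval_X]
        _ = aeval A (X ^ (i : ℕ) * q) := by rw [mul_comm]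
        _ = A ^ (i : ℕ) * aeval A q := by rw [_root_.map_mul, map_pow, aeval_X]
    calc Y *ᵥ f i = (Y * A ^ (i : ℕ)) *ᵥ v := by rw [hf]; rw [Matrix.mulVec_mulVec]
      _ = (A ^ (i : ℕ) * Y) *ᵥ v := by rw [h1]
      _ = A ^ (i : ℕ) *ᵥ (Y *ᵥ v) := by rw [Matrix.mulVec_mulVec]
      _ = A ^ (i : ℕ) *ᵥ ((aeval A q) *ᵥ v) := by rw [hqv]
      _ = (A ^ (i : ℕ) * aeval A q) *ᵥ v := by rw [Matrix.mulVec_mulVec]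
      _ = (aeval A q * A ^ (i : ℕ)) *ᵥ v := by rw [h2]
      _ = (aeval A q) *ᵥ f i := by rw [hf]; rw [Matrix.mulVec_mulVec]
  have : Matrix.toLin' Y = Matrix.toLin' (aeval A q) := by
    apply b.ext
    intro i
    rw [hb]
    simpa [Matrix.toLin'_apply] using hmain i
  exact Matrix.toLin'.injective this

def IsButt {k d : ℕ} (M : Matrix (Fin d × Fin k) (Fin d × Fin k) ℂ) : Prop :=
  ∃ Xs, M = butt Xs

lemma isButt_one {k d : ℕ} : IsButt (1 : Matrix (Fin d × Fin k) (Fin d × Fin k) ℂ) := by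
  refine ⟨fun m => if (m : ℕ) = 0 then 1 else 0, ?_⟩
  ext ⟨i, s⟩ ⟨i', t⟩
  simp only [butt, Matrix.one_apply, Prod.mk.injEq]
  by_cases hii : (i : ℕ) ≤ (i' : ℕ)
  · rw [dif_pos hii]
    by_cases h0 : (i' : ℕ) - (i : ℕ) = 0
    · have : i = i' := Fin.ext (by omega)
      simp [h0, this, Matrix.one_apply]
    · have : ¬ (i = i' ∧ s = t) := fun ⟨h, _⟩ => h0 (by rw [h]; omega)
      simp only [h0, if_neg h0]
      rw [if_neg this]
      simp
  · rw [dif_neg hii]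
    have : ¬ (i = i' ∧ s = t) := fun ⟨h, _⟩ => hii (by rw [h])
    rw [if_neg this]

lemma isButt_smul {k d : ℕ} {M : Matrix (Fin d × Fin k) (Fin d × Fin k) ℂ} (c : ℂ)
    (h : IsButt M) : IsButt (c • M) := by
  obtain ⟨Xs, rfl⟩ := h
  refine ⟨fun m => c • Xs m, ?_⟩
  ext ⟨i, s⟩ ⟨i', t⟩
  simp only [butt, Matrix.smul_apply]
  by_cases hii : (i : ℕ) ≤ (i' : ℕ)
  · rw [dif_pos hii, dif_pos hii]
  · rw [dif_neg hii, dif_neg hii]; simp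

lemma isButt_add {k d : ℕ} {M N : Matrix (Fin d × Fin k) (Fin d × Fin k) ℂ}
    (hM : IsButt M) (hN : IsButt N) : IsButt (M + N) := by
  obtain ⟨Xs, rfl⟩ := hM
  obtain ⟨Ys, rfl⟩ := hN
  refine ⟨fun m => Xs m + Ys m, ?_⟩
  ext ⟨i, s⟩ ⟨i', t⟩
  simp only [butt, Matrix.add_apply]
  by_cases hii : (i : ℕ) ≤ (i' : ℕ)
  · rw [dif_pos hii, dif_pos hii, dif_pos hii]
  · rw [dif_neg hii, dif_neg hii, dif_neg hii]; simp

lemma isButt_mul {k d : ℕ} {M N : Matrix (Fin d × Fin k) (Fin d × Fin k) ℂ}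
    (hM : IsButt M) (hN : IsButt N) : IsButt (M * N) := by
  obtain ⟨Xs, rfl⟩ := hM
  obtain ⟨Ys, rfl⟩ := hN
  refine ⟨fun m => fun s t => ∑ a : Fin d,
    if h : (a : ℕ) ≤ (m : ℕ) then
      (Xs a * Ys ⟨(m : ℕ) - (a : ℕ), lt_of_le_of_lt (Nat.sub_le _ _) m.isLt⟩) s t
    else 0, ?_⟩
  ext ⟨i, s⟩ ⟨i', t⟩
  rw [Matrix.mul_apply, Fintype.sum_prod_type]
  -- collapse the inner sum over u
  have hinner : ∀ l : Fin d,
      (∑ u : Fin k, butt Xs (i, s) (l, u) * butt Ys (l, u) (i', t)) =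
      if h : (i : ℕ) ≤ (l : ℕ) ∧ (l : ℕ) ≤ (i' : ℕ) then
        (Xs ⟨(l : ℕ) - (i : ℕ), lt_of_le_of_lt (Nat.sub_le _ _) l.isLt⟩ *
         Ys ⟨(i' : ℕ) - (l : ℕ), lt_of_le_of_lt (Nat.sub_le _ _) i'.isLt⟩) s t
      else 0 := by
    intro l
    by_cases h1 : (i : ℕ) ≤ (l : ℕ)
    · by_cases h2 : (l : ℕ) ≤ (i' : ℕ)
      · rw [dif_pos ⟨h1, h2⟩, Matrix.mul_apply]
        refine Finset.sum_congr rfl fun u _ => ?_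
        simp only [butt]
        rw [dif_pos h1, dif_pos h2]
      · rw [dif_neg (fun h => h2 h.2)]
        refine Finset.sum_eq_zero fun u _ => ?_
        simp only [butt]
        rw [dif_neg h2, mul_zero]
    · rw [dif_neg (fun h => h1 h.1)]
      refine Finset.sum_eq_zero fun u _ => ?_
      simp only [butt]
      rw [dif_neg h1, zero_mul]
  rw [Finset.sum_congr rfl fun l _ => hinner l]
  simp only [butt]
  by_cases hii : (i : ℕ) ≤ (i' : ℕ)
  · rw [dif_pos hii]
    -- reindex: l = i + x
    have hL : ∀ l : Fin d, (if h : (i : ℕ) ≤ (l : ℕ) ∧ (l : ℕ) ≤ (i' : ℕ) then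
        (Xs ⟨(l : ℕ) - (i : ℕ), lt_of_le_of_lt (Nat.sub_le _ _) l.isLt⟩ *
         Ys ⟨(i' : ℕ) - (l : ℕ), lt_of_le_of_lt (Nat.sub_le _ _) i'.isLt⟩) s t
        else 0) =
        (if (i : ℕ) ≤ (l : ℕ) ∧ (l : ℕ) ≤ (i' : ℕ) then
        (Xs ⟨(l : ℕ) - (i : ℕ), lt_of_le_of_lt (Nat.sub_le _ _) l.isLt⟩ *
         Ys ⟨(i' : ℕ) - (l : ℕ), lt_of_le_of_lt (Nat.sub_le _ _) i'.isLt⟩) s t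
        else 0) := fun l => dite_eq_ite ..
    rw [Finset.sum_congr rfl fun l _ => hL l]
    have hR : ∀ a : Fin d, (if h : (a : ℕ) ≤ (i' : ℕ) - (i : ℕ) then
        (Xs a * Ys ⟨(i' : ℕ) - (i : ℕ) - (a : ℕ), by
          exact lt_of_le_of_lt (Nat.sub_le _ _)
            (lt_of_le_of_lt (Nat.sub_le _ _) i'.isLt)⟩) s t else 0) =
        (if (a : ℕ) ≤ (i' : ℕ) - (i : ℕ) then
        (Xs a * Ys ⟨(i' : ℕ) - (i : ℕ) - (a : ℕ), by
          exact lt_of_le_of_lt (Nat.sub_le _ _)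
            (lt_of_le_of_lt (Nat.sub_le _ _) i'.isLt)⟩) s t else 0) := fun a => dite_eq_ite ..
    rw [Finset.sum_congr rfl fun a _ => hR a]
    rw [← Finset.sum_filter, ← Finset.sum_filter]
    refine Finset.sum_nbij'
      (i := fun l => (⟨(l : ℕ) - (i : ℕ), lt_of_le_of_lt (Nat.sub_le _ _) l.isLt⟩ : Fin d))
      (j := fun a => if h : (a : ℕ) + (i : ℕ) < d then (⟨(a : ℕ) + (i : ℕ), h⟩ : Fin d) else a)
      ?_ ?_ ?_ ?_ ?_
    · intro l hl
      simp only [Finset.mem_filter, Finset.mem_univ, true_and] at hl ⊢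
      omega
    · intro a ha
      simp only [Finset.mem_filter, Finset.mem_univ, true_and] at ha ⊢
      have hlt : (a : ℕ) + (i : ℕ) < d := by
        have := i'.isLt; omega
      rw [dif_pos hlt]
      simp only []
      omega
    · intro l hl
      simp only [Finset.mem_filter, Finset.mem_univ, true_and] at hl
      dsimp only
      have hlt : (l : ℕ) - (i : ℕ) + (i : ℕ) < d := by
        have := l.isLt; omega
      rw [dif_pos hlt]
      apply Fin.ext
      dsimp only
      omega
    · intro a ha
      simp only [Finset.mem_filter, Finset.mem_univ, true_and] at ha
      have hlt : (a : ℕ) + (i : ℕ) < d := by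
        have := i'.isLt; omega
      rw [dif_pos hlt]
      apply Fin.ext
      dsimp only
      omega
    · intro l hl
      simp only [Finset.mem_filter, Finset.mem_univ, true_and] at hl
      have hy : (⟨(i' : ℕ) - (l : ℕ), lt_of_le_of_lt (Nat.sub_le _ _) i'.isLt⟩ : Fin d)
          = ⟨(i' : ℕ) - (i : ℕ) - ((l : ℕ) - (i : ℕ)),
              lt_of_le_of_lt (Nat.sub_le _ _)
                (lt_of_le_of_lt (Nat.sub_le _ _) i'.isLt)⟩ := by
        apply Fin.ext; dsimp only; omega
      dsimp only
      rw [← hy]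
  · rw [dif_neg hii]
    refine Finset.sum_eq_zero fun l _ => ?_
    rw [dif_neg (fun h => hii (le_trans h.1 h.2))]

lemma isButt_CJ {k d : ℕ} (g : Polynomial ℂ) : IsButt (CJ k g d) := by
  refine ⟨fun m => if (m : ℕ) = 0 then companion k g
    else if (m : ℕ) = 1 then 1 else 0, ?_⟩
  ext ⟨i, s⟩ ⟨i', t⟩
  simp only [CJ, butt, Matrix.add_apply, Matrix.kroneckerMap_apply, superdiag,
    Matrix.one_apply]
  by_cases hii : (i : ℕ) ≤ (i' : ℕ)
  · rw [dif_pos hii]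
    by_cases h0 : (i' : ℕ) - (i : ℕ) = 0
    · have he : i = i' := Fin.ext (by omega)
      have hne : ¬ ((i : ℕ) + 1 = (i' : ℕ)) := by omega
      simp [h0, he, hne]
    · by_cases h1 : (i' : ℕ) - (i : ℕ) = 1
      · have he : (i : ℕ) + 1 = (i' : ℕ) := by omega
        have hne : i ≠ i' := fun h => by rw [h] at h1; omega
        simp [h0, h1, he, hne, Matrix.one_apply]
      · have hne : i ≠ i' := fun h => by rw [h] at h0; omega
        have hne2 : ¬ ((i : ℕ) + 1 = (i' : ℕ)) := by omega
        simp [h0, h1, hne, hne2]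
  · rw [dif_neg hii]
    have hne : i ≠ i' := fun h => hii (by rw [h])
    have hne2 : ¬ ((i : ℕ) + 1 = (i' : ℕ)) := by omega
    simp [hne, hne2]

lemma isButt_aeval_CJ {k d : ℕ} (g : Polynomial ℂ) (q : ℂ[X]) :
    IsButt (aeval (CJ k g d) q) := by
  induction q using Polynomial.induction_on with
  | C a =>
      rw [aeval_C]
      have : (algebraMap ℂ (Matrix (Fin d × Fin k) (Fin d × Fin k) ℂ)) a
          = a • (1 : Matrix (Fin d × Fin k) (Fin d × Fin k) ℂ) :=
        Algebra.algebraMap_eq_smul_one a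
      rw [this]
      exact isButt_smul a isButt_one
  | add p q hp hq =>
      rw [map_add]
      exact isButt_add hp hq
  | monomial n a h =>
      have : C a * X ^ (n + 1) = C a * X ^ n * X := by ring
      rw [this, _root_.map_mul, aeval_X]
      exact isButt_mul h (isButt_CJ g)


/-- Conjugation by an invertible matrix as an algebra homomorphism. -/
def conjAlgHom {n : ℕ} (T : Matrix (Fin n) (Fin n) ℂ) (hTu : IsUnit T.det) :
    Matrix (Fin n) (Fin n) ℂ →ₐ[ℂ] Matrix (Fin n) (Fin n) ℂ where
  toFun M := T⁻¹ * M * T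
  map_one' := by
    show T⁻¹ * 1 * T = 1
    rw [mul_one, Matrix.nonsing_inv_mul T hTu]
  map_mul' M N := by
    show T⁻¹ * (M * N) * T = (T⁻¹ * M * T) * (T⁻¹ * N * T)
    have h : T * T⁻¹ = 1 := Matrix.mul_nonsing_inv T hTu
    calc T⁻¹ * (M * N) * T = T⁻¹ * M * (T * T⁻¹) * N * T := by
          rw [h, mul_one]
          simp only [mul_assoc]
      _ = (T⁻¹ * M * T) * (T⁻¹ * N * T) := by
          simp only [mul_assoc]
  map_zero' := by
    show T⁻¹ * 0 * T = 0
    simp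
  map_add' M N := by
    show T⁻¹ * (M + N) * T = T⁻¹ * M * T + T⁻¹ * N * T
    rw [Matrix.mul_add, Matrix.add_mul]
  commutes' c := by
    show T⁻¹ * algebraMap ℂ _ c * T = algebraMap ℂ _ c
    simp only [Algebra.algebraMap_eq_smul_one]
    rw [Matrix.mul_smul, mul_one, Matrix.smul_mul, Matrix.nonsing_inv_mul T hTu]

/-- `blockDiagonal'` as an algebra homomorphism. -/
def blockDiagonal'AlgHomC {r : ℕ} (m' : Fin r → Type*) [∀ j, Fintype (m' j)]
    [∀ j, DecidableEq (m' j)] :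
    (∀ j, Matrix (m' j) (m' j) ℂ) →ₐ[ℂ] Matrix (Σ j, m' j) (Σ j, m' j) ℂ :=
  { Matrix.blockDiagonal'RingHom m' ℂ with
    commutes' := fun c => by
      simp only [Algebra.algebraMap_eq_smul_one]
      show Matrix.blockDiagonal' (c • (1 : ∀ j, Matrix (m' j) (m' j) ℂ)) = _
      rw [Matrix.blockDiagonal'_smul, Matrix.blockDiagonal'_one] }



theorem CJ_comm_aeval {k d : ℕ} (g : Polynomial ℂ) (q : ℂ[X]) :
    aeval (CJ k g d) q * CJ k g d = CJ k g d * aeval (CJ k g d) q := by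
  calc aeval (CJ k g d) q * CJ k g d = aeval (CJ k g d) (q * X) := by
        rw [_root_.map_mul, aeval_X]
    _ = aeval (CJ k g d) (X * q) := by rw [mul_comm]
    _ = CJ k g d * aeval (CJ k g d) q := by rw [_root_.map_mul, aeval_X]

/-- Let `A ∈ H^{n×n}` be nonderogatory with characteristic polynomial
`g_1^{d_1} ⋯ g_r^{d_r}` (the `g_j` pairwise distinct monic irreducible over `H` of degree
`k_j`), and write `A = T⁻¹ (C(g_1,d_1) ⊕ ⋯ ⊕ C(g_r,d_r)) T` with `T` invertible over `H`.
Then every solution `X ∈ H^{n×n}` of `p(X) = A` has the form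
`X = T⁻¹ (X_1 ⊕ ⋯ ⊕ X_r) T`, where each `X_j` commutes with `C(g_j,d_j)` and is a block
upper triangular Toeplitz matrix with `k_j × k_j` blocks. -/
theorem stmt_8 (H : Subfield ℂ) (n r : ℕ) (k d : Fin r → ℕ)
    (g : Fin r → Polynomial ↥H)
    (hmon : ∀ j, (g j).Monic) (hirr : ∀ j, Irreducible (g j))
    (hdeg : ∀ j, (g j).natDegree = k j) (hdpos : ∀ j, 0 < d j)
    (hdist : ∀ i j, i ≠ j → g i ≠ g j)
    (A : Matrix (Fin n) (Fin n) ℂ) (hAH : ∀ i j, A i j ∈ H)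
    (hnonderog : minpoly ℂ A = A.charpoly)
    (hchar : A.charpoly = ∏ j, ((g j).map H.subtype) ^ (d j))
    (e : (Σ j : Fin r, Fin (d j) × Fin (k j)) ≃ Fin n)
    (T : Matrix (Fin n) (Fin n) ℂ) (hTH : ∀ i j, T i j ∈ H) (hTu : IsUnit T.det)
    (hAT : A = T⁻¹ * (Matrix.reindex e e (Matrix.blockDiagonal'
        fun j => CJ (k j) ((g j).map H.subtype) (d j))) * T)
    (p : Polynomial ↥H)
    (X : Matrix (Fin n) (Fin n) ℂ) (hXH : ∀ i j, X i j ∈ H)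
    (hpX : Polynomial.aeval X (p.map H.subtype) = A) :
    ∃ Xs : ∀ j : Fin r, Fin (d j) → Matrix (Fin (k j)) (Fin (k j)) ℂ,
      X = T⁻¹ * (Matrix.reindex e e (Matrix.blockDiagonal'
          fun j => butt (Xs j))) * T ∧
      ∀ j, butt (Xs j) * CJ (k j) ((g j).map H.subtype) (d j)
          = CJ (k j) ((g j).map H.subtype) (d j) * butt (Xs j) := by
  classical
  -- X commutes with A
  have hXA : X * A = A * X := by
    rw [← hpX]
    calc X * aeval X (p.map H.subtype)
        = aeval X (Polynomial.X * (p.map H.subtype)) := by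
          rw [_root_.map_mul, aeval_X]
      _ = aeval X ((p.map H.subtype) * Polynomial.X) := by rw [mul_comm]
      _ = aeval X (p.map H.subtype) * X := by rw [_root_.map_mul, aeval_X]
  obtain ⟨q, hq⟩ := commutant_of_nonderog A X hnonderog hXA
  set CJs : ∀ j : Fin r, Matrix (Fin (d j) × Fin (k j)) (Fin (d j) × Fin (k j)) ℂ :=
    fun j => CJ (k j) ((g j).map H.subtype) (d j) with hCJs
  set Φ : (∀ j : Fin r, Matrix (Fin (d j) × Fin (k j)) (Fin (d j) × Fin (k j)) ℂ)
      →ₐ[ℂ] Matrix (Fin n) (Fin n) ℂ :=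
    ((Matrix.reindexAlgEquiv ℂ ℂ e).toAlgHom.comp
      (blockDiagonal'AlgHomC (fun j : Fin r => Fin (d j) × Fin (k j)))) with hΦ
  have hΦapp : ∀ Ms, Φ Ms = Matrix.reindex e e (Matrix.blockDiagonal' Ms) := fun _ => rfl
  have hBA : conjAlgHom T hTu (Φ CJs) = A := by
    rw [hAT]; rfl
  have hXB : X = T⁻¹ * (aeval (Φ CJs) q) * T := by
    rw [hq, ← hBA, aeval_algHom_apply]
    rfl
  have hBev : aeval (Φ CJs) q
      = Matrix.reindex e e (Matrix.blockDiagonal' fun j => aeval (CJs j) q) := by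
    have hfe : (aeval CJs q : ∀ j : Fin r,
        Matrix (Fin (d j) × Fin (k j)) (Fin (d j) × Fin (k j)) ℂ)
        = fun j => aeval (CJs j) q := by
      funext j
      exact (aeval_algHom_apply (Pi.evalAlgHom ℂ (fun j : Fin r =>
        Matrix (Fin (d j) × Fin (k j)) (Fin (d j) × Fin (k j)) ℂ) j) CJs q).symm
    rw [aeval_algHom_apply, hΦapp, hfe]
  have hbutt : ∀ j : Fin r, IsButt (aeval (CJs j) q) := fun j =>
    isButt_aeval_CJ ((g j).map H.subtype) q
  choose Xs hXs using hbutt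
  refine ⟨Xs, ?_, ?_⟩
  · rw [hXB, hBev]
    have hfe : (fun j => aeval (CJs j) q) = fun j => butt (Xs j) := funext hXs
    rw [hfe]
  · intro j
    rw [← hXs j]
    exact CJ_comm_aeval ((g j).map H.subtype) q
end
end

section
/- Let D be a k×k complex diagonal matrix whose diagonal entries λ_1, …, λ_k are pairwise distinct, let d ≥ 1, and let D_d = I_d ⊗ D + N_d ⊗ I_k be the dk×dk block matrix with D in every diagonal block and I_k in every superdiagonal block. If Y ∈ ℂ^{dk×dk} commutes with D_d, then Y is block upper triangular Toeplitz with k×k blocks, i.e. there exist matrices Y_1, …, Y_d ∈ ℂ^{k×k} such that the (i,i') block of Y equals Y_{i'−i+1} when i ≤ i' and 0 when i > i'; moreover each Y_t is a diagonal matrix. -/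
open Polynomial Matrix Kronecker

noncomputable section

/-!
Write `N = superdiag d`, `λ_a = D a a` and `E_ab` for the `d × d` matrix `Y (·, a) (·, b)`.
Reading the commutation relation on the rows `(·, a)` and columns `(·, b)` gives
`N E_ab - E_ab N = (λ_b - λ_a) E_ab`. For `a ≠ b` this makes `E_ab` an eigenvector of the
nilpotent operator `ad N` for the nonzero eigenvalue `λ_b - λ_a`, so `E_ab = 0`. For `a = b`
it says that `E_aa` commutes with the shift `N`, i.e. `E_aa (i + 1) j = E_aa i (j - 1)`,
which forces `E_aa` to be upper triangular Toeplitz.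
-/

theorem eq_zero_of_mul_sub_mul_eq_smul {K A : Type*} [Field K] [Ring A] [Algebra K A]
    {N E : A} (hN : IsNilpotent N) {c : K} (hc : c ≠ 0) (h : N * E - E * N = c • E) :
    E = 0 := by
  by_contra hE
  let ad : Module.End K A := LinearMap.mulLeft K N - LinearMap.mulRight K N
  have had : IsNilpotent ad := (LinearMap.commute_mulLeft_right N N).isNilpotent_sub
    (by rwa [LinearMap.isNilpotent_mulLeft_iff]) (by rwa [LinearMap.isNilpotent_mulRight_iff])
  have hev : ad.HasEigenvalue c :=
    Module.End.hasEigenvalue_of_hasEigenvector ⟨Module.End.mem_eigenspace_iff.mpr h, hE⟩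
  exact hc (hev.isNilpotent_of_isNilpotent had).eq_zero

section Kronecker

variable {R m n : Type*} [Fintype m] [Fintype n] [DecidableEq n]

theorem submatrix_mul_kronecker_one [Semiring R] (Y : Matrix (m × n) (m × n) R)
    (A : Matrix m m R) (a b : n) :
    (Y * (A ⊗ₖ (1 : Matrix n n R))).submatrix (·, a) (·, b)
      = Y.submatrix (·, a) (·, b) * A := by
  ext i j
  simp [mul_apply, Fintype.sum_prod_type, one_apply]

theorem submatrix_kronecker_one_mul [Semiring R] (Y : Matrix (m × n) (m × n) R)
    (A : Matrix m m R) (a b : n) :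
    ((A ⊗ₖ (1 : Matrix n n R)) * Y).submatrix (·, a) (·, b)
      = A * Y.submatrix (·, a) (·, b) := by
  ext i j
  simp [mul_apply, Fintype.sum_prod_type, one_apply]

variable [DecidableEq m]

theorem submatrix_mul_one_kronecker [CommSemiring R] (Y : Matrix (m × n) (m × n) R)
    {D : Matrix n n R} (hD : D.IsDiag) (a b : n) :
    (Y * ((1 : Matrix m m R) ⊗ₖ D)).submatrix (·, a) (·, b)
      = D b b • Y.submatrix (·, a) (·, b) := by
  ext i j
  rw [← hD.diagonal_diag]
  simp [mul_apply, Fintype.sum_prod_type, one_apply, diagonal_apply, mul_comm]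

theorem submatrix_one_kronecker_mul [CommSemiring R] (Y : Matrix (m × n) (m × n) R)
    {D : Matrix n n R} (hD : D.IsDiag) (a b : n) :
    (((1 : Matrix m m R) ⊗ₖ D) * Y).submatrix (·, a) (·, b)
      = D a a • Y.submatrix (·, a) (·, b) := by
  ext i j
  rw [← hD.diagonal_diag]
  simp [mul_apply, Fintype.sum_prod_type, one_apply, diagonal_apply]

end Kronecker

section Superdiag

variable {d : ℕ}

theorem superdiag_mul_apply (E : Matrix (Fin d) (Fin d) ℂ) (i j : Fin d) :
    (superdiag d * E) i j = if h : (i : ℕ) + 1 < d then E ⟨i + 1, h⟩ j else 0 := by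
  rw [mul_apply]
  split_ifs with h
  · rw [Finset.sum_eq_single ⟨i + 1, h⟩ (fun x _ hx => by
      rw [superdiag, if_neg (fun hx' => hx (Fin.ext hx'.symm)), zero_mul])
      (by simp)]
    simp [superdiag]
  · exact Finset.sum_eq_zero fun x _ => by rw [superdiag, if_neg (by omega), zero_mul]

theorem mul_superdiag_apply (E : Matrix (Fin d) (Fin d) ℂ) (i j : Fin d) :
    (E * superdiag d) i j = if h : 0 < (j : ℕ) then E i ⟨j - 1, by omega⟩ else 0 := by
  rw [mul_apply]
  split_ifs with h
  · rw [Finset.sum_eq_single ⟨j - 1, by omega⟩ (fun x _ hx => by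
      rw [superdiag, if_neg (fun hx' => hx (Fin.ext (by simp; omega))), mul_zero])
      (by simp)]
    simp [superdiag]
    omega
  · exact Finset.sum_eq_zero fun x _ => by rw [superdiag, if_neg (by omega), mul_zero]

theorem superdiag_pow_apply (m : ℕ) (i j : Fin d) :
    (superdiag d ^ m) i j = if (i : ℕ) + m = j then 1 else 0 := by
  induction m generalizing j with
  | zero => simp [one_apply, Fin.ext_iff]
  | succ m ih =>
    rw [pow_succ, mul_superdiag_apply]
    by_cases hj : 0 < (j : ℕ)
    · rw [dif_pos hj, ih]
      exact if_congr (by simp; omega) rfl rfl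
    · rw [dif_neg hj, if_neg (by omega)]

theorem isNilpotent_superdiag : IsNilpotent (superdiag d) :=
  ⟨d, by ext i j; rw [superdiag_pow_apply, if_neg (by omega), Matrix.zero_apply]⟩

theorem apply_eq_of_commute_superdiag {E : Matrix (Fin d) (Fin d) ℂ}
    (h : Commute (superdiag d) E) (i j : Fin d) :
    E i j = if _ : (i : ℕ) ≤ j then E ⟨0, i.pos⟩ ⟨j - i, by omega⟩ else 0 := by
  have shift : ∀ (i : ℕ) (hi : i + 1 < d) (j : Fin d),
      E ⟨i + 1, hi⟩ j
        = if _ : 0 < (j : ℕ) then E ⟨i, by omega⟩ ⟨j - 1, by omega⟩ else 0 := by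
    intro i hi j
    simpa [superdiag_mul_apply, mul_superdiag_apply, hi] using
      congrFun (congrFun h.eq ⟨i, by omega⟩) j
  obtain ⟨i, hi⟩ := i
  induction i generalizing j with
  | zero => simp
  | succ i ih =>
    rw [shift i hi j]
    by_cases hj : 0 < (j : ℕ)
    · rw [dif_pos hj, ih _ (by omega)]
      simp only [Nat.sub_sub, Nat.add_comm 1 i]
      split_ifs <;> first | rfl | omega
    · rw [dif_neg hj, dif_neg (by simp; omega)]

end Superdiag

theorem superdiag_mul_sub_mul_superdiag_submatrix {k d : ℕ} {D : Matrix (Fin k) (Fin k) ℂ}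
    (hD : D.IsDiag) {Y : Matrix (Fin d × Fin k) (Fin d × Fin k) ℂ}
    (hY : Y * ((1 : Matrix (Fin d) (Fin d) ℂ) ⊗ₖ D
          + superdiag d ⊗ₖ (1 : Matrix (Fin k) (Fin k) ℂ))
        = ((1 : Matrix (Fin d) (Fin d) ℂ) ⊗ₖ D
          + superdiag d ⊗ₖ (1 : Matrix (Fin k) (Fin k) ℂ)) * Y)
    (a b : Fin k) :
    superdiag d * Y.submatrix (·, a) (·, b) - Y.submatrix (·, a) (·, b) * superdiag d
      = (D b b - D a a) • Y.submatrix (·, a) (·, b) := by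
  have h := congrArg (·.submatrix (·, a) (·, b)) hY
  simp only [mul_add, add_mul, submatrix_add, Pi.add_apply, submatrix_mul_one_kronecker _ hD,
    submatrix_one_kronecker_mul _ hD, submatrix_mul_kronecker_one,
    submatrix_kronecker_one_mul] at h
  rw [sub_smul, sub_eq_sub_iff_add_eq_add, add_comm, ← h, add_comm]

theorem stmt_9_general (k d : ℕ)
    (D : Matrix (Fin k) (Fin k) ℂ) (hdiag : D.IsDiag)
    (hdist : ∀ i j : Fin k, i ≠ j → D i i ≠ D j j)
    (Y : Matrix (Fin d × Fin k) (Fin d × Fin k) ℂ)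
    (hcomm : Y * ((1 : Matrix (Fin d) (Fin d) ℂ) ⊗ₖ D
          + superdiag d ⊗ₖ (1 : Matrix (Fin k) (Fin k) ℂ))
        = ((1 : Matrix (Fin d) (Fin d) ℂ) ⊗ₖ D
          + superdiag d ⊗ₖ (1 : Matrix (Fin k) (Fin k) ℂ)) * Y) :
    ∃ Ys : Fin d → Matrix (Fin k) (Fin k) ℂ,
      (∀ t, (Ys t).IsDiag) ∧ Y = butt Ys := by
  have hblock := superdiag_mul_sub_mul_superdiag_submatrix hdiag hcomm
  have hoff (a b : Fin k) (hab : a ≠ b) : Y.submatrix (·, a) (·, b) = 0 :=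
    eq_zero_of_mul_sub_mul_eq_smul isNilpotent_superdiag
      (sub_ne_zero.mpr (hdist b a hab.symm)) (hblock a b)
  have hdiagblock (a : Fin k) : Commute (superdiag d) (Y.submatrix (·, a) (·, a)) :=
    sub_eq_zero.mp (by rw [hblock, sub_self, zero_smul])
  refine ⟨fun t => diagonal fun a => Y (⟨0, t.pos⟩, a) (t, a),
    fun t => isDiag_diagonal _, ?_⟩
  ext ⟨i, a⟩ ⟨j, b⟩
  rcases eq_or_ne a b with rfl | hab
  · simp only [butt, diagonal_apply_eq]
    exact apply_eq_of_commute_superdiag (hdiagblock a) i j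
  · simpa [butt, hab] using congrFun (congrFun (hoff a b hab) i) j

/-- Let `D` be a `k×k` complex diagonal matrix with pairwise distinct
diagonal entries, `d ≥ 1`, and `D_d = I_d ⊗ D + N_d ⊗ I_k`. Every `Y` commuting with
`D_d` is block upper triangular Toeplitz with `k×k` blocks `Y_1, …, Y_d`, each of which
is a diagonal matrix. -/
theorem stmt_9 (k d : ℕ) (hd : 1 ≤ d)
    (D : Matrix (Fin k) (Fin k) ℂ) (hdiag : D.IsDiag)
    (hdist : ∀ i j : Fin k, i ≠ j → D i i ≠ D j j)
    (Y : Matrix (Fin d × Fin k) (Fin d × Fin k) ℂ)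
    (hcomm : Y * ((1 : Matrix (Fin d) (Fin d) ℂ) ⊗ₖ D
          + superdiag d ⊗ₖ (1 : Matrix (Fin k) (Fin k) ℂ))
        = ((1 : Matrix (Fin d) (Fin d) ℂ) ⊗ₖ D
          + superdiag d ⊗ₖ (1 : Matrix (Fin k) (Fin k) ℂ)) * Y) :
    ∃ Ys : Fin d → Matrix (Fin k) (Fin k) ℂ,
      (∀ t, (Ys t).IsDiag) ∧ Y = butt Ys :=
  stmt_9_general k d D hdiag hdist Y hcomm
end
end

section
/- Let H be a subfield of ℂ, let A ∈ H^{n×n} be nonderogatory, and let p(λ) ∈ H[λ]. If there exists X ∈ H^{n×n} with p(X) = A, then for every eigenvalue λ_0 ∈ ℂ of A there exists μ ∈ H(λ_0) with p(μ) = λ_0. -/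
open Polynomial Matrix

/-!
Let `K = H(λ₀)`. Since `A - λ₀` has entries in `K` and is singular, it has an eigenvector `w`
with entries in `K`. Because `A` is nonderogatory, its `λ₀`-eigenspace is a line (the minimal
polynomial divides `(X - λ₀)` times the characteristic polynomial of `A` on the quotient by that
eigenspace, so the eigenspace cannot have dimension `≥ 2`). The matrix `X` commutes with
`A = p(X)`, so it preserves this line: `X w = μ w`, and `μ ∈ K` because `X` and `w` are defined
over `K`. Finally `λ₀ w = A w = p(X) w = p(μ) w`.
-/

theorem Submodule.mkQ_aeval {R M : Type*} [CommRing R] [AddCommGroup M] [Module R M]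
    (p : Submodule R M) {f : Module.End R M} (h : p ≤ p.comap f) (q : R[X]) (v : M) :
    p.mkQ (aeval f q v) = aeval (p.mapQ p f h) q (p.mkQ v) := by
  induction q using Polynomial.induction_on' generalizing v with
  | add q r hq hr => simp only [map_add, LinearMap.add_apply, hq, hr]
  | monomial k a =>
    simp only [aeval_monomial, ← p.mapQ_pow h k, Module.End.mul_apply, map_smul,
      Module.algebraMap_end_apply]
    rfl

namespace Module.End

variable {K V : Type*} [Field K] [AddCommGroup V] [Module K V] [FiniteDimensional K V]

theorem finrank_eigenspace_le_one_of_minpoly_eq_charpoly {f : End K V}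
    (hf : minpoly K f = f.charpoly) (μ : K) : finrank K (f.eigenspace μ) ≤ 1 := by
  set E := f.eigenspace μ
  have hE : E ≤ E.comap f := fun v hv => mapsTo_genEigenspace_of_comm (Commute.refl f) μ 1 hv
  set g : K[X] := (X - C μ) * (E.mapQ E f hE).charpoly
  have hg : aeval f g = 0 := by
    ext v
    have hkill : aeval f (E.mapQ E f hE).charpoly v ∈ E := by
      rw [← Submodule.Quotient.mk_eq_zero, ← E.mkQ_apply, E.mkQ_aeval hE,
        LinearMap.aeval_self_charpoly]
      rfl
    rw [mem_eigenspace_iff] at hkill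
    simp [g, hkill]
  have hdeg := natDegree_le_of_dvd (minpoly.dvd K f hg)
    ((monic_X_sub_C μ).mul (E.mapQ E f hE).charpoly_monic).ne_zero
  rw [hf, LinearMap.charpoly_natDegree,
    (monic_X_sub_C μ).natDegree_mul (LinearMap.charpoly_monic _), natDegree_X_sub_C,
    LinearMap.charpoly_natDegree] at hdeg
  have := E.finrank_quotient_add_finrank
  omega

theorem exists_hasEigenvector_of_commute {f g : End K V} (hfg : Commute f g) {μ : K} {v : V}
    (hf : finrank K (f.eigenspace μ) ≤ 1) (hv : f.HasEigenvector μ v) :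
    ∃ c : K, g.HasEigenvector c v := by
  have hgv : g v ∈ f.eigenspace μ := mapsTo_genEigenspace_of_comm hfg μ 1 hv.1
  have hE : finrank K (f.eigenspace μ) = 1 :=
    le_antisymm hf (Submodule.one_le_finrank_iff.mpr (hasEigenvalue_of_hasEigenvector hv))
  obtain ⟨c, hc⟩ := (finrank_eq_one_iff_of_nonzero' (⟨v, hv.1⟩ : f.eigenspace μ)
    (by simpa using hv.2)).mp hE ⟨g v, hgv⟩
  exact ⟨c, hasEigenvector_iff.mpr
    ⟨mem_eigenspace_iff.mpr (congrArg Subtype.val hc).symm, hv.2⟩⟩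

end Module.End

namespace Matrix

variable {n : Type*} [Fintype n] [DecidableEq n]

theorem hasEigenvector_toLin'_map {K L : Type*} [Field K] [Field L] (φ : K →+* L)
    {B : Matrix n n K} {μ : K} {v : n → K} (hv : Module.End.HasEigenvector (toLin' B) μ v) :
    Module.End.HasEigenvector (toLin' (B.map φ)) (φ μ) (φ ∘ v) := by
  refine Module.End.hasEigenvector_iff.mpr ⟨?_, ?_⟩
  · rw [Module.End.mem_eigenspace_iff, toLin'_apply]
    ext i
    rw [← RingHom.map_mulVec, ← toLin'_apply, hv.apply_eq_smul]
    simp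
  · exact fun h => hv.2 (funext fun i => φ.injective (by simpa using congrFun h i))

theorem aeval_toLin' {R : Type*} [CommRing R] (M : Matrix n n R) (q : R[X]) :
    aeval (toLin' M) q = toLin' (aeval M q) :=
  aeval_algHom_apply (toLinAlgEquiv' : Matrix n n R ≃ₐ[R] _) M q

variable {L : Type*} [Field L] (K : Subfield L)

theorem exists_hasEigenvector_mem_subfield {M : Matrix n n L} (hM : ∀ i j, M i j ∈ K) {μ : L}
    (hμK : μ ∈ K) (hμ : M.charpoly.IsRoot μ) :
    ∃ v, Module.End.HasEigenvector (toLin' M) μ v ∧ ∀ i, v i ∈ K := by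
  set B : Matrix n n K := of fun i j => ⟨M i j, hM i j⟩
  have hB : B.map K.subtype = M := rfl
  have hroot : B.charpoly.IsRoot ⟨μ, hμK⟩ := by
    apply K.subtype_injective
    rw [map_zero, ← eval_map_apply, ← charpoly_map, hB]
    exact hμ
  rw [← charpoly_toLin', ← Module.End.hasEigenvalue_iff_isRoot_charpoly] at hroot
  obtain ⟨v, hv⟩ := hroot.exists_hasEigenvector
  have hMv := hasEigenvector_toLin'_map K.subtype hv
  rw [hB] at hMv
  exact ⟨K.subtype ∘ v, hMv, fun i => (v i).2⟩

theorem eigenvalue_mem_subfield {M : Matrix n n L} (hM : ∀ i j, M i j ∈ K) {c : L} {v : n → L}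
    (hv : Module.End.HasEigenvector (toLin' M) c v) (hvK : ∀ i, v i ∈ K) : c ∈ K := by
  obtain ⟨i, hi⟩ := Function.ne_iff.mp hv.2
  have hMv : (M *ᵥ v) i = c * v i := by
    rw [← toLin'_apply, hv.apply_eq_smul]
    rfl
  have hMvK : (M *ᵥ v) i ∈ K := K.sum_mem fun j _ => K.mul_mem (hM i j) (hvK j)
  rw [hMv] at hMvK
  simpa [mul_assoc, mul_inv_cancel₀ hi] using K.mul_mem hMvK (K.inv_mem (hvK i))

end Matrix

/-- Necessity, Drazin. Let `H` be a subfield of `ℂ`, let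
`A ∈ H^{n×n}` be nonderogatory and `p ∈ H[λ]`. If `p(X) = A` for some `X ∈ H^{n×n}`,
then for every eigenvalue `λ₀` of `A` there is `μ ∈ H(λ₀)` with `p(μ) = λ₀`. -/
theorem stmt_10 (H : Subfield ℂ) (n : ℕ) (A : Matrix (Fin n) (Fin n) ℂ)
    (hAH : ∀ i j, A i j ∈ H)
    (hnonderog : minpoly ℂ A = A.charpoly)
    (p : Polynomial ↥H)
    (X : Matrix (Fin n) (Fin n) ℂ) (hXH : ∀ i j, X i j ∈ H)
    (hpX : Polynomial.aeval X (p.map H.subtype) = A) :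
    ∀ lam : ℂ, A.charpoly.IsRoot lam →
      ∃ μ ∈ Subfield.closure (insert lam (H : Set ℂ)),
        (p.map H.subtype).eval μ = lam := by
  intro lam hroot
  set K := Subfield.closure (insert lam (H : Set ℂ))
  have hHK : ∀ {x}, x ∈ H → x ∈ K := fun hx =>
    Subfield.subset_closure (Set.mem_insert_of_mem _ hx)
  obtain ⟨w, hw, hwK⟩ := exists_hasEigenvector_mem_subfield K (fun i j => hHK (hAH i j))
    (Subfield.subset_closure (Set.mem_insert _ _)) hroot
  have hcomm : Commute (toLin' A) (toLin' X) := by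
    rw [← hpX, ← aeval_toLin']
    simpa only [aeval_X] using
      (Commute.all (p.map H.subtype) Polynomial.X).map (aeval (R := ℂ) (toLin' X))
  have hgeom := Module.End.finrank_eigenspace_le_one_of_minpoly_eq_charpoly
    (f := toLin' A) (by rwa [minpoly_toLin', charpoly_toLin']) lam
  obtain ⟨c, hc⟩ := Module.End.exists_hasEigenvector_of_commute hcomm hgeom hw
  refine ⟨c, eigenvalue_mem_subfield K (fun i j => hHK (hXH i j)) hc hwK, ?_⟩
  have hpc := Module.End.aeval_apply_of_hasEigenvector (p := p.map H.subtype) hc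
  rw [aeval_toLin', hpX, hw.apply_eq_smul] at hpc
  exact smul_left_injective ℂ hw.2 hpc.symm
end

section
/- Let H be a subfield of ℂ, let A ∈ H^{n×n} have n pairwise distinct complex eigenvalues (i.e. A is simple and nonderogatory), and let p(λ) ∈ H[λ]. If for every eigenvalue λ_0 ∈ ℂ of A there exists μ ∈ H(λ_0) with p(μ) = λ_0, then there exists X ∈ H^{n×n} with p(X) = A. -/
open Polynomial Matrix

noncomputable section


private lemma crt_aux {R : Type*} [CommRing R] :
    ∀ (S : Finset R), (∀ a ∈ S, ∀ b ∈ S, a ≠ b → IsCoprime a b) →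
    ∀ v : R → R, ∃ q : R, ∀ m ∈ S, m ∣ q - v m := by
  intro S
  classical
  induction S using Finset.induction_on with
  | empty => exact fun _ v => ⟨0, by simp⟩
  | @insert a s ha ih =>
    intro hcop v
    obtain ⟨q', hq'⟩ := ih (fun x hx y hy hxy =>
      hcop x (Finset.mem_insert_of_mem hx) y (Finset.mem_insert_of_mem hy) hxy) v
    have hc : IsCoprime a (∏ m ∈ s, m) :=
      IsCoprime.prod_right fun m hm =>
        hcop a (Finset.mem_insert_self a s) m (Finset.mem_insert_of_mem hm)
          (fun h => ha (h ▸ hm))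
    obtain ⟨u, w, huw⟩ := hc
    refine ⟨q' * (u * a) + v a * (w * ∏ m ∈ s, m), ?_⟩
    intro m hm
    rcases Finset.mem_insert.mp hm with rfl | hm
    · exact ⟨q' * u - v m * u, by linear_combination v m * huw⟩
    · obtain ⟨k, hk⟩ := hq' m hm
      obtain ⟨P', hP'⟩ := Finset.dvd_prod_of_mem id hm
      refine ⟨k + (v a - q') * w * P', ?_⟩
      simp only [id] at hP'
      linear_combination q' * huw + hk + (v a - q') * w * hP'

private lemma dvd_comp_sub_comp {K : Type*} [CommRing K] (p q r : K[X]) :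
    q - r ∣ p.comp q - p.comp r := by
  have := sub_dvd_eval_sub q r (p.map (C : K →+* K[X]))
  simp only [Polynomial.comp, eval₂_eq_eval_map] at this ⊢
  exact this

private lemma mem_closure_aeval (H : Subfield ℂ) (lam : ℂ) (hint : IsIntegral ↥H lam)
    (μ : ℂ) (hμ : μ ∈ Subfield.closure (insert lam (H : Set ℂ))) :
    ∃ q : Polynomial ↥H, Polynomial.aeval lam q = μ := by
  have h1 : Subfield.closure (insert lam (H : Set ℂ)) ≤
      (IntermediateField.adjoin ↥H {lam}).toSubfield := by
    apply Subfield.closure_le.mpr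
    rintro x (rfl | hx)
    · exact IntermediateField.mem_adjoin_simple_self ↥H x
    · exact (IntermediateField.adjoin ↥H {lam}).algebraMap_mem ⟨x, hx⟩
  have h2 : μ ∈ (IntermediateField.adjoin ↥H {lam}).toSubalgebra := h1 hμ
  rw [IntermediateField.adjoin_simple_toSubalgebra_of_isAlgebraic hint.isAlgebraic,
    Algebra.adjoin_singleton_eq_range_aeval] at h2
  obtain ⟨q, hq⟩ := h2
  exact ⟨q, hq⟩


/-- Sufficiency for simple matrices, Drazin. Let `H` be a subfield of
`ℂ` and let `A ∈ H^{n×n}` have `n` pairwise distinct complex eigenvalues. If for every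
eigenvalue `λ₀` of `A` there is `μ ∈ H(λ₀)` with `p(μ) = λ₀`, then `p(X) = A` has a
solution `X ∈ H^{n×n}`. -/
theorem stmt_11 (H : Subfield ℂ) (n : ℕ) (A : Matrix (Fin n) (Fin n) ℂ)
    (hAH : ∀ i j, A i j ∈ H)
    (hsimple : A.charpoly.roots.toFinset.card = n)
    (p : Polynomial ↥H)
    (hsolv : ∀ lam : ℂ, A.charpoly.IsRoot lam →
      ∃ μ ∈ Subfield.closure (insert lam (H : Set ℂ)),
        (p.map H.subtype).eval μ = lam) :
    ∃ X : Matrix (Fin n) (Fin n) ℂ, (∀ i j, X i j ∈ H) ∧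
      Polynomial.aeval X (p.map H.subtype) = A := by
  classical
  have halg : algebraMap ↥H ℂ = H.subtype := rfl
  -- the matrix over H
  set A' : Matrix (Fin n) (Fin n) ↥H := Matrix.of fun i j => (⟨A i j, hAH i j⟩ : ↥H) with hA'
  have hAmap : A'.map (H.subtype) = A := by ext i j; rfl
  have hcmap : A.charpoly = A'.charpoly.map H.subtype := by
    rw [← Matrix.charpoly_map, hAmap]
  have hmonic : A.charpoly.Monic := A.charpoly_monic
  have hne : A.charpoly ≠ 0 := hmonic.ne_zero
  have hdeg : A.charpoly.natDegree = n := by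
    simp only [Matrix.charpoly_natDegree_eq_dim, Fintype.card_fin]
  have hroots_card : A.charpoly.roots.card = n := by
    have h := splits_iff_card_roots.mp (IsAlgClosed.splits A.charpoly)
    rw [hdeg] at h
    exact h
  have hnodup : A.charpoly.roots.Nodup :=
    Multiset.toFinset_card_eq_card_iff_nodup.mp (hsimple.trans hroots_card.symm)
  set RF : Finset ℂ := A.charpoly.roots.toFinset with hRF
  have hroot : ∀ lam ∈ RF, A.charpoly.IsRoot lam := fun lam h =>
    (Polynomial.mem_roots hne).mp (Multiset.mem_toFinset.mp h)
  have hint : ∀ lam ∈ RF, IsIntegral ↥H lam := by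
    intro lam h
    refine ⟨A'.charpoly, A'.charpoly_monic, ?_⟩
    have : (A'.charpoly.map H.subtype).eval lam = 0 := by
      rw [← hcmap]; exact hroot lam h
    rwa [halg, eval₂_eq_eval_map]
  -- for each root, a polynomial q with minpoly ∣ p.comp q - X
  have hqex : ∀ lam : ℂ, ∃ q : Polynomial ↥H,
      lam ∈ RF → minpoly ↥H lam ∣ (p.comp q - X) := by
    intro lam
    by_cases h : lam ∈ RF
    · obtain ⟨μ, hμmem, hμ⟩ := hsolv lam (hroot lam h)
      obtain ⟨q, hq⟩ := mem_closure_aeval H lam (hint lam h) μ hμmem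
      refine ⟨q, fun _ => minpoly.dvd ↥H lam ?_⟩
      rw [map_sub, aeval_comp, hq, aeval_X]
      rw [aeval_def, halg, eval₂_eq_eval_map, hμ, sub_self]
    · exact ⟨0, fun h' => absurd h' h⟩
  choose qf hqf using hqex
  -- the set of minimal polynomials
  set T : Finset (Polynomial ↥H) := RF.image (fun lam => minpoly ↥H lam) with hT
  have hTprop : ∀ m ∈ T, m.Monic ∧ Irreducible m ∧ ∃ q : Polynomial ↥H, m ∣ (p.comp q - X) := by
    intro m hm
    obtain ⟨lam, hlam, rfl⟩ := Finset.mem_image.mp hm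
    exact ⟨minpoly.monic (hint lam hlam), minpoly.irreducible (hint lam hlam),
      qf lam, hqf lam hlam⟩
  have hcop : ∀ a ∈ T, ∀ b ∈ T, a ≠ b → IsCoprime a b := by
    intro a ha b hb hab
    obtain ⟨hamon, hairr, -⟩ := hTprop a ha
    obtain ⟨hbmon, hbirr, -⟩ := hTprop b hb
    refine hairr.coprime_iff_not_dvd.mpr fun hdvd => hab ?_
    exact eq_of_monic_of_associated hamon hbmon (hairr.associated_of_dvd hbirr hdvd)
  have hvex : ∀ m : Polynomial ↥H, ∃ q : Polynomial ↥H, m ∈ T → m ∣ (p.comp q - X) := by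
    intro m
    by_cases h : m ∈ T
    · obtain ⟨-, -, q, hq⟩ := hTprop m h
      exact ⟨q, fun _ => hq⟩
    · exact ⟨0, fun h' => absurd h' h⟩
  choose v hv using hvex
  obtain ⟨Q, hQ⟩ := crt_aux T hcop v
  -- every root kills g := p.comp Q - X
  set g : Polynomial ↥H := p.comp Q - X with hg
  have hgroot : ∀ lam ∈ RF, Polynomial.aeval lam g = 0 := by
    intro lam h
    have hmT : minpoly ↥H lam ∈ T := Finset.mem_image_of_mem _ h
    have hd1 : minpoly ↥H lam ∣ p.comp Q - p.comp (v (minpoly ↥H lam)) :=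
      dvd_trans (hQ _ hmT) (dvd_comp_sub_comp p Q (v (minpoly ↥H lam)))
    have hd2 : minpoly ↥H lam ∣ g := by
      have := dvd_add hd1 (hv _ hmT)
      simp only [hg, sub_add_sub_cancel] at this ⊢
      exact this
    obtain ⟨k, hk⟩ := hd2
    rw [hk, _root_.map_mul, minpoly.aeval, zero_mul]
  -- charpoly divides the mapped g
  have hfact : A.charpoly = ∏ lam ∈ RF, (X - C lam) := by
    rw [(IsAlgClosed.splits A.charpoly).eq_prod_roots_of_monic hmonic]
    rw [Finset.prod_eq_multiset_prod]
    congr 1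
    rw [hRF, Multiset.toFinset_val, Multiset.dedup_eq_self.mpr hnodup]
  have hdvd : A.charpoly ∣ g.map H.subtype := by
    rw [hfact]
    refine Finset.prod_dvd_of_coprime ?_ ?_
    · exact (Polynomial.pairwise_coprime_X_sub_C Function.injective_id).set_pairwise _
    · intro lam hlam
      rw [dvd_iff_isRoot]
      have := hgroot lam hlam
      rwa [aeval_def, halg, eval₂_eq_eval_map] at this
  -- evaluate at A
  have hg0 : Polynomial.aeval A (g.map H.subtype) = 0 := by
    obtain ⟨k, hk⟩ := hdvd
    rw [hk, _root_.map_mul, Matrix.aeval_self_charpoly, zero_mul]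
  have hmain : Polynomial.aeval (Polynomial.aeval A (Q.map H.subtype)) (p.map H.subtype) = A := by
    have : Polynomial.aeval A ((p.comp Q).map H.subtype) - A = 0 := by
      have := hg0
      rwa [hg, Polynomial.map_sub, map_sub, Polynomial.map_X, aeval_X] at this
    rw [Polynomial.map_comp, aeval_comp] at this
    exact sub_eq_zero.mp this
  refine ⟨Polynomial.aeval A (Q.map H.subtype), ?_, hmain⟩
  intro i j
  have hpow : ∀ k : ℕ, ∀ i j, (A ^ k) i j ∈ H := by
    intro k
    induction k with
    | zero =>
      intro i j
      rw [pow_zero, Matrix.one_apply]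
      split_ifs
      · exact H.one_mem
      · exact H.zero_mem
    | succ k ih =>
      intro i j
      rw [pow_succ, Matrix.mul_apply]
      exact Subfield.sum_mem _ fun c _ => H.mul_mem (ih _ _) (hAH _ _)
  rw [Polynomial.aeval_eq_sum_range, Matrix.sum_apply]
  refine Subfield.sum_mem _ fun k _ => ?_
  rw [Matrix.smul_apply, smul_eq_mul, coeff_map]
  exact H.mul_mem (Q.coeff k).2 (hpow k i j)
end
end

section
/- Let H be a subfield of ℂ, let g be a monic polynomial irreducible over H, and let p(λ) ∈ H[λ] be nonconstant. If λ_1, λ_2 ∈ ℂ are any two roots of g, then the sets {μ ∈ H(λ_1) : p(μ) = λ_1} and {μ ∈ H(λ_2) : p(μ) = λ_2} are finite and have the same cardinality. That is, the number m of solutions μ ∈ H(λ) of p(μ) = λ is independent of the choice of root λ of g. -/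
open Polynomial Matrix

noncomputable section

open IntermediateField in
lemma mem_closure_iff_adjoin' (H : Subfield ℂ) (lam μ : ℂ) :
    μ ∈ Subfield.closure (insert lam (H : Set ℂ)) ↔ μ ∈ H⟮lam⟯ := by
  rw [← IntermediateField.mem_toSubfield, IntermediateField.adjoin_toSubfield]
  have : Set.range (algebraMap ↥H ℂ) = (H : Set ℂ) := Subtype.range_coe
  rw [this, Set.union_comm, ← Set.insert_eq]

open IntermediateField in
set_option synthInstance.maxHeartbeats 1000000 in
lemma coe_aeval' (H : Subfield ℂ) (p : Polynomial ↥H) (lam : ℂ) (x : ↥H⟮lam⟯) :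
    (((aeval x) p : ↥H⟮lam⟯) : ℂ) = (aeval (x:ℂ)) p := by
  have := Polynomial.hom_eval₂ p (algebraMap ↥H ↥H⟮lam⟯)
    ((H⟮lam⟯ : IntermediateField ↥H ℂ).toSubfield.subtype) x
  rw [aeval_def, aeval_def]
  convert this using 2 <;> rfl

open IntermediateField in
set_option synthInstance.maxHeartbeats 1000000 in
set_option maxHeartbeats 1000000 in
/-- Let `g` be monic irreducible over a subfield `H` of `ℂ` and let
`p ∈ H[λ]` be nonconstant. For any two complex roots `λ₁, λ₂` of `g`, the solution sets
`{μ ∈ H(λᵢ) : p(μ) = λᵢ}` are finite and have the same cardinality; i.e. the number of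
solutions `μ ∈ H(λ)` of `p(μ) = λ` does not depend on the chosen root `λ` of `g`. -/
theorem stmt_12 (H : Subfield ℂ) (g p : Polynomial ↥H)
    (hmon : g.Monic) (hirr : Irreducible g) (hp : 0 < p.natDegree)
    (lam₁ lam₂ : ℂ)
    (h1 : (g.map H.subtype).IsRoot lam₁) (h2 : (g.map H.subtype).IsRoot lam₂) :
    {μ : ℂ | μ ∈ Subfield.closure (insert lam₁ (H : Set ℂ)) ∧
        (p.map H.subtype).eval μ = lam₁}.Finite ∧
    {μ : ℂ | μ ∈ Subfield.closure (insert lam₂ (H : Set ℂ)) ∧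
        (p.map H.subtype).eval μ = lam₂}.Finite ∧
    {μ : ℂ | μ ∈ Subfield.closure (insert lam₁ (H : Set ℂ)) ∧
        (p.map H.subtype).eval μ = lam₁}.ncard
      = {μ : ℂ | μ ∈ Subfield.closure (insert lam₂ (H : Set ℂ)) ∧
        (p.map H.subtype).eval μ = lam₂}.ncard := by
  have halg : algebraMap ↥H ℂ = H.subtype := rfl
  -- finiteness
  have hfin : ∀ lam : ℂ, {μ : ℂ | μ ∈ Subfield.closure (insert lam (H : Set ℂ)) ∧
      (p.map H.subtype).eval μ = lam}.Finite := by
    intro lam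
    have hq : p.map H.subtype - C lam ≠ 0 := by
      intro h
      have hd : (p.map H.subtype).natDegree = p.natDegree :=
        natDegree_map_eq_of_injective H.subtype.injective p
      have h2 : p.map H.subtype = C lam := sub_eq_zero.mp h
      rw [h2, natDegree_C] at hd
      omega
    refine (Polynomial.finite_setOf_isRoot hq).subset ?_
    intro μ hμ
    simp only [Set.mem_setOf_eq, IsRoot, eval_sub, eval_C, sub_eq_zero] at *
    exact hμ.2
  refine ⟨hfin lam₁, hfin lam₂, ?_⟩
  -- setup algebraic machinery
  have ha1 : (aeval lam₁) g = 0 := by rw [aeval_def, halg, ← eval_map]; exact h1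
  have ha2 : (aeval lam₂) g = 0 := by rw [aeval_def, halg, ← eval_map]; exact h2
  have hm1 : minpoly ↥H lam₁ = g := (minpoly.eq_of_irreducible_of_monic hirr ha1 hmon).symm
  have hm2 : minpoly ↥H lam₂ = g := (minpoly.eq_of_irreducible_of_monic hirr ha2 hmon).symm
  have hint1 : IsIntegral ↥H lam₁ := ⟨g, hmon, ha1⟩
  have halg1 : IsAlgebraic ↥H lam₁ := hint1.isAlgebraic
  let e : ↥H⟮lam₁⟯ ≃ₐ[↥H] ↥H⟮lam₂⟯ := minpoly.algEquiv halg1 (hm1.trans hm2.symm)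
  have hgen : e (AdjoinSimple.gen ↥H lam₁) = AdjoinSimple.gen ↥H lam₂ :=
    minpoly.algEquiv_apply halg1 (hm1.trans hm2.symm)
  -- describe solution sets
  have hdesc : ∀ (lam : ℂ), {μ : ℂ | μ ∈ Subfield.closure (insert lam (H : Set ℂ)) ∧
      (p.map H.subtype).eval μ = lam}
      = Subtype.val '' {x : ↥H⟮lam⟯ | (aeval x) p = AdjoinSimple.gen ↥H lam} := by
    intro lam
    ext μ
    simp only [Set.mem_setOf_eq, Set.mem_image, mem_closure_iff_adjoin']
    constructor
    · rintro ⟨hmem, heq⟩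
      refine ⟨⟨μ, hmem⟩, ?_, rfl⟩
      have : (((aeval (⟨μ, hmem⟩ : ↥H⟮lam⟯)) p : ↥H⟮lam⟯) : ℂ) = lam := by
        rw [coe_aeval']
        rw [eval_map, ← halg, ← aeval_def] at heq
        exact heq
      exact Subtype.ext this
    · rintro ⟨x, hx, rfl⟩
      refine ⟨x.2, ?_⟩
      rw [eval_map, ← halg, ← aeval_def, ← coe_aeval', hx]
      rfl
  rw [hdesc lam₁, hdesc lam₂]
  rw [Set.ncard_image_of_injective _ Subtype.val_injective,
      Set.ncard_image_of_injective _ Subtype.val_injective]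
  -- bijection via e
  have himg : (e : ↥H⟮lam₁⟯ → ↥H⟮lam₂⟯) '' {x : ↥H⟮lam₁⟯ | (aeval x) p = AdjoinSimple.gen ↥H lam₁}
      = {x : ↥H⟮lam₂⟯ | (aeval x) p = AdjoinSimple.gen ↥H lam₂} := by
    ext y
    simp only [Set.mem_image, Set.mem_setOf_eq]
    constructor
    · rintro ⟨x, hx, rfl⟩
      rw [← hgen, ← hx]
      simpa using aeval_algHom_apply e.toAlgHom x p
    · intro hy
      refine ⟨e.symm y, ?_, e.apply_symm_apply y⟩
      apply e.injective
      have := aeval_algHom_apply e.toAlgHom (e.symm y) p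
      change (aeval (e (e.symm y))) p = e ((aeval (e.symm y)) p) at this
      rw [← this, e.apply_symm_apply, hy, hgen]
  rw [← himg, Set.ncard_image_of_injective _ e.injective]
end
end

section
/- Let H be a subfield of ℂ, let g be a monic polynomial of degree k irreducible over H with companion matrix C_g, let d ≥ 1, and let p(λ) = Σ_{m=0}^ℓ p_m λ^m ∈ H[λ]. Suppose X_1 ∈ H^{k×k} satisfies p(X_1) = C_g and det(Σ_{m=1}^ℓ p_m Σ_{i=0}^{m−1} (X_1ᵀ)^i ⊗ X_1^{m−1−i}) ≠ 0. Then there exist matrices X_2, …, X_d ∈ H^{k×k}, uniquely determined by X_1, such that the dk×dk block upper triangular Toeplitz matrix X whose (i,i') block equals X_{i'−i+1} for i ≤ i' and 0 for i > i' satisfies p(X) = C(g,d). -/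
open Polynomial Matrix Kronecker

noncomputable section

abbrev Mk (k : ℕ) := Matrix (Fin k) (Fin k) ℂ

def toBig (k d : ℕ) (f : PowerSeries (Mk k)) : Matrix (Fin d × Fin k) (Fin d × Fin k) ℂ :=
  fun p q => if (p.1 : ℕ) ≤ (q.1 : ℕ)
    then PowerSeries.coeff (R := Mk k) ((q.1 : ℕ) - (p.1 : ℕ)) f p.2 q.2 else 0

lemma toBig_one (k d : ℕ) : toBig k d 1 = 1 := by
  ext ⟨p1, p2⟩ ⟨q1, q2⟩
  simp only [toBig, PowerSeries.coeff_one, Matrix.one_apply, Prod.mk.injEq]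
  rcases le_or_gt (p1 : ℕ) (q1 : ℕ) with h | h
  · rw [if_pos h]
    by_cases h0 : (q1 : ℕ) - (p1 : ℕ) = 0
    · have : p1 = q1 := Fin.ext (le_antisymm h (Nat.sub_eq_zero_iff_le.mp h0))
      simp [h0, this, Matrix.one_apply]
    · have hne : ¬ p1 = q1 := fun hh => h0 (by rw [hh]; omega)
      simp [h0, hne]
  · rw [if_neg (not_le.mpr h)]
    have : ¬ p1 = q1 := fun hh => absurd (hh ▸ le_refl _) (not_le.mpr h)
    simp [this]

lemma toBig_add (k d : ℕ) (f g : PowerSeries (Mk k)) :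
    toBig k d (f + g) = toBig k d f + toBig k d g := by
  ext ⟨p1, p2⟩ ⟨q1, q2⟩
  simp only [toBig, Matrix.add_apply, map_add]
  split <;> simp [Matrix.add_apply]

lemma toBig_smul (k d : ℕ) (c : ℂ) (f : PowerSeries (Mk k)) :
    toBig k d (c • f) = c • toBig k d f := by
  ext ⟨p1, p2⟩ ⟨q1, q2⟩
  simp only [toBig, Matrix.smul_apply, PowerSeries.coeff_smul]
  split <;> simp [Matrix.smul_apply]

lemma toBig_mul (k d : ℕ) (f g : PowerSeries (Mk k)) :
    toBig k d (f * g) = toBig k d f * toBig k d g := by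
  ext ⟨p1, p2⟩ ⟨q1, q2⟩
  rw [Matrix.mul_apply]
  rw [Fintype.sum_prod_type]
  have inner : ∀ j1 : Fin d,
      (∑ j2 : Fin k, toBig k d f (p1, p2) (j1, j2) * toBig k d g (j1, j2) (q1, q2))
      = if (p1 : ℕ) ≤ (j1 : ℕ) ∧ (j1 : ℕ) ≤ (q1 : ℕ) then
          (PowerSeries.coeff (R := Mk k) ((j1 : ℕ) - p1) f *
            PowerSeries.coeff (R := Mk k) ((q1 : ℕ) - j1) g) p2 q2 else 0 := by
    intro j1
    simp only [toBig]
    by_cases h1 : (p1 : ℕ) ≤ (j1 : ℕ) <;> by_cases h2 : (j1 : ℕ) ≤ (q1 : ℕ) <;>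
      simp [h1, h2, Matrix.mul_apply]
  rw [Finset.sum_congr rfl (fun j1 _ => inner j1)]
  rw [← Finset.sum_filter]
  by_cases h : (p1 : ℕ) ≤ (q1 : ℕ)
  · simp only [toBig, if_pos h, PowerSeries.coeff_mul]
    rw [Finset.Nat.sum_antidiagonal_eq_sum_range_succ_mk]
    rw [Matrix.sum_apply]
    refine Finset.sum_bij'
      (i := fun (c : ℕ) (hc : c ∈ Finset.range ((q1:ℕ) - (p1:ℕ)).succ) =>
        (⟨(p1 : ℕ) + c, by simp only [Finset.mem_range] at hc; omega⟩ : Fin d))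
      (j := fun (j1 : Fin d) _ => (j1 : ℕ) - (p1 : ℕ)) ?_ ?_ ?_ ?_ ?_
    · intro c hc
      simp only [Finset.mem_range] at hc
      simp only [Finset.mem_filter, Finset.mem_univ, true_and]
      exact ⟨Nat.le_add_right _ _, by omega⟩
    · intro j1 hj
      simp only [Finset.mem_filter, Finset.mem_univ, true_and] at hj
      simp only [Finset.mem_range]; omega
    · intro c hc
      simp only [Finset.mem_range] at hc
      show (p1 : ℕ) + c - (p1 : ℕ) = c
      omega
    · intro j1 hj
      simp only [Finset.mem_filter, Finset.mem_univ, true_and] at hj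
      apply Fin.ext
      show (p1 : ℕ) + ((j1 : ℕ) - (p1 : ℕ)) = (j1 : ℕ)
      omega
    · intro c hc
      simp only [Finset.mem_range] at hc
      have e1 : ((p1 : ℕ) + c) - (p1 : ℕ) = c := by omega
      have e2 : (q1 : ℕ) - ((p1 : ℕ) + c) = (q1 : ℕ) - (p1 : ℕ) - c := by omega
      show _ = (PowerSeries.coeff (R := Mk k) ((p1:ℕ) + c - (p1:ℕ)) f *
        PowerSeries.coeff (R := Mk k) ((q1:ℕ) - ((p1:ℕ) + c)) g) p2 q2
      rw [e1, e2]
  · simp only [toBig, if_neg h]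
    refine (Finset.sum_eq_zero ?_).symm
    intro j1 hj
    simp only [Finset.mem_filter, Finset.mem_univ, true_and] at hj
    omega

lemma toBig_pow (k d : ℕ) (f : PowerSeries (Mk k)) (m : ℕ) :
    toBig k d (f ^ m) = toBig k d f ^ m := by
  induction m with
  | zero => simpa using toBig_one k d
  | succ m ih => rw [pow_succ, pow_succ, toBig_mul, ih]

/-- extend a `Fin d`-indexed family to `ℕ` by zero -/
def extz {k : ℕ} (d : ℕ) (Xs : Fin d → Mk k) : ℕ → Mk k :=
  fun t => if h : t < d then Xs ⟨t, h⟩ else 0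

lemma butt_eq_toBig {k d : ℕ} (Xs : Fin d → Mk k) :
    butt Xs = toBig k d (PowerSeries.mk (extz d Xs)) := by
  ext ⟨p1, p2⟩ ⟨q1, q2⟩
  simp only [butt, toBig, PowerSeries.coeff_mk, extz]
  split
  · rw [dif_pos (lt_of_le_of_lt (Nat.sub_le _ _) q1.isLt)]
  · rfl

/-- the target blocks: `C_g`, `1`, `0, 0, …` -/
def targ (k : ℕ) (g : Polynomial ℂ) : ℕ → Mk k :=
  fun t => if t = 0 then companion k g else if t = 1 then 1 else 0

lemma CJ_eq_toBig (k d : ℕ) (g : Polynomial ℂ) :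
    CJ k g d = toBig k d (PowerSeries.mk (targ k g)) := by
  ext ⟨p1, p2⟩ ⟨q1, q2⟩
  simp only [CJ, toBig, PowerSeries.coeff_mk, targ, Matrix.add_apply, Matrix.kroneckerMap_apply,
    Matrix.one_apply, superdiag]
  rcases le_or_gt (p1 : ℕ) (q1 : ℕ) with h | h
  · rw [if_pos h]
    by_cases h0 : (q1 : ℕ) - (p1 : ℕ) = 0
    · have : p1 = q1 := Fin.ext (by omega)
      simp [this, h0, Fin.ext_iff, (by omega : ¬ ((q1:ℕ) + 1 = (q1:ℕ)))]
    · by_cases h1 : (q1 : ℕ) - (p1 : ℕ) = 1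
      · have hne : ¬ p1 = q1 := fun hh => by rw [hh] at h1; omega
        have hsd : (p1 : ℕ) + 1 = (q1 : ℕ) := by omega
        simp [h0, h1, hne, hsd, Matrix.one_apply]
      · have hne : ¬ p1 = q1 := fun hh => by rw [hh] at h0; omega
        have hsd : ¬ ((p1 : ℕ) + 1 = (q1 : ℕ)) := by omega
        simp [h0, h1, hne, hsd]
  · rw [if_neg (not_le.mpr h)]
    have hne : ¬ p1 = q1 := fun hh => by rw [hh] at h; omega
    have hsd : ¬ ((p1 : ℕ) + 1 = (q1 : ℕ)) := by omega
    simp [hne, hsd]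

/-- `Σ_m q_m (mk f)^m` as a power series of `k×k` matrices -/
def Eval {k : ℕ} (q : Polynomial ℂ) (f : ℕ → Mk k) : PowerSeries (Mk k) :=
  ∑ m ∈ Finset.range (q.natDegree + 1), q.coeff m • (PowerSeries.mk f) ^ m

lemma coeff_mul_range {k : ℕ} (t : ℕ) (φ ψ : PowerSeries (Mk k)) :
    PowerSeries.coeff (R := Mk k) t (φ * ψ)
      = ∑ s ∈ Finset.range (t + 1),
          PowerSeries.coeff (R := Mk k) s φ * PowerSeries.coeff (R := Mk k) (t - s) ψ := by
  rw [PowerSeries.coeff_mul, Finset.Nat.sum_antidiagonal_eq_sum_range_succ_mk]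

lemma coeff_pow_congr {k : ℕ} (f g : ℕ → Mk k) (m t : ℕ)
    (h : ∀ s ≤ t, f s = g s) :
    PowerSeries.coeff (R := Mk k) t ((PowerSeries.mk f) ^ m)
      = PowerSeries.coeff (R := Mk k) t ((PowerSeries.mk g) ^ m) := by
  induction m generalizing t with
  | zero => simp
  | succ m ih =>
    rw [pow_succ', pow_succ', coeff_mul_range, coeff_mul_range]
    refine Finset.sum_congr rfl fun s hs => ?_
    simp only [Finset.mem_range] at hs
    rw [PowerSeries.coeff_mk, PowerSeries.coeff_mk, h s (by omega),
      ih (t - s) (fun u hu => h u (by omega))]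

lemma constCoeff_pow {k : ℕ} (f : ℕ → Mk k) (m : ℕ) :
    PowerSeries.coeff (R := Mk k) 0 ((PowerSeries.mk f) ^ m) = (f 0) ^ m := by
  rw [PowerSeries.coeff_zero_eq_constantCoeff, map_pow]
  simp [PowerSeries.constantCoeff_mk]

lemma coeff_pow_diff {k : ℕ} (f g : ℕ → Mk k) (m t : ℕ) (ht : 0 < t)
    (h0 : f 0 = g 0) (h : ∀ s, 0 < s → s < t → f s = g s) :
    PowerSeries.coeff (R := Mk k) t ((PowerSeries.mk f) ^ m)
      - PowerSeries.coeff (R := Mk k) t ((PowerSeries.mk g) ^ m)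
      = ∑ i ∈ Finset.range m, (g 0) ^ (m - 1 - i) * (f t - g t) * (g 0) ^ i := by
  induction m with
  | zero => simp
  | succ m ih =>
    rw [pow_succ', pow_succ', coeff_mul_range, coeff_mul_range, ← Finset.sum_sub_distrib]
    have hzero : ∀ s ∈ Finset.range (t + 1), s ≠ 0 → s ≠ t →
        PowerSeries.coeff (R := Mk k) s (PowerSeries.mk f) *
            PowerSeries.coeff (R := Mk k) (t - s) ((PowerSeries.mk f) ^ m)
          - PowerSeries.coeff (R := Mk k) s (PowerSeries.mk g) *
            PowerSeries.coeff (R := Mk k) (t - s) ((PowerSeries.mk g) ^ m) = 0 := by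
      intro s hs hs0 hst
      simp only [Finset.mem_range] at hs
      rw [PowerSeries.coeff_mk, PowerSeries.coeff_mk, h s (by omega) (by omega),
        coeff_pow_congr f g m (t - s) (fun u hu => by
          rcases Nat.eq_zero_or_pos u with h' | h'
          · rw [h', h0]
          · exact h u h' (by omega)), sub_self]
    rw [Finset.sum_eq_add 0 t ht.ne (fun c hc hc' => hzero c hc hc'.1 hc'.2)
      (fun hh => absurd (Finset.mem_range.mpr (by omega)) hh)
      (fun hh => absurd (Finset.mem_range.mpr (by omega)) hh)]
    rw [PowerSeries.coeff_mk, PowerSeries.coeff_mk, PowerSeries.coeff_mk,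
      PowerSeries.coeff_mk, Nat.sub_zero, Nat.sub_self, constCoeff_pow, constCoeff_pow,
      h0, ← mul_sub, ← sub_mul, ih, Finset.mul_sum, Finset.sum_range_succ]
    have hlast : (g 0) ^ (m + 1 - 1 - m) * (f t - g t) * (g 0) ^ m
        = (f t - g t) * (g 0) ^ m := by
      rw [Nat.add_sub_cancel, Nat.sub_self, pow_zero, one_mul]
    rw [hlast]
    congr 1
    refine Finset.sum_congr rfl fun i hi => ?_
    simp only [Finset.mem_range] at hi
    rw [← mul_assoc, ← mul_assoc, ← pow_succ']
    congr 3
    omega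

lemma coeff_Eval_congr {k : ℕ} (q : Polynomial ℂ) (f g : ℕ → Mk k) (t : ℕ)
    (h : ∀ s ≤ t, f s = g s) :
    PowerSeries.coeff (R := Mk k) t (Eval q f) = PowerSeries.coeff (R := Mk k) t (Eval q g) := by
  simp only [Eval, map_sum, PowerSeries.coeff_smul]
  exact Finset.sum_congr rfl fun m _ => by rw [coeff_pow_congr f g m t h]

lemma coeff_Eval_zero {k : ℕ} (q : Polynomial ℂ) (f : ℕ → Mk k) :
    PowerSeries.coeff (R := Mk k) 0 (Eval q f) = Polynomial.aeval (f 0) q := by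
  simp only [Eval, map_sum, PowerSeries.coeff_smul]
  rw [Polynomial.aeval_eq_sum_range]
  exact Finset.sum_congr rfl fun m _ => by rw [constCoeff_pow]

/-- the linear operator `Y ↦ Σ_m q_m Σ_i X₁^{m-1-i} Y X₁^i` -/
def Lop {k : ℕ} (q : Polynomial ℂ) (A Y : Mk k) : Mk k :=
  ∑ m ∈ Finset.range (q.natDegree + 1), q.coeff m •
    ∑ i ∈ Finset.range m, A ^ (m - 1 - i) * Y * A ^ i

lemma coeff_Eval_diff {k : ℕ} (q : Polynomial ℂ) (f g : ℕ → Mk k) (t : ℕ) (ht : 0 < t)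
    (h0 : f 0 = g 0) (h : ∀ s, 0 < s → s < t → f s = g s) :
    PowerSeries.coeff (R := Mk k) t (Eval q f)
      = PowerSeries.coeff (R := Mk k) t (Eval q g) + Lop q (g 0) (f t - g t) := by
  rw [← sub_eq_iff_eq_add']
  simp only [Eval, map_sum, PowerSeries.coeff_smul, ← Finset.sum_sub_distrib, Lop,
    ← smul_sub]
  refine Finset.sum_congr rfl fun m _ => ?_
  rw [coeff_pow_diff f g m t ht h0 h]

/-- vectorization of a k×k matrix (transposed index order) -/
def vecM {k : ℕ} (Y : Mk k) : Fin k × Fin k → ℂ := fun ab => Y ab.2 ab.1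

/-- the Kronecker-sum matrix from the determinant hypothesis -/
def Mmat {k : ℕ} (q : Polynomial ℂ) (A : Mk k) : Matrix (Fin k × Fin k) (Fin k × Fin k) ℂ :=
  ∑ m ∈ Finset.range (q.natDegree + 1), q.coeff m •
    ∑ i ∈ Finset.range m, (Aᵀ ^ i) ⊗ₖ (A ^ (m - 1 - i))

lemma sum_mulVec' {n : Type*} [Fintype n] {ι : Type*} (s : Finset ι)
    (M : ι → Matrix n n ℂ) (v : n → ℂ) :
    (∑ i ∈ s, M i) *ᵥ v = ∑ i ∈ s, (M i) *ᵥ v := by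
  funext x
  simp only [Matrix.mulVec, dotProduct, Matrix.sum_apply, Finset.sum_apply, Finset.sum_mul]
  exact Finset.sum_comm

lemma kron_mulVec {k : ℕ} (A B Y : Mk k) :
    (Aᵀ ⊗ₖ B) *ᵥ vecM Y = vecM (B * Y * A) := by
  funext ab
  obtain ⟨a, b⟩ := ab
  simp only [Matrix.mulVec, vecM, dotProduct, Fintype.sum_prod_type,
    Matrix.kroneckerMap_apply, Matrix.transpose_apply]
  rw [Matrix.mul_apply]
  refine Finset.sum_congr rfl fun a' _ => ?_
  rw [Matrix.mul_apply, Finset.sum_mul]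
  refine Finset.sum_congr rfl fun b' _ => ?_
  ring

lemma Mmat_mulVec {k : ℕ} (q : Polynomial ℂ) (A Y : Mk k) :
    Mmat q A *ᵥ vecM Y = vecM (Lop q A Y) := by
  simp only [Mmat, Lop]
  rw [sum_mulVec' _ _ _]
  have : ∀ m, (q.coeff m • ∑ i ∈ Finset.range m, (Aᵀ ^ i) ⊗ₖ (A ^ (m - 1 - i))) *ᵥ vecM Y
      = vecM (q.coeff m • ∑ i ∈ Finset.range m, A ^ (m - 1 - i) * Y * A ^ i) := by
    intro m
    rw [Matrix.smul_mulVec, sum_mulVec' _ _ _]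
    have : ∀ i, ((Aᵀ ^ i) ⊗ₖ (A ^ (m - 1 - i))) *ᵥ vecM Y
        = vecM (A ^ (m - 1 - i) * Y * A ^ i) := by
      intro i
      rw [← Matrix.transpose_pow, kron_mulVec]
    rw [Finset.sum_congr rfl fun i _ => this i]
    funext ab
    simp [vecM, Matrix.sum_apply]
  rw [Finset.sum_congr rfl fun m _ => this m]
  funext ab
  simp [vecM, Matrix.sum_apply]

/-- solve `Lop q A Y = Z` via the inverse of `Mmat` -/
def Lsolve {k : ℕ} (q : Polynomial ℂ) (A Z : Mk k) : Mk k :=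
  fun i j => ((Mmat q A)⁻¹ *ᵥ vecM Z) (j, i)

lemma vecM_Lsolve {k : ℕ} (q : Polynomial ℂ) (A Z : Mk k) :
    vecM (Lsolve q A Z) = (Mmat q A)⁻¹ *ᵥ vecM Z := rfl

lemma vecM_inj {k : ℕ} {Y Z : Mk k} (h : vecM Y = vecM Z) : Y = Z := by
  ext i j
  exact congrFun h (j, i)

lemma Lop_Lsolve {k : ℕ} (q : Polynomial ℂ) (A : Mk k) (hdet : (Mmat q A).det ≠ 0)
    (Z : Mk k) : Lop q A (Lsolve q A Z) = Z := by
  apply vecM_inj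
  rw [← Mmat_mulVec, vecM_Lsolve, Matrix.mulVec_mulVec,
    Matrix.mul_nonsing_inv _ (isUnit_iff_ne_zero.mpr hdet), Matrix.one_mulVec]

lemma Lop_inj {k : ℕ} (q : Polynomial ℂ) (A : Mk k) (hdet : (Mmat q A).det ≠ 0)
    {Y Z : Mk k} (h : Lop q A Y = Lop q A Z) : Y = Z := by
  apply vecM_inj
  have h2 : Mmat q A *ᵥ vecM Y = Mmat q A *ᵥ vecM Z := by
    rw [Mmat_mulVec, Mmat_mulVec, h]
  have h3 := congrArg (fun v => (Mmat q A)⁻¹ *ᵥ v) h2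
  simpa [Matrix.mulVec_mulVec, Matrix.nonsing_inv_mul _ (isUnit_iff_ne_zero.mpr hdet),
    Matrix.one_mulVec] using h3

def solveSeq {k : ℕ} (q : Polynomial ℂ) (A : Mk k) (T : ℕ → Mk k) : ℕ → Mk k
  | 0 => A
  | (t+1) => Lsolve q A (T (t+1) - PowerSeries.coeff (R := Mk k) (t+1)
      (Eval q (fun s => if _h : s < t + 1 then solveSeq q A T s else 0)))

lemma solveSeq_zero {k : ℕ} (q : Polynomial ℂ) (A : Mk k) (T : ℕ → Mk k) :
    solveSeq q A T 0 = A := by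
  rw [solveSeq]

lemma solveSeq_spec {k : ℕ} (q : Polynomial ℂ) (A : Mk k) (T : ℕ → Mk k)
    (hdet : (Mmat q A).det ≠ 0) (hA : Polynomial.aeval A q = T 0) (t : ℕ) :
    PowerSeries.coeff (R := Mk k) t (Eval q (solveSeq q A T)) = T t := by
  cases t with
  | zero => rw [coeff_Eval_zero, solveSeq_zero, hA]
  | succ t =>
    set trunc : ℕ → Mk k := fun s => if _h : s < t + 1 then solveSeq q A T s else 0 with htr
    have h0 : solveSeq q A T 0 = trunc 0 := by
      rw [htr]; simp [solveSeq_zero]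
    have hagree : ∀ s, 0 < s → s < t + 1 → solveSeq q A T s = trunc s := by
      intro s _ hs
      rw [htr]; simp [hs]
    rw [coeff_Eval_diff q (solveSeq q A T) trunc (t+1) (Nat.succ_pos t) h0 hagree]
    have htr0 : trunc 0 = A := by rw [htr]; simp [solveSeq_zero]
    have htrt : trunc (t+1) = 0 := by rw [htr]; simp
    have hsolve : solveSeq q A T (t+1) = Lsolve q A (T (t+1) -
        PowerSeries.coeff (R := Mk k) (t+1) (Eval q trunc)) := by
      rw [solveSeq]
    rw [htr0, htrt, hsolve, sub_zero, Lop_Lsolve q A hdet]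
    abel

section Mem
variable (H : Subfield ℂ)

def entriesIn {n m : Type*} (A : Matrix n m ℂ) : Prop := ∀ i j, A i j ∈ H

variable {H}

lemma entriesIn_zero {n m : Type*} : entriesIn H (0 : Matrix n m ℂ) :=
  fun _ _ => H.zero_mem

lemma entriesIn_one {n : Type*} [DecidableEq n] : entriesIn H (1 : Matrix n n ℂ) := by
  intro i j
  by_cases h : i = j <;> simp [Matrix.one_apply, h, H.one_mem, H.zero_mem]

lemma entriesIn_add {n m : Type*} {A B : Matrix n m ℂ} (hA : entriesIn H A)
    (hB : entriesIn H B) : entriesIn H (A + B) :=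
  fun i j => H.add_mem (hA i j) (hB i j)

lemma entriesIn_sub {n m : Type*} {A B : Matrix n m ℂ} (hA : entriesIn H A)
    (hB : entriesIn H B) : entriesIn H (A - B) :=
  fun i j => H.sub_mem (hA i j) (hB i j)

lemma entriesIn_smul {n m : Type*} {c : ℂ} (hc : c ∈ H) {A : Matrix n m ℂ}
    (hA : entriesIn H A) : entriesIn H (c • A) :=
  fun i j => H.mul_mem hc (hA i j)

lemma entriesIn_sum {n m : Type*} {ι : Type*} {s : Finset ι} {F : ι → Matrix n m ℂ}
    (h : ∀ i ∈ s, entriesIn H (F i)) : entriesIn H (∑ i ∈ s, F i) := by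
  intro a b
  rw [Matrix.sum_apply]
  exact H.sum_mem fun i hi => h i hi a b

lemma entriesIn_mul {n : Type*} [Fintype n] {A B : Matrix n n ℂ} (hA : entriesIn H A)
    (hB : entriesIn H B) : entriesIn H (A * B) := by
  intro i j
  rw [Matrix.mul_apply]
  exact H.sum_mem fun l _ => H.mul_mem (hA i l) (hB l j)

lemma entriesIn_pow {n : Type*} [Fintype n] [DecidableEq n] {A : Matrix n n ℂ}
    (hA : entriesIn H A) (m : ℕ) : entriesIn H (A ^ m) := by
  induction m with
  | zero => simpa using entriesIn_one
  | succ m ih => rw [pow_succ]; exact entriesIn_mul ih hA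

lemma entriesIn_transpose {n m : Type*} {A : Matrix n m ℂ} (hA : entriesIn H A) :
    entriesIn H Aᵀ := fun i j => hA j i

lemma entriesIn_kron {n : Type*} {A B : Matrix n n ℂ} (hA : entriesIn H A)
    (hB : entriesIn H B) : entriesIn H (A ⊗ₖ B) := by
  rintro ⟨i1, i2⟩ ⟨j1, j2⟩
  exact H.mul_mem (hA i1 j1) (hB i2 j2)

lemma entriesIn_det {n : Type*} [Fintype n] [DecidableEq n] {A : Matrix n n ℂ}
    (hA : entriesIn H A) : A.det ∈ H := by
  rw [Matrix.det_apply]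
  exact H.sum_mem fun σ _ => zsmul_mem (H.prod_mem fun i _ => hA (σ i) i) _

lemma entriesIn_updateRow {n : Type*} [DecidableEq n] {A : Matrix n n ℂ}
    (hA : entriesIn H A) (r : n) {v : n → ℂ} (hv : ∀ j, v j ∈ H) :
    entriesIn H (A.updateRow r v) := by
  intro i j
  by_cases h : i = r
  · subst h; rw [Matrix.updateRow_self]; exact hv j
  · rw [Matrix.updateRow_ne h]; exact hA i j

lemma entriesIn_adjugate {n : Type*} [Fintype n] [DecidableEq n] {A : Matrix n n ℂ}
    (hA : entriesIn H A) : entriesIn H A.adjugate := by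
  intro i j
  rw [Matrix.adjugate_apply]
  refine entriesIn_det (entriesIn_updateRow hA j ?_)
  intro l
  by_cases h : l = i <;> simp [Pi.single_apply, h, H.one_mem, H.zero_mem]

lemma entriesIn_inv {n : Type*} [Fintype n] [DecidableEq n] {A : Matrix n n ℂ}
    (hA : entriesIn H A) : entriesIn H A⁻¹ := by
  rw [Matrix.inv_def, Ring.inverse_eq_inv']
  exact entriesIn_smul (H.inv_mem (entriesIn_det hA)) (entriesIn_adjugate hA)
end Mem

section More
variable {H : Subfield ℂ}

lemma toBig_zero (k d : ℕ) : toBig k d 0 = 0 := by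
  ext ⟨p1, p2⟩ ⟨q1, q2⟩
  simp [toBig]

lemma toBig_sum (k d : ℕ) {ι : Type*} (s : Finset ι) (F : ι → PowerSeries (Mk k)) :
    toBig k d (∑ i ∈ s, F i) = ∑ i ∈ s, toBig k d (F i) := by
  classical
  induction s using Finset.induction_on with
  | empty => simp [toBig_zero]
  | insert a s hns ih =>
    rw [Finset.sum_insert hns, Finset.sum_insert hns, toBig_add, ih]

lemma toBig_congr (k d : ℕ) (f g : PowerSeries (Mk k))
    (h : ∀ t < d, PowerSeries.coeff (R := Mk k) t f = PowerSeries.coeff (R := Mk k) t g) :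
    toBig k d f = toBig k d g := by
  ext ⟨p1, p2⟩ ⟨q1, q2⟩
  simp only [toBig]
  split
  · rw [h _ (lt_of_le_of_lt (Nat.sub_le _ _) q1.isLt)]
  · rfl

lemma toBig_extract {k d : ℕ} {f g : PowerSeries (Mk k)} (h : toBig k d f = toBig k d g)
    (t : ℕ) (ht : t < d) : PowerSeries.coeff (R := Mk k) t f = PowerSeries.coeff (R := Mk k) t g := by
  ext i j
  have hd : 0 < d := lt_of_le_of_lt (Nat.zero_le t) ht
  have := congrFun (congrFun h ((⟨0, hd⟩ : Fin d), i)) ((⟨t, ht⟩ : Fin d), j)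
  simpa [toBig] using this

lemma aeval_butt {k d : ℕ} (q : Polynomial ℂ) (Xs : Fin d → Mk k) :
    Polynomial.aeval (butt Xs) q = toBig k d (Eval q (extz d Xs)) := by
  rw [butt_eq_toBig, Polynomial.aeval_eq_sum_range, Eval, toBig_sum]
  exact Finset.sum_congr rfl fun m _ => by rw [toBig_smul, toBig_pow]

lemma entriesIn_coeff_pow {k : ℕ} {f : ℕ → Mk k} (hf : ∀ s, entriesIn H (f s))
    (m t : ℕ) : entriesIn H (PowerSeries.coeff (R := Mk k) t ((PowerSeries.mk f) ^ m)) := by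
  induction m generalizing t with
  | zero =>
    rw [pow_zero, PowerSeries.coeff_one]
    split
    · exact entriesIn_one
    · exact entriesIn_zero
  | succ m ih =>
    rw [pow_succ', coeff_mul_range]
    refine entriesIn_sum fun s _ => ?_
    rw [PowerSeries.coeff_mk]
    exact entriesIn_mul (hf s) (ih (t - s))

lemma entriesIn_coeff_Eval {k : ℕ} {q : Polynomial ℂ} (hq : ∀ m, q.coeff m ∈ H)
    {f : ℕ → Mk k} (hf : ∀ s, entriesIn H (f s)) (t : ℕ) :
    entriesIn H (PowerSeries.coeff (R := Mk k) t (Eval q f)) := by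
  rw [Eval, map_sum]
  refine entriesIn_sum fun m _ => ?_
  rw [PowerSeries.coeff_smul]
  exact entriesIn_smul (hq m) (entriesIn_coeff_pow hf m t)

lemma entriesIn_Mmat {k : ℕ} {q : Polynomial ℂ} (hq : ∀ m, q.coeff m ∈ H)
    {A : Mk k} (hA : entriesIn H A) : entriesIn H (Mmat q A) := by
  refine entriesIn_sum fun m _ => entriesIn_smul (hq m) (entriesIn_sum fun i _ => ?_)
  exact entriesIn_kron (entriesIn_pow (entriesIn_transpose hA) i) (entriesIn_pow hA _)

lemma entriesIn_Lsolve {k : ℕ} {q : Polynomial ℂ} (hq : ∀ m, q.coeff m ∈ H)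
    {A : Mk k} (hA : entriesIn H A) {Z : Mk k} (hZ : entriesIn H Z) :
    entriesIn H (Lsolve q A Z) := by
  intro i j
  show ((Mmat q A)⁻¹ *ᵥ vecM Z) (j, i) ∈ H
  rw [Matrix.mulVec]
  refine H.sum_mem fun x _ => H.mul_mem ?_ ?_
  · exact entriesIn_inv (entriesIn_Mmat hq hA) (j, i) x
  · exact hZ x.2 x.1

lemma entriesIn_solveSeq {k : ℕ} {q : Polynomial ℂ} (hq : ∀ m, q.coeff m ∈ H)
    {A : Mk k} (hA : entriesIn H A) {T : ℕ → Mk k} (hT : ∀ t, entriesIn H (T t)) :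
    ∀ t, entriesIn H (solveSeq q A T t) := by
  intro t
  induction t using Nat.strong_induction_on with
  | _ t ih =>
    match t with
    | 0 => rw [solveSeq_zero]; exact hA
    | (t+1) =>
      rw [solveSeq]
      refine entriesIn_Lsolve hq hA (entriesIn_sub (hT _) (entriesIn_coeff_Eval hq ?_ _))
      intro s
      by_cases h : s < t + 1
      · simpa [h] using ih s h
      · simpa [h] using (entriesIn_zero : entriesIn H (0 : Mk k))

lemma entriesIn_targ {k : ℕ} {g : Polynomial ↥H} (t : ℕ) :
    entriesIn H (targ k (g.map H.subtype) t) := by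
  rw [targ]
  split
  · intro i j
    rw [companion]
    split
    · exact H.one_mem
    · split
      · refine H.neg_mem ?_
        rw [Polynomial.coeff_map]
        exact SetLike.coe_mem _
      · exact H.zero_mem
  · split
    · exact entriesIn_one
    · exact entriesIn_zero

lemma Lop_zero {k : ℕ} (q : Polynomial ℂ) (A : Mk k) : Lop q A 0 = 0 := by
  simp [Lop]
end More

/-- Let `g` be monic of degree `k` irreducible over a subfield `H` of
`ℂ`, `d ≥ 1`, `p ∈ H[λ]`. If `X₁ ∈ H^{k×k}` satisfies `p(X₁) = C_g` and
`det(Σ_{m=1}^ℓ p_m Σ_{i=0}^{m−1} (X₁ᵀ)^i ⊗ X₁^{m−1−i}) ≠ 0`, then there are matrices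
`X_2, …, X_d ∈ H^{k×k}`, uniquely determined by `X₁`, such that the block upper
triangular Toeplitz matrix with blocks `X₁, X_2, …, X_d` solves `p(X) = C(g,d)`. -/
theorem stmt_13 (H : Subfield ℂ) (k d : ℕ) (hd : 0 < d) (g : Polynomial ↥H)
    (hmon : g.Monic) (hirr : Irreducible g) (hdeg : g.natDegree = k)
    (p : Polynomial ↥H)
    (X₁ : Matrix (Fin k) (Fin k) ℂ) (hX₁H : ∀ i j, X₁ i j ∈ H)
    (hX₁ : Polynomial.aeval X₁ (p.map H.subtype) = companion k (g.map H.subtype))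
    (hdet : (∑ m ∈ Finset.range ((p.map H.subtype).natDegree + 1),
        (p.map H.subtype).coeff m •
          ∑ i ∈ Finset.range m, (X₁ᵀ ^ i) ⊗ₖ (X₁ ^ (m - 1 - i))).det ≠ 0) :
    ∃ Xs : Fin d → Matrix (Fin k) (Fin k) ℂ,
      (Xs ⟨0, hd⟩ = X₁ ∧ (∀ t i j, Xs t i j ∈ H) ∧
        Polynomial.aeval (butt Xs) (p.map H.subtype) = CJ k (g.map H.subtype) d) ∧
      ∀ Xs' : Fin d → Matrix (Fin k) (Fin k) ℂ,
        Xs' ⟨0, hd⟩ = X₁ →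
        Polynomial.aeval (butt Xs') (p.map H.subtype) = CJ k (g.map H.subtype) d →
        Xs' = Xs := by
  classical
  set q : Polynomial ℂ := p.map H.subtype with hqdef
  set gC : Polynomial ℂ := g.map H.subtype with hgCdef
  set T : ℕ → Mk k := targ k gC with hTdef
  have hdet' : (Mmat q X₁).det ≠ 0 := hdet
  have hA0 : Polynomial.aeval X₁ q = T 0 := by rw [hX₁]; rfl
  have hqH : ∀ m, q.coeff m ∈ H := fun m => by
    rw [hqdef, Polynomial.coeff_map]
    exact SetLike.coe_mem _
  have hTH : ∀ t, entriesIn H (T t) := fun t => entriesIn_targ t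
  have hX₁H' : entriesIn H X₁ := hX₁H
  set F : ℕ → Mk k := solveSeq q X₁ T with hFdef
  have hF0 : F 0 = X₁ := solveSeq_zero q X₁ T
  have hkey : ∀ t, PowerSeries.coeff (R := Mk k) t (Eval q F) = T t :=
    solveSeq_spec q X₁ T hdet' hA0
  set Xs : Fin d → Mk k := fun t => F (t : ℕ) with hXsdef
  have hXs0 : Xs ⟨0, hd⟩ = X₁ := hF0
  have hext : ∀ s (h : s < d), extz d Xs s = F s := by
    intro s h
    rw [extz, dif_pos h]
  have heq : Polynomial.aeval (butt Xs) q = CJ k gC d := by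
    rw [aeval_butt, CJ_eq_toBig]
    refine toBig_congr k d _ _ fun t ht => ?_
    rw [PowerSeries.coeff_mk,
      coeff_Eval_congr q (extz d Xs) F t (fun s hs => hext s (by omega)), hkey]
  refine ⟨Xs, ⟨hXs0, fun t => entriesIn_solveSeq hqH hX₁H' hTH (t : ℕ), heq⟩, ?_⟩
  intro Xs' h0' heq'
  have hEv' : ∀ t, t < d → PowerSeries.coeff (R := Mk k) t (Eval q (extz d Xs')) = T t := by
    rw [aeval_butt, CJ_eq_toBig] at heq'
    intro t ht
    rw [toBig_extract heq' t ht, PowerSeries.coeff_mk]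
  set f' : ℕ → Mk k := fun s => if h : s < d then Xs' ⟨s, h⟩ else F s with hf'def
  have hf'0 : f' 0 = X₁ := by
    rw [hf'def]
    simp only [dif_pos hd]
    exact h0'
  have hmain : ∀ t, f' t = F t := by
    intro t
    induction t using Nat.strong_induction_on with
    | _ t ih =>
      match t with
      | 0 => rw [hf'0, hF0]
      | (t+1) =>
        by_cases hlt : t + 1 < d
        · have e1 : PowerSeries.coeff (R := Mk k) (t+1) (Eval q f') = T (t+1) := by
            rw [coeff_Eval_congr q f' (extz d Xs') (t+1) (fun s hs => by
              have hsd : s < d := by omega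
              rw [hf'def, extz]
              simp only [dif_pos hsd]), hEv' (t+1) hlt]
          have e3 := coeff_Eval_diff q f' F (t+1) (Nat.succ_pos t)
            (by rw [hf'0, hF0]) (fun s hs0 hs => ih s hs)
          rw [e1, hkey (t+1), hF0] at e3
          have hzero : Lop q X₁ (f' (t+1) - F (t+1)) = 0 := left_eq_add.mp e3
          have hL : Lop q X₁ (f' (t+1) - F (t+1)) = Lop q X₁ 0 := by
            rw [hzero, Lop_zero]
          have := Lop_inj q X₁ hdet' hL
          exact sub_eq_zero.mp this
        · rw [hf'def]
          simp only [dif_neg hlt]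
  funext t
  have h1 : Xs' t = f' (t : ℕ) := by
    rw [hf'def]
    simp only [dif_pos t.isLt, Fin.eta]
  rw [h1, hmain (t : ℕ)]
end
end

section
/- Let H be a subfield of ℂ and let A ∈ H^{n×n} be nonderogatory with characteristic polynomial p_A(λ) = g_1(λ)^{d_1} ⋯ g_r(λ)^{d_r}, where the g_j are pairwise distinct monic polynomials irreducible over H of degrees k_j, and write A = T^{-1}(C(g_1,d_1) ⊕ ⋯ ⊕ C(g_r,d_r))T with T ∈ H^{n×n} invertible. Let p(λ) = Σ_{m=0}^ℓ p_m λ^m ∈ H[λ]. Suppose that for each j = 1, …, r there exists X_{1,j} ∈ H^{k_j×k_j} with p(X_{1,j}) = C_{g_j}, such that whenever d_j > 1 one has det(Σ_{m=1}^ℓ p_m Σ_{i=0}^{m−1} (X_{1,j}ᵀ)^i ⊗ X_{1,j}^{m−1−i}) ≠ 0. Then there exists X ∈ H^{n×n} with p(X) = A; moreover X can be taken of the form X = T^{-1}(Y_1 ⊕ ⋯ ⊕ Y_r)T, where each Y_j is a d_j×d_j-block upper triangular Toeplitz matrix with k_j×k_j blocks whose diagonal blocks all equal X_{1,j}. -/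
open Polynomial Matrix Kronecker

noncomputable section

namespace Stmt14Aux
open Finset PowerSeries
set_option maxHeartbeats 1000000 in
section

noncomputable section
set_option maxHeartbeats 1000000
open PowerSeries
variable {F : Type} [Field F] {k : ℕ}

local notation "MF" => Matrix (Fin k) (Fin k) F
local notation "cf" => PowerSeries.coeff (R := Matrix (Fin k) (Fin k) F)

lemma coeff_zero_mul (Y Z : PowerSeries MF) : cf 0 (Y * Z) = cf 0 Y * cf 0 Z := by
  simp [PowerSeries.coeff_mul]

lemma coeff_zero_pow (Y : PowerSeries MF) (m : ℕ) : cf 0 (Y ^ m) = (cf 0 Y) ^ m := by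
  induction m with
  | zero => simp
  | succ m ih => rw [pow_succ, coeff_zero_mul, ih, pow_succ]

lemma coeff_pow_congr {s : ℕ} {Y Z : PowerSeries MF} (h : ∀ u ≤ s, cf u Y = cf u Z)
    (m : ℕ) : ∀ s' ≤ s, cf s' (Y ^ m) = cf s' (Z ^ m) := by
  induction m with
  | zero => intro s' _; rfl
  | succ m ih =>
    intro s' hs'
    rw [pow_succ, pow_succ, PowerSeries.coeff_mul, PowerSeries.coeff_mul]
    refine Finset.sum_congr rfl fun x hx => ?_
    rw [Finset.HasAntidiagonal.mem_antidiagonal] at hx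
    rw [ih x.1 (by omega), h x.2 (by omega)]

/-- truncated evaluation of a polynomial on a power series -/
def Q (P : F[X]) (Y : PowerSeries MF) : PowerSeries MF :=
  ∑ m ∈ range (P.natDegree + 1), P.coeff m • Y ^ m

lemma coeff_Q (P : F[X]) (Y : PowerSeries MF) (t : ℕ) :
    cf t (Q P Y) = ∑ m ∈ range (P.natDegree + 1), P.coeff m • cf t (Y ^ m) := by
  unfold Q; rw [map_sum]; rfl

lemma coeff_Q_congr {s : ℕ} {Y Z : PowerSeries MF} (h : ∀ u ≤ s, cf u Y = cf u Z)
    (P : F[X]) : cf s (Q P Y) = cf s (Q P Z) := by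
  rw [coeff_Q, coeff_Q]
  exact Finset.sum_congr rfl fun m _ => by rw [coeff_pow_congr h m s le_rfl]

/-- the key second-order term -/
def S (X₀ Mx : MF) (m : ℕ) : MF := ∑ i ∈ range m, X₀ ^ i * Mx * X₀ ^ (m - 1 - i)

lemma S_succ (X₀ Mx : MF) (m : ℕ) : S X₀ Mx (m + 1) = S X₀ Mx m * X₀ + X₀ ^ m * Mx := by
  unfold S
  rw [Finset.sum_range_succ, Finset.sum_mul]
  congr 1
  · refine Finset.sum_congr rfl fun i hi => ?_
    rw [Finset.mem_range] at hi
    rw [show m + 1 - 1 - i = (m - 1 - i) + 1 by omega, pow_succ, ← mul_assoc]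
  · simp

lemma coeff_pow_add_monomial (Y : PowerSeries MF) (Mx : MF) {t : ℕ} (ht : 1 ≤ t) (m : ℕ) :
    cf t ((Y + PowerSeries.monomial (R := MF) t Mx) ^ m)
      = cf t (Y ^ m) + S (cf 0 Y) Mx m := by
  induction m with
  | zero => simp [S, PowerSeries.coeff_one, Nat.one_le_iff_ne_zero.mp ht]
  | succ m ih =>
    set Y' := Y + PowerSeries.monomial (R := MF) t Mx with hY'
    have hYe : ∀ u, u ≠ t → cf u Y' = cf u Y := by
      intro u hu
      simp [hY', PowerSeries.coeff_monomial, hu]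
    have hY't : cf t Y' = cf t Y + Mx := by
      simp [hY', PowerSeries.coeff_monomial]
    have h0 : cf 0 Y' = cf 0 Y := hYe 0 (by omega)
    have hpowlow : ∀ b, b < t → cf b (Y' ^ m) = cf b (Y ^ m) := by
      intro b hb
      exact coeff_pow_congr (s := b) (fun u hu => hYe u (by omega)) m b le_rfl
    have hdiff :
        ∑ x ∈ antidiagonal t,
          (cf x.1 (Y' ^ m) * cf x.2 Y' - cf x.1 (Y ^ m) * cf x.2 Y)
        = S (cf 0 Y) Mx m * cf 0 Y + (cf 0 Y) ^ m * Mx := by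
      have hsub : ({((t:ℕ), 0), (0, t)} : Finset (ℕ × ℕ)) ⊆ antidiagonal t := by
        intro x hx
        simp only [Finset.mem_insert, Finset.mem_singleton] at hx
        rcases hx with h | h <;> subst h <;> simp [Finset.mem_antidiagonal]
      have hzero : ∀ x ∈ antidiagonal t, x ∉ ({((t:ℕ), 0), (0, t)} : Finset (ℕ × ℕ)) →
          cf x.1 (Y' ^ m) * cf x.2 Y' - cf x.1 (Y ^ m) * cf x.2 Y = 0 := by
        intro x hx hnx
        rw [Finset.HasAntidiagonal.mem_antidiagonal] at hx
        simp only [Finset.mem_insert, Finset.mem_singleton] at hnx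
        push_neg at hnx
        obtain ⟨h1, h2⟩ := hnx
        have hx1 : x.1 < t := by
          rcases Nat.lt_or_ge x.1 t with h | h
          · exact h
          · exfalso
            have : x.1 = t := by omega
            exact h1 (by ext <;> omega)
        have hx2 : x.2 ≠ t := by
          intro h
          exact h2 (by ext <;> omega)
        rw [hpowlow x.1 hx1, hYe x.2 hx2, sub_self]
      rw [← Finset.sum_subset hsub hzero, Finset.sum_pair (by intro h; injection h; omega)]
      simp only [ih, coeff_zero_pow, h0, hY't, hYe 0 (show (0:ℕ) ≠ t by omega)]
      noncomm_ring
    rw [pow_succ, pow_succ, PowerSeries.coeff_mul, PowerSeries.coeff_mul]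
    have : ∑ x ∈ antidiagonal t, cf x.1 (Y' ^ m) * cf x.2 Y'
        = ∑ x ∈ antidiagonal t, cf x.1 (Y ^ m) * cf x.2 Y
          + (S (cf 0 Y) Mx m * cf 0 Y + (cf 0 Y) ^ m * Mx) := by
      rw [← hdiff, Finset.sum_sub_distrib]
      abel
    rw [this, S_succ]


/-- the linear operator in the unknown block -/
def Lop (P : F[X]) (X₀ Mx : MF) : MF :=
  ∑ m ∈ range (P.natDegree + 1), P.coeff m • S X₀ Mx m

lemma coeff_Q_add_monomial (P : F[X]) (Y : PowerSeries MF) (Mx : MF) {t : ℕ} (ht : 1 ≤ t) :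
    cf t (Q P (Y + PowerSeries.monomial (R := MF) t Mx))
      = cf t (Q P Y) + Lop P (cf 0 Y) Mx := by
  rw [coeff_Q, coeff_Q]
  unfold Lop
  rw [← Finset.sum_add_distrib]
  refine Finset.sum_congr rfl fun m _ => ?_
  rw [coeff_pow_add_monomial Y Mx ht m, smul_add]

/-- vectorization -/
def vec (Mx : MF) : Fin k × Fin k → F := fun p => Mx p.2 p.1

omit [Field F] in
lemma vec_inj {A B : MF} (h : vec A = vec B) : A = B := by
  funext a b
  exact congrFun h (b, a)

lemma vec_kron (A B Mx : MF) : (Aᵀ ⊗ₖ B) *ᵥ vec Mx = vec (B * Mx * A) := by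
  funext p
  obtain ⟨i, j⟩ := p
  simp only [Matrix.mulVec, dotProduct, vec, kroneckerMap_apply, transpose_apply,
    Matrix.mul_apply, Finset.sum_mul]
  rw [Fintype.sum_prod_type]
  refine Finset.sum_congr rfl fun i' _ => ?_
  refine Finset.sum_congr rfl fun j' _ => ?_
  ring

lemma sum_mulVec {ι : Type} (s : Finset ι) (A : ι → Matrix (Fin k × Fin k) (Fin k × Fin k) F)
    (v : Fin k × Fin k → F) : (∑ i ∈ s, A i) *ᵥ v = ∑ i ∈ s, A i *ᵥ v := by
  induction s using Finset.cons_induction with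
  | empty => simp [Matrix.mulVec, dotProduct]
  | cons a s ha ih => rw [Finset.sum_cons, Finset.sum_cons, Matrix.add_mulVec, ih]

lemma vec_sum {ι : Type} (s : Finset ι) (A : ι → MF) : vec (∑ i ∈ s, A i) = ∑ i ∈ s, vec (A i) := by
  funext p
  simp [vec, Matrix.sum_apply]

lemma vec_smul (c : F) (A : MF) : vec (c • A) = c • vec A := rfl

lemma K_mulVec (P : F[X]) (X₀ Mx : MF) :
    (∑ m ∈ range (P.natDegree + 1), P.coeff m •
        ∑ i ∈ range m, (X₀ᵀ ^ i) ⊗ₖ (X₀ ^ (m - 1 - i))) *ᵥ vec Mx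
      = vec (Lop P X₀ Mx) := by
  unfold Lop
  rw [sum_mulVec, vec_sum]
  refine Finset.sum_congr rfl fun m _ => ?_
  rw [Matrix.smul_mulVec, vec_smul, sum_mulVec, S, vec_sum]
  congr 1
  rw [← Finset.sum_range_reflect]
  refine Finset.sum_congr rfl fun i hi => ?_
  rw [Finset.mem_range] at hi
  rw [show m - 1 - (m - 1 - i) = i by omega, ← Matrix.transpose_pow, vec_kron]

lemma solve (P : F[X]) (X₀ : MF)
    (hdet : (∑ m ∈ range (P.natDegree + 1), P.coeff m •
        ∑ i ∈ range m, (X₀ᵀ ^ i) ⊗ₖ (X₀ ^ (m - 1 - i))).det ≠ 0)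
    (G : MF) : ∃ Mx : MF, Lop P X₀ Mx = G := by
  set K := ∑ m ∈ range (P.natDegree + 1), P.coeff m •
      ∑ i ∈ range m, (X₀ᵀ ^ i) ⊗ₖ (X₀ ^ (m - 1 - i)) with hK
  refine ⟨Matrix.of fun a b => (K⁻¹ *ᵥ vec G) (b, a), ?_⟩
  apply vec_inj
  rw [← K_mulVec]
  have hv : vec (Matrix.of fun a b => (K⁻¹ *ᵥ vec G) (b, a) : MF) = K⁻¹ *ᵥ vec G := by
    funext p
    cases p
    rfl
  rw [hv, Matrix.mulVec_mulVec, Matrix.mul_nonsing_inv K (isUnit_iff_ne_zero.mpr hdet),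
    Matrix.one_mulVec]

/-- generic block upper triangular Toeplitz matrix -/
def buttF {k d : ℕ} (Xs : Fin d → Matrix (Fin k) (Fin k) F) :
    Matrix (Fin d × Fin k) (Fin d × Fin k) F :=
  fun p q => if _h : (p.1 : ℕ) ≤ (q.1 : ℕ)
    then Xs ⟨(q.1 : ℕ) - (p.1 : ℕ), lt_of_le_of_lt (Nat.sub_le _ _) q.1.isLt⟩ p.2 q.2
    else 0

variable {d : ℕ}

def buttPS (d : ℕ) (Y : PowerSeries MF) : Matrix (Fin d × Fin k) (Fin d × Fin k) F :=
  buttF (fun t : Fin d => cf (t : ℕ) Y)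

lemma buttPS_one : (buttPS d (1 : PowerSeries MF)) = 1 := by
  have hco : ∀ n : ℕ, (PowerSeries.coeff (R := MF) n (1 : PowerSeries MF))
      = if n = 0 then (1 : MF) else 0 := fun n => PowerSeries.coeff_one n
  funext p q
  obtain ⟨i, a⟩ := p; obtain ⟨i', b⟩ := q
  simp only [buttPS, buttF]
  rw [Matrix.one_apply]
  by_cases h : (i : ℕ) ≤ (i' : ℕ)
  · rw [dif_pos h, hco]
    by_cases h2 : (i' : ℕ) - (i : ℕ) = 0
    · have hii : i = i' := Fin.ext (by omega)
      subst hii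
      rw [if_pos h2]
      by_cases h3 : a = b
      · subst h3
        rw [Matrix.one_apply_eq, if_pos rfl]
      · rw [Matrix.one_apply_ne (by simp [h3]), if_neg (by simp [h3])]
    · rw [if_neg h2, Matrix.zero_apply,
        if_neg (by intro hc; injection hc with h4 h5; rw [h4] at h2; omega)]
  · rw [dif_neg h, if_neg (by intro hc; injection hc with h4 h5; rw [h4] at h; omega)]

lemma buttPS_mul (Y Z : PowerSeries MF) :
    buttPS d (Y * Z) = buttPS d Y * buttPS d Z := by
  funext p q
  obtain ⟨i, a⟩ := p; obtain ⟨i', b⟩ := q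
  rw [Matrix.mul_apply]
  simp only [buttPS, buttF]
  by_cases h : (i : ℕ) ≤ (i' : ℕ)
  · rw [dif_pos h, PowerSeries.coeff_mul, Matrix.sum_apply,
      Finset.Nat.sum_antidiagonal_eq_sum_range_succ_mk]
    set G : ℕ → F := fun n => if (i:ℕ) ≤ n ∧ n ≤ (i':ℕ)
        then ∑ c : Fin k, cf (n-(i:ℕ)) Y a c * cf ((i':ℕ)-(i:ℕ)-(n-(i:ℕ))) Z c b
        else 0 with hG
    calc (∑ u ∈ Finset.range (((i':ℕ)-(i:ℕ)).succ),
            ((PowerSeries.coeff (R := MF) u) Y * (PowerSeries.coeff (R := MF) ((i':ℕ)-(i:ℕ)-u)) Z) a b)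
        = ∑ u ∈ Finset.range (((i':ℕ)-(i:ℕ)).succ),
            ∑ c : Fin k, cf u Y a c * cf ((i':ℕ)-(i:ℕ)-u) Z c b :=
          Finset.sum_congr rfl fun u _ => Matrix.mul_apply
      _ = ∑ n ∈ Finset.Ico (i:ℕ) ((i':ℕ)+1), G n := by
          rw [Finset.sum_Ico_eq_sum_range]
          refine (Finset.sum_congr (by congr 1; omega) fun u hu => ?_).symm
          rw [Finset.mem_range] at hu
          simp only [hG]
          rw [if_pos ⟨by omega, by omega⟩]
          have e1 : (i:ℕ) + u - (i:ℕ) = u := by omega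
          rw [e1]
      _ = ∑ n ∈ Finset.range d, G n := by
          refine Finset.sum_subset ?_ ?_
          · intro n hn
            rw [Finset.mem_Ico] at hn
            rw [Finset.mem_range]
            have := i'.isLt
            omega
          · intro n _ hnot
            simp only [hG]
            rw [if_neg (by simpa [Finset.mem_Ico, Nat.lt_succ_iff] using hnot)]
      _ = ∑ j : Fin d, G (j : ℕ) := (Fin.sum_univ_eq_sum_range G d).symm
      _ = ∑ j : Fin d, ∑ c : Fin k,
            (if _h : (i:ℕ) ≤ (j:ℕ) then cf ((j:ℕ)-(i:ℕ)) Y a c else 0) *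
            (if _h : (j:ℕ) ≤ (i':ℕ) then cf ((i':ℕ)-(j:ℕ)) Z c b else 0) := by
          refine Finset.sum_congr rfl fun j _ => ?_
          simp only [hG]
          by_cases hc : (i:ℕ) ≤ (j:ℕ) ∧ (j:ℕ) ≤ (i':ℕ)
          · rw [if_pos hc]
            refine Finset.sum_congr rfl fun c _ => ?_
            rw [dif_pos hc.1, dif_pos hc.2]
            have e2 : (i':ℕ)-(i:ℕ)-((j:ℕ)-(i:ℕ)) = (i':ℕ)-(j:ℕ) := by omega
            rw [e2]
          · rw [if_neg hc]
            refine (Finset.sum_eq_zero fun c _ => ?_).symm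
            rcases not_and_or.mp hc with h1 | h2
            · rw [dif_neg h1, zero_mul]
            · rw [dif_neg h2, mul_zero]
      _ = ∑ x : Fin d × Fin k,
            (if _h : (i:ℕ) ≤ (x.1:ℕ) then cf ((x.1:ℕ)-(i:ℕ)) Y a x.2 else 0) *
            (if _h : (x.1:ℕ) ≤ (i':ℕ) then cf ((i':ℕ)-(x.1:ℕ)) Z x.2 b else 0) :=
          (Fintype.sum_prod_type (fun x : Fin d × Fin k =>
            (if _h : (i:ℕ) ≤ (x.1:ℕ) then cf ((x.1:ℕ)-(i:ℕ)) Y a x.2 else 0) *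
            (if _h : (x.1:ℕ) ≤ (i':ℕ) then cf ((i':ℕ)-(x.1:ℕ)) Z x.2 b else 0))).symm
  · rw [dif_neg h]
    refine (Finset.sum_eq_zero fun x _ => ?_).symm
    by_cases h1 : (i:ℕ) ≤ (x.1:ℕ)
    · rw [dif_neg (show ¬ (x.1:ℕ) ≤ (i':ℕ) by omega), mul_zero]
    · rw [dif_neg h1, zero_mul]

lemma buttPS_add (Y Z : PowerSeries MF) : buttPS d (Y + Z) = buttPS d Y + buttPS d Z := by
  funext p q
  simp only [buttPS, buttF, map_add, Matrix.add_apply]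
  split_ifs <;> simp

lemma buttPS_zero : buttPS d (0 : PowerSeries MF) = 0 := by
  funext p q
  simp only [buttPS, buttF, map_zero, Matrix.zero_apply]
  split_ifs <;> simp

lemma buttPS_smul (c : F) (Y : PowerSeries MF) : buttPS d (c • Y) = c • buttPS d Y := by
  funext p q
  have hc : ∀ n, cf n (c • Y) = c • cf n Y := fun n => rfl
  simp only [buttPS, buttF, hc, Matrix.smul_apply]
  split_ifs <;> simp

lemma buttPS_pow (Y : PowerSeries MF) (m : ℕ) : buttPS d (Y ^ m) = (buttPS d Y) ^ m := by
  induction m with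
  | zero => simpa using buttPS_one
  | succ m ih => rw [pow_succ, pow_succ, buttPS_mul, ih]

lemma buttPS_sum {ι : Type} (s : Finset ι) (f : ι → PowerSeries MF) :
    buttPS d (∑ i ∈ s, f i) = ∑ i ∈ s, buttPS d (f i) := by
  induction s using Finset.cons_induction with
  | empty => simpa using buttPS_zero
  | cons a s ha ih => rw [Finset.sum_cons, Finset.sum_cons, buttPS_add, ih]

lemma aeval_buttPS (P : F[X]) (Y : PowerSeries MF) :
    Polynomial.aeval (buttPS d Y) P = buttPS d (Q P Y) := by
  rw [Polynomial.aeval_eq_sum_range, Q, buttPS_sum]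
  exact Finset.sum_congr rfl fun m _ => by rw [buttPS_smul, buttPS_pow]

/-- the main per-block construction -/
lemma blockMain {k d : ℕ} (hd : 0 < d) (P : F[X]) (X₁ Cg : Matrix (Fin k) (Fin k) F)
    (hX₁ : Polynomial.aeval X₁ P = Cg)
    (hdet : 1 < d → (∑ m ∈ range (P.natDegree + 1), P.coeff m •
        ∑ i ∈ range m, (X₁ᵀ ^ i) ⊗ₖ (X₁ ^ (m - 1 - i))).det ≠ 0) :
    ∃ Ys : Fin d → Matrix (Fin k) (Fin k) F, Ys ⟨0, hd⟩ = X₁ ∧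
      Polynomial.aeval (buttF Ys) P
        = buttF (fun t : Fin d =>
            if (t : ℕ) = 0 then Cg else if (t : ℕ) = 1 then 1 else 0) := by
  have claim : ∀ t : ℕ, ∃ Ms : ℕ → Matrix (Fin k) (Fin k) F, Ms 0 = X₁ ∧
      (∀ u, t < u → Ms u = 0) ∧
      ∀ s, s ≤ t → s < d →
        PowerSeries.coeff s (Q P (PowerSeries.mk Ms))
          = (if s = 0 then Cg else if s = 1 then 1 else 0) := by
    intro t
    induction t with
    | zero =>
      refine ⟨fun u => if u = 0 then X₁ else 0, by simp, fun u hu => if_neg (by omega), ?_⟩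
      intro s hs _
      interval_cases s
      rw [coeff_Q]
      simp only [if_pos rfl]
      rw [← hX₁, Polynomial.aeval_eq_sum_range]
      refine Finset.sum_congr rfl fun m _ => ?_
      rw [coeff_zero_pow, PowerSeries.coeff_mk]
      simp
    | succ t ih =>
      obtain ⟨Ms, hMs0, hMsz, hMs⟩ := ih
      by_cases hlt : t + 1 < d
      · have hd1 : 1 < d := by omega
        obtain ⟨Mx, hMx⟩ := solve P X₁ (hdet hd1)
          ((if t + 1 = 0 then Cg else if t + 1 = 1 then 1 else 0)
            - PowerSeries.coeff (t+1) (Q P (PowerSeries.mk Ms)))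
        refine ⟨fun u => if u = t + 1 then Mx else Ms u, by simp [hMs0], ?_, ?_⟩
        · intro u hu
          have hne : u ≠ t + 1 := by omega
          simp only [hne, if_false]
          exact hMsz u (by omega)
        · have hmk : PowerSeries.mk (fun u => if u = t + 1 then Mx else Ms u)
              = PowerSeries.mk Ms + PowerSeries.monomial (t+1) Mx := by
            ext u
            rw [PowerSeries.coeff_mk, map_add, PowerSeries.coeff_mk, PowerSeries.coeff_monomial]
            by_cases hu : u = t + 1
            · rw [if_pos hu, if_pos hu, hMsz u (by omega), zero_add]
            · rw [if_neg hu, if_neg hu, add_zero]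
          intro s hs hsd
          rcases Nat.lt_or_ge s (t+1) with hst | hst
          · rw [hmk, coeff_Q_congr (Z := PowerSeries.mk Ms) ?agre P]
            · exact hMs s (by omega) hsd
            case agre =>
              intro u hu
              rw [map_add, PowerSeries.coeff_monomial, if_neg (by omega), add_zero]
          · have hseq : s = t + 1 := by omega
            subst hseq
            rw [hmk, coeff_Q_add_monomial P _ Mx (by omega)]
            have h0 : PowerSeries.coeff 0 (PowerSeries.mk Ms) = X₁ := by
              rw [PowerSeries.coeff_mk, hMs0]
            rw [h0, hMx, add_sub_cancel]
      · refine ⟨Ms, hMs0, fun u hu => hMsz u (by omega), ?_⟩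
        intro s hs hsd
        exact hMs s (by omega) hsd
  obtain ⟨Ms, h0, -, hco⟩ := claim (d - 1)
  refine ⟨fun t : Fin d => Ms (t : ℕ), by simpa using h0, ?_⟩
  have hbe : buttF (fun t : Fin d => Ms (t : ℕ)) = buttPS d (PowerSeries.mk Ms) := by
    unfold buttPS
    exact congrArg buttF (funext fun t => (PowerSeries.coeff_mk _ _).symm)
  rw [hbe, aeval_buttPS]
  unfold buttPS
  exact congrArg buttF (funext fun t =>
    hco (t : ℕ) (by have := t.isLt; omega) t.isLt)
end
end
end Stmt14Aux

namespace Stmt14Glue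
open Stmt14Aux Finset
noncomputable section
set_option maxHeartbeats 1000000

def companionH (H : Subfield ℂ) (k : ℕ) (g : Polynomial ↥H) : Matrix (Fin k) (Fin k) ↥H :=
  fun i j => if (i : ℕ) + 1 = (j : ℕ) then 1
    else if (i : ℕ) = k - 1 then -g.coeff (j : ℕ) else 0

lemma companionH_map (H : Subfield ℂ) (k : ℕ) (g : Polynomial ↥H) :
    (companionH H k g).map H.subtype = companion k (g.map H.subtype) := by
  funext i j
  simp only [companionH, companion, Matrix.map_apply, Polynomial.coeff_map]
  split_ifs <;> simp

lemma aeval_map_matrix {α : Type*} [Fintype α] [DecidableEq α] (H : Subfield ℂ)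
    (X : Matrix α α ↥H) (P : Polynomial ↥H) :
    Polynomial.aeval (X.map H.subtype) (P.map H.subtype)
      = (Polynomial.aeval X P).map H.subtype := by
  have hcomp : (algebraMap ℂ (Matrix α α ℂ)).comp (H.subtype : ↥H →+* ℂ)
      = ((H.subtype : ↥H →+* ℂ).mapMatrix).comp
          (algebraMap ↥H (Matrix α α ↥H)) := by
    refine RingHom.ext fun r => ?_
    funext i j
    by_cases hij : i = j <;>
      simp [Matrix.algebraMap_matrix_apply, Matrix.map_apply, hij]
  have hX : X.map (H.subtype : ↥H → ℂ) = (H.subtype : ↥H →+* ℂ).mapMatrix X := rfl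
  rw [Polynomial.aeval_def, Polynomial.aeval_def, Polynomial.eval₂_map, hcomp, hX,
    ← Polynomial.hom_eval₂]
  rfl

lemma buttF_map {k d : ℕ} (H : Subfield ℂ) (Xs : Fin d → Matrix (Fin k) (Fin k) ↥H) :
    (buttF Xs).map H.subtype = butt (fun t => (Xs t).map H.subtype) := by
  funext p q
  simp only [buttF, butt, Matrix.map_apply]
  split_ifs <;> simp

lemma butt_ifE (k d : ℕ) (D : Matrix (Fin k) (Fin k) ℂ) :
    butt (fun t : Fin d => if (t:ℕ) = 0 then D else if (t:ℕ) = 1 then 1 else 0)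
      = (1 : Matrix (Fin d) (Fin d) ℂ) ⊗ₖ D
        + superdiag d ⊗ₖ (1 : Matrix (Fin k) (Fin k) ℂ) := by
  funext p q
  obtain ⟨i, a⟩ := p; obtain ⟨i', b⟩ := q
  simp only [butt, Matrix.add_apply, Matrix.kroneckerMap_apply, superdiag, Matrix.one_apply]
  by_cases h : (i:ℕ) ≤ (i':ℕ)
  · rw [dif_pos h]
    by_cases h0 : (i':ℕ) - (i:ℕ) = 0
    · have hii : i = i' := Fin.ext (by omega)
      subst hii
      rw [if_pos h0, if_pos rfl, one_mul, if_neg (show ¬((i:ℕ) + 1 = (i:ℕ)) by omega),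
        zero_mul, add_zero]
    · by_cases h1 : (i':ℕ) - (i:ℕ) = 1
      · have hne : i ≠ i' := by
          intro hc
          rw [hc] at h1
          omega
        rw [if_neg h0, if_pos h1, if_neg hne, zero_mul,
          if_pos (show (i:ℕ) + 1 = (i':ℕ) by omega), one_mul, zero_add, Matrix.one_apply]
      · have hne : i ≠ i' := by
          intro hc
          rw [hc] at h0
          omega
        rw [if_neg h0, if_neg h1, if_neg hne, zero_mul,
          if_neg (show ¬((i:ℕ) + 1 = (i':ℕ)) by omega), zero_mul, add_zero, Matrix.zero_apply]
  · have hne : i ≠ i' := by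
      intro hc
      rw [hc] at h
      omega
    rw [dif_neg h, if_neg hne, zero_mul,
      if_neg (show ¬((i:ℕ) + 1 = (i':ℕ)) by omega), zero_mul, add_zero]

lemma aeval_units_conj {n : ℕ} (u : (Matrix (Fin n) (Fin n) ℂ)ˣ)
    (B : Matrix (Fin n) (Fin n) ℂ) (P : Polynomial ℂ) :
    Polynomial.aeval ((↑u⁻¹ : Matrix (Fin n) (Fin n) ℂ) * B * (↑u : Matrix (Fin n) (Fin n) ℂ)) P
      = (↑u⁻¹ : Matrix (Fin n) (Fin n) ℂ) * Polynomial.aeval B P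
          * (↑u : Matrix (Fin n) (Fin n) ℂ) := by
  rw [Polynomial.aeval_eq_sum_range, Polynomial.aeval_eq_sum_range,
    Finset.mul_sum, Finset.sum_mul]
  refine Finset.sum_congr rfl fun m _ => ?_
  rw [Units.conj_pow', mul_smul_comm, smul_mul_assoc]

lemma aeval_blockDiagonal' {r : ℕ} {k d : Fin r → ℕ}
    (Ds : ∀ j, Matrix (Fin (d j) × Fin (k j)) (Fin (d j) × Fin (k j)) ℂ) (P : Polynomial ℂ) :
    Polynomial.aeval (Matrix.blockDiagonal' Ds) P
      = Matrix.blockDiagonal' (fun j => Polynomial.aeval (Ds j) P) := by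
  have hBD : ∀ (W : ∀ j, Matrix (Fin (d j) × Fin (k j)) (Fin (d j) × Fin (k j)) ℂ),
      Matrix.blockDiagonal' W = Matrix.blockDiagonal'RingHom _ ℂ W := fun _ => rfl
  have hRHS : (fun j => Polynomial.aeval (Ds j) P)
      = ∑ m ∈ Finset.range (P.natDegree + 1), (P.coeff m • Ds ^ m) := by
    funext j
    rw [Finset.sum_apply]
    simp only [Pi.smul_apply, Pi.pow_apply]
    exact Polynomial.aeval_eq_sum_range (Ds j)
  rw [Polynomial.aeval_eq_sum_range, hRHS,
    hBD (∑ m ∈ Finset.range (P.natDegree + 1), P.coeff m • Ds ^ m), map_sum]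
  refine Finset.sum_congr rfl fun m _ => ?_
  rw [← hBD (P.coeff m • Ds ^ m)]
  have hsm : Matrix.blockDiagonal' (P.coeff m • Ds ^ m)
      = P.coeff m • Matrix.blockDiagonal' (Ds ^ m) := Matrix.blockDiagonal'_smul _ _
  rw [hsm, hBD (Ds ^ m), map_pow, ← hBD Ds]

lemma aeval_reindex {n : ℕ} {α : Type} [Fintype α] [DecidableEq α] (e : α ≃ Fin n)
    (D : Matrix α α ℂ) (P : Polynomial ℂ) :
    Polynomial.aeval (Matrix.reindex e e D) P = Matrix.reindex e e (Polynomial.aeval D P) := by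
  exact Polynomial.aeval_algHom_apply (Matrix.reindexAlgEquiv ℂ ℂ e) D P

lemma K_map (H : Subfield ℂ) {k : ℕ} (p : Polynomial ↥H) (X' : Matrix (Fin k) (Fin k) ↥H) :
    ((∑ m ∈ Finset.range (p.natDegree + 1), p.coeff m •
        ∑ i ∈ Finset.range m, ((X')ᵀ ^ i) ⊗ₖ (X' ^ (m - 1 - i))).map H.subtype)
      = ∑ m ∈ Finset.range ((p.map (H.subtype : ↥H →+* ℂ)).natDegree + 1),
          (p.map (H.subtype : ↥H →+* ℂ)).coeff m •
          ∑ i ∈ Finset.range m,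
            (((X'.map H.subtype))ᵀ ^ i) ⊗ₖ ((X'.map H.subtype) ^ (m - 1 - i)) := by
  have hdeg : (p.map (H.subtype : ↥H →+* ℂ)).natDegree = p.natDegree :=
    Polynomial.natDegree_map_eq_of_injective Subtype.val_injective p
  rw [hdeg]
  have hpow : ∀ (W : Matrix (Fin k) (Fin k) ↥H) (i : ℕ) (a b : Fin k),
      (H.subtype) ((W ^ i) a b) = ((W.map H.subtype) ^ i) a b := by
    intro W i a b
    have h1 : ∀ V : Matrix (Fin k) (Fin k) ↥H,
        V.map (H.subtype : ↥H → ℂ) = (H.subtype : ↥H →+* ℂ).mapMatrix V := fun _ => rfl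
    have h2 : (W ^ i).map (H.subtype : ↥H → ℂ) = (W.map H.subtype) ^ i := by
      rw [h1, h1, map_pow]
    exact congrFun (congrFun h2 a) b
  have hT : (X'ᵀ).map (H.subtype : ↥H → ℂ) = (X'.map H.subtype)ᵀ := rfl
  funext ab cd
  simp only [Matrix.map_apply, Matrix.sum_apply, Matrix.smul_apply, smul_eq_mul,
    Matrix.kroneckerMap_apply, Polynomial.coeff_map, map_sum, _root_.map_mul]
  simp only [hpow, hT]

lemma inv_mem (H : Subfield ℂ) {n : ℕ} (T : Matrix (Fin n) (Fin n) ℂ)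
    (hTH : ∀ i j, T i j ∈ H) (i j : Fin n) : T⁻¹ i j ∈ H := by
  set T' : Matrix (Fin n) (Fin n) ↥H := fun a b => ⟨T a b, hTH a b⟩ with hT'
  have hmap : (H.subtype : ↥H →+* ℂ).mapMatrix T' = T := by
    funext a b
    rfl
  have hdetm : T.det = (H.subtype) T'.det := by rw [← hmap, RingHom.map_det]
  have hadj : T.adjugate = (H.subtype : ↥H →+* ℂ).mapMatrix T'.adjugate := by
    rw [← hmap, RingHom.map_adjugate]
  rw [Matrix.inv_def, Matrix.smul_apply, smul_eq_mul]
  refine H.mul_mem ?_ ?_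
  · rw [Ring.inverse_eq_inv, hdetm, ← map_inv₀ (H.subtype : ↥H →+* ℂ)]
    exact (T'.det⁻¹).2
  · rw [hadj]
    exact (T'.adjugate i j).2

lemma butt_mem (H : Subfield ℂ) {k d : ℕ} (Xs : Fin d → Matrix (Fin k) (Fin k) ↥H)
    (q r : Fin d × Fin k) : butt (fun t => (Xs t).map H.subtype) q r ∈ H := by
  simp only [butt]
  split_ifs
  · exact SetLike.coe_mem _
  · exact H.zero_mem

lemma mul_mem_matrix (H : Subfield ℂ) {n : ℕ} {A B : Matrix (Fin n) (Fin n) ℂ}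
    (hA : ∀ i j, A i j ∈ H) (hB : ∀ i j, B i j ∈ H) (i j : Fin n) : (A * B) i j ∈ H := by
  rw [Matrix.mul_apply]
  exact Subfield.sum_mem H fun c _ => H.mul_mem (hA i c) (hB c j)

end
end Stmt14Glue
set_option maxHeartbeats 2000000 in
/-- Main construction. Let `A ∈ H^{n×n}` be nonderogatory with
characteristic polynomial `g_1^{d_1} ⋯ g_r^{d_r}` and companion-Jordan form
`A = T⁻¹ (C(g_1,d_1) ⊕ ⋯ ⊕ C(g_r,d_r)) T`. Suppose for each `j` there is
`X_{1,j} ∈ H^{k_j×k_j}` with `p(X_{1,j}) = C_{g_j}`, satisfying the determinant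
condition whenever `d_j > 1`. Then `p(X) = A` has a solution `X ∈ H^{n×n}` of the form
`X = T⁻¹ (Y_1 ⊕ ⋯ ⊕ Y_r) T` with each `Y_j` block upper triangular Toeplitz whose
diagonal blocks all equal `X_{1,j}`. -/
theorem stmt_14 (H : Subfield ℂ) (n r : ℕ) (k d : Fin r → ℕ)
    (g : Fin r → Polynomial ↥H)
    (hmon : ∀ j, (g j).Monic) (hirr : ∀ j, Irreducible (g j))
    (hdeg : ∀ j, (g j).natDegree = k j) (hdpos : ∀ j, 0 < d j)
    (hdist : ∀ i j, i ≠ j → g i ≠ g j)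
    (A : Matrix (Fin n) (Fin n) ℂ) (hAH : ∀ i j, A i j ∈ H)
    (hnonderog : minpoly ℂ A = A.charpoly)
    (hchar : A.charpoly = ∏ j, ((g j).map H.subtype) ^ (d j))
    (e : (Σ j : Fin r, Fin (d j) × Fin (k j)) ≃ Fin n)
    (T : Matrix (Fin n) (Fin n) ℂ) (hTH : ∀ i j, T i j ∈ H) (hTu : IsUnit T.det)
    (hAT : A = T⁻¹ * (Matrix.reindex e e (Matrix.blockDiagonal'
        fun j => CJ (k j) ((g j).map H.subtype) (d j))) * T)
    (p : Polynomial ↥H)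
    (X₁ : ∀ j : Fin r, Matrix (Fin (k j)) (Fin (k j)) ℂ)
    (hX₁H : ∀ j i l, X₁ j i l ∈ H)
    (hX₁p : ∀ j, Polynomial.aeval (X₁ j) (p.map H.subtype)
        = companion (k j) ((g j).map H.subtype))
    (hdet : ∀ j, 1 < d j →
      (∑ m ∈ Finset.range ((p.map H.subtype).natDegree + 1),
        (p.map H.subtype).coeff m •
          ∑ i ∈ Finset.range m, ((X₁ j)ᵀ ^ i) ⊗ₖ ((X₁ j) ^ (m - 1 - i))).det ≠ 0) :
    ∃ Ys : ∀ j : Fin r, Fin (d j) → Matrix (Fin (k j)) (Fin (k j)) ℂ,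
      (∀ j, Ys j ⟨0, hdpos j⟩ = X₁ j) ∧
      (∀ j t i l, Ys j t i l ∈ H) ∧
      ∃ X : Matrix (Fin n) (Fin n) ℂ,
        X = T⁻¹ * (Matrix.reindex e e (Matrix.blockDiagonal'
            fun j => butt (Ys j))) * T ∧
        (∀ i l, X i l ∈ H) ∧
        Polynomial.aeval X (p.map H.subtype) = A := by
  classical
  set X' : ∀ j : Fin r, Matrix (Fin (k j)) (Fin (k j)) ↥H :=
    fun j => fun a b => ⟨X₁ j a b, hX₁H j a b⟩ with hX'def
  have hXmap : ∀ j, (X' j).map H.subtype = X₁ j := fun j => rfl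
  have haev : ∀ j, Polynomial.aeval (X' j) p = Stmt14Glue.companionH H (k j) (g j) := by
    intro j
    have hmapped : (Polynomial.aeval (X' j) p).map H.subtype
        = (Stmt14Glue.companionH H (k j) (g j)).map H.subtype := by
      rw [← Stmt14Glue.aeval_map_matrix, hXmap j, hX₁p j, Stmt14Glue.companionH_map]
    funext a b
    exact Subtype.ext (congrFun (congrFun hmapped a) b)
  have hdet' : ∀ j, 1 < d j →
      (∑ m ∈ Finset.range (p.natDegree + 1), p.coeff m •
        ∑ i ∈ Finset.range m, ((X' j)ᵀ ^ i) ⊗ₖ ((X' j) ^ (m - 1 - i))).det ≠ 0 := by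
    intro j hdj h0
    apply hdet j hdj
    have hKm := Stmt14Glue.K_map H p (X' j)
    rw [hXmap j] at hKm
    rw [← hKm]
    have hmm : ((∑ m ∈ Finset.range (p.natDegree + 1), p.coeff m •
        ∑ i ∈ Finset.range m, ((X' j)ᵀ ^ i) ⊗ₖ ((X' j) ^ (m - 1 - i))).map ⇑H.subtype)
        = (H.subtype : ↥H →+* ℂ).mapMatrix (∑ m ∈ Finset.range (p.natDegree + 1), p.coeff m •
        ∑ i ∈ Finset.range m, ((X' j)ᵀ ^ i) ⊗ₖ ((X' j) ^ (m - 1 - i))) := rfl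
    rw [hmm, ← RingHom.map_det, h0, map_zero]
  have hblocks := fun j => Stmt14Aux.blockMain (F := ↥H) (hdpos j) p (X' j)
    (Stmt14Glue.companionH H (k j) (g j)) (haev j) (hdet' j)
  choose YsF hYs0 hYsA using hblocks
  refine ⟨fun j t => (YsF j t).map H.subtype, ?_, ?_, ?_⟩
  · intro j
    show (YsF j ⟨0, hdpos j⟩).map H.subtype = X₁ j
    rw [hYs0 j, hXmap j]
  · intro j t i l
    exact ((YsF j t) i l).2
  · refine ⟨_, rfl, ?_, ?_⟩
    · -- membership
      intro i l
      have hTinv : ∀ a b, T⁻¹ a b ∈ H := Stmt14Glue.inv_mem H T hTH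
      have hmid : ∀ a b, (Matrix.reindex e e (Matrix.blockDiagonal'
          fun j => butt fun t => (YsF j t).map H.subtype)) a b ∈ H := by
        intro a b
        rw [Matrix.reindex_apply, Matrix.submatrix_apply, Matrix.blockDiagonal'_apply]
        split_ifs with hje
        · exact Stmt14Glue.butt_mem H (YsF _) _ _
        · exact H.zero_mem
      exact Stmt14Glue.mul_mem_matrix H
        (Stmt14Glue.mul_mem_matrix H hTinv hmid) hTH i l
    · -- the evaluation identity
      obtain ⟨u, hu⟩ := (Matrix.isUnit_iff_isUnit_det T).mpr hTu
      have hTinv : T⁻¹ = (↑u⁻¹ : Matrix (Fin n) (Fin n) ℂ) := by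
        rw [Matrix.coe_units_inv, hu]
      have hblock : ∀ j, Polynomial.aeval
          (butt fun t => (YsF j t).map H.subtype) (p.map H.subtype)
          = CJ (k j) ((g j).map H.subtype) (d j) := by
        intro j
        have hbf : (butt fun t => (YsF j t).map H.subtype)
            = (Stmt14Aux.buttF (YsF j)).map H.subtype := (Stmt14Glue.buttF_map H _).symm
        rw [hbf, Stmt14Glue.aeval_map_matrix, hYsA j, Stmt14Glue.buttF_map]
        have hE : (fun t : Fin (d j) =>
            ((if (t : ℕ) = 0 then Stmt14Glue.companionH H (k j) (g j)
              else if (t : ℕ) = 1 then 1 else 0).map H.subtype))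
            = fun t : Fin (d j) => if (t : ℕ) = 0 then companion (k j) ((g j).map H.subtype)
              else if (t : ℕ) = 1 then 1 else 0 := by
          funext t
          split_ifs
          · exact Stmt14Glue.companionH_map H (k j) (g j)
          · exact Matrix.map_one _ (map_zero _) (map_one _)
          · exact Matrix.map_zero _ (map_zero _)
        rw [hE, Stmt14Glue.butt_ifE]
        rfl
      calc Polynomial.aeval (T⁻¹ * (Matrix.reindex e e (Matrix.blockDiagonal'
              fun j => butt fun t => (YsF j t).map H.subtype)) * T) (p.map H.subtype)
          = (↑u⁻¹ : Matrix (Fin n) (Fin n) ℂ) * Polynomial.aeval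
              (Matrix.reindex e e (Matrix.blockDiagonal'
                fun j => butt fun t => (YsF j t).map H.subtype)) (p.map H.subtype)
              * (↑u : Matrix (Fin n) (Fin n) ℂ) := by
            rw [hTinv, ← hu]
            exact Stmt14Glue.aeval_units_conj u _ _
        _ = (↑u⁻¹ : Matrix (Fin n) (Fin n) ℂ) * (Matrix.reindex e e (Matrix.blockDiagonal'
              fun j => CJ (k j) ((g j).map H.subtype) (d j)))
              * (↑u : Matrix (Fin n) (Fin n) ℂ) := by
            rw [Stmt14Glue.aeval_reindex, Stmt14Glue.aeval_blockDiagonal']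
            have hfun : (fun j => Polynomial.aeval
                (butt fun t => (YsF j t).map H.subtype) (p.map H.subtype))
                = fun j => CJ (k j) ((g j).map H.subtype) (d j) := funext fun j => hblock j
            rw [hfun]
        _ = A := by
            rw [hAT, hTinv, ← hu]
end
end
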